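/- arXiv:1810.05802 — 3 statements merged into one kernel-verified Lean document; each statement's English description precedes it below -/
import Mathlib

section
/- Let G be a C_{4k}-free bipartite graph and M a maximum matching. Then every vertex of Core(G) is matched by M to a vertex of Supp(G). -/
open scoped Classical

namespace C4kPaper

open SimpleGraph

variable {V : Type*} [Fintype V] [DecidableEq V]

/-- The null space of the adjacency matrix of `G`, as a set of vectors. -/
noncomputable def nullSet (G : SimpleGraph V) : Set (V → ℝ) :=
  {x | Matrix.mulVec (G.adjMatrix ℝ) x = 0}

/-- The null space of the adjacency matrix of `G`, as a submodule of `ℝ^V`. -/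
noncomputable def nullModule (G : SimpleGraph V) : Submodule ℝ (V → ℝ) :=
  LinearMap.ker (G.adjMatrix ℝ).mulVecLin

/-- The nullity of `G`: the dimension of the null space of its adjacency matrix. -/
noncomputable def nullity (G : SimpleGraph V) : ℕ :=
  Module.finrank ℝ (nullModule G)

/-- The rank of the adjacency matrix of `G` over `ℝ`. -/
noncomputable def rk (G : SimpleGraph V) : ℕ :=
  (G.adjMatrix ℝ).rank

/-- The support of `G`: vertices where some null space vector is nonzero. -/
def supp (G : SimpleGraph V) : Set V :=
  {v | ∃ x ∈ nullSet G, x v ≠ 0}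

/-- The core of `G`: the neighbors of the support. -/
def core (G : SimpleGraph V) : Set V :=
  {u | ∃ v ∈ supp G, G.Adj u v}

/-- The N-part of `G`: vertices neither in the support nor in the core. -/
def npart (G : SimpleGraph V) : Set V :=
  (supp G ∪ core G)ᶜ

/-- `G` is bipartite. -/
def IsBipartite (G : SimpleGraph V) : Prop :=
  ∃ s : Set V, ∀ ⦃u v : V⦄, G.Adj u v → (u ∈ s ↔ v ∉ s)

/-- `G` has no cycle whose length is a multiple of 4. -/
def C4kFree (G : SimpleGraph V) : Prop :=
  ∀ (v : V) (c : G.Walk v v), c.IsCycle → ¬ (4 ∣ c.length)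

/-- `M` is a maximum matching of `G`. -/
def IsMaximumMatching (G : SimpleGraph V) (M : G.Subgraph) : Prop :=
  M.IsMatching ∧ ∀ M' : G.Subgraph, M'.IsMatching → M'.edgeSet.ncard ≤ M.edgeSet.ncard

/-- The matching number of `G`. -/
noncomputable def matchNum (G : SimpleGraph V) : ℕ :=
  sSup {n | ∃ M : G.Subgraph, M.IsMatching ∧ M.edgeSet.ncard = n}

/-- `s` is an independent set of `G`. -/
def IsIndep (G : SimpleGraph V) (s : Set V) : Prop :=
  ∀ ⦃u⦄, u ∈ s → ∀ ⦃w⦄, w ∈ s → ¬ G.Adj u w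

/-- `s` is a maximum independent set of `G`. -/
def IsMaxIndep (G : SimpleGraph V) (s : Set V) : Prop :=
  IsIndep G s ∧ ∀ t : Set V, IsIndep G t → t.ncard ≤ s.ncard

/-- The independence number of `G`. -/
noncomputable def indepNum (G : SimpleGraph V) : ℕ :=
  sSup {n | ∃ s : Set V, IsIndep G s ∧ s.ncard = n}

/-- An `(M,x)`-alternating walk `w₀, w₁, …, w_j` (here `w_i = p.getVert i`):
for all `0 ≤ i < ⌊(j-1)/2⌋`, `{w_{2i}, w_{2i+1}} ∈ M` and `x_{w_{2i}} · x_{w_{2i+2}} < 0`. -/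
def MxAltWalk (G : SimpleGraph V) (M : G.Subgraph) (x : V → ℝ) {v u : V}
    (p : G.Walk v u) : Prop :=
  ∀ i : ℕ, i < (p.length - 1) / 2 →
    M.Adj (p.getVert (2 * i)) (p.getVert (2 * i + 1)) ∧
      x (p.getVert (2 * i)) * x (p.getVert (2 * i + 2)) < 0

/-- A maximal `(M,x)`-alternating walk: one not properly contained in a longer
`(M,x)`-alternating walk from the same start. -/
def MaximalMxAltWalk (G : SimpleGraph V) (M : G.Subgraph) (x : V → ℝ) {v u : V}
    (p : G.Walk v u) : Prop :=
  MxAltWalk G M x p ∧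
    ∀ (u' : V) (q : G.Walk v u'), MxAltWalk G M x q → p.support <+: q.support →
      q.length = p.length

/-- An `M`-alternating walk starting with an edge not in `M`:
the `i`-th edge belongs to `M` iff `i` is odd. -/
def MAltWalk (G : SimpleGraph V) (M : G.Subgraph) {v u : V} (p : G.Walk v u) : Prop :=
  ∀ i : ℕ, i < p.length → (M.Adj (p.getVert i) (p.getVert (i + 1)) ↔ Odd i)

/-- Vertices reachable from `v` by an even-length `M`-alternating path. -/
def Re (G : SimpleGraph V) (M : G.Subgraph) (v : V) : Set V :=
  {u | ∃ p : G.Walk v u, p.IsPath ∧ MAltWalk G M p ∧ Even p.length}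

/-- Vertices reachable from `v` by an odd-length `M`-alternating path. -/
def Ro (G : SimpleGraph V) (M : G.Subgraph) (v : V) : Set V :=
  {u | ∃ p : G.Walk v u, p.IsPath ∧ MAltWalk G M p ∧ Odd p.length}


set_option linter.unusedSectionVars false
set_option linter.unusedVariables false

def IsSide (G : SimpleGraph V) (σ : Set V) : Prop :=
  ∀ ⦃a b : V⦄, G.Adj a b → (a ∈ σ ↔ b ∉ σ)

lemma IsSide.compl {G : SimpleGraph V} {σ : Set V} (h : IsSide G σ) : IsSide G σᶜ := by
  intro a b hab
  have := h hab
  simp only [Set.mem_compl_iff]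
  tauto

lemma IsSide.other_mem {G : SimpleGraph V} {σ : Set V} (h : IsSide G σ) {a b : V}
    (hab : G.Adj a b) (ha : a ∉ σ) : b ∈ σ := by
  have := h hab; tauto

lemma IsSide.other_not_mem {G : SimpleGraph V} {σ : Set V} (h : IsSide G σ) {a b : V}
    (hab : G.Adj a b) (ha : a ∈ σ) : b ∉ σ := by
  have := h hab; tauto

/-- Build a subgraph from a symmetric relation contained in `G.Adj`, with vertex set
its support. -/
def ofRel (G : SimpleGraph V) (R : V → V → Prop) (hsymm : ∀ a b, R a b → R b a)
    (hsub : ∀ a b, R a b → G.Adj a b) : G.Subgraph where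
  verts := {a | ∃ b, R a b}
  Adj := R
  adj_sub := fun h => hsub _ _ h
  edge_vert := fun h => ⟨_, h⟩
  symm := ⟨fun a b h => hsymm a b h⟩

@[simp] lemma ofRel_adj (G : SimpleGraph V) (R : V → V → Prop) (hs hb) (a b : V) :
    (ofRel G R hs hb).Adj a b ↔ R a b := Iff.rfl

@[simp] lemma ofRel_verts (G : SimpleGraph V) (R : V → V → Prop) (hs hb) (a : V) :
    a ∈ (ofRel G R hs hb).verts ↔ ∃ b, R a b := Iff.rfl

lemma ofRel_support (G : SimpleGraph V) (R : V → V → Prop) (hs hb) (a : V) :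
    a ∈ (ofRel G R hs hb).support ↔ ∃ b, R a b := by
  simp [SimpleGraph.Subgraph.mem_support]

section Partner

variable {G : SimpleGraph V} {N : G.Subgraph}

noncomputable def partnerFn (N : G.Subgraph) (hN : N.IsMatching) (x : V) : V :=
  if h : x ∈ N.verts then (hN h).choose else x

lemma partnerFn_adj {hN : N.IsMatching} {x : V} (hx : x ∈ N.verts) :
    N.Adj x (partnerFn N hN x) := by
  rw [partnerFn, dif_pos hx]
  exact (hN hx).choose_spec.1

lemma partnerFn_eq {hN : N.IsMatching} {x y : V} (hxy : N.Adj x y) :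
    partnerFn N hN x = y := by
  have hx : x ∈ N.verts := N.edge_vert hxy
  rw [partnerFn, dif_pos hx]
  exact ((hN hx).choose_spec.2 y hxy).symm

lemma partnerFn_invol {hN : N.IsMatching} {x : V} (hx : x ∈ N.verts) :
    partnerFn N hN (partnerFn N hN x) = x :=
  partnerFn_eq (N.adj_symm (partnerFn_adj hx))

lemma partnerFn_injOn {hN : N.IsMatching} {x y : V} (hx : x ∈ N.verts) (hy : y ∈ N.verts)
    (h : partnerFn N hN x = partnerFn N hN y) : x = y := by
  have := partnerFn_invol (hN := hN) hx
  rw [h, partnerFn_invol hy] at this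
  exact this.symm

lemma verts_eq_support (hN : N.IsMatching) : N.support = N.verts :=
  hN.support_eq_verts

lemma adj_right_unique {hN : N.IsMatching} {x y z : V} (h1 : N.Adj x y) (h2 : N.Adj x z) : y = z := by
  have := partnerFn_eq (hN := hN) h1
  rw [partnerFn_eq (hN := hN) h2] at this
  exact this.symm

end Partner

section Surgery

variable {G : SimpleGraph V}

/-- Add an edge between two unmatched vertices. -/
lemma augment_matching {N : G.Subgraph} (hN : N.IsMatching) {a b : V}
    (hab : G.Adj a b) (ha : a ∉ N.verts) (hb : b ∉ N.verts) :
    ∃ N' : G.Subgraph, N'.IsMatching ∧ N'.edgeSet.ncard = N.edgeSet.ncard + 1 := by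
  classical
  refine ⟨N ⊔ G.subgraphOfAdj hab, ?_, ?_⟩
  · apply hN.sup (SimpleGraph.Subgraph.IsMatching.subgraphOfAdj hab)
    rw [hN.support_eq_verts, (SimpleGraph.Subgraph.IsMatching.subgraphOfAdj hab).support_eq_verts]
    simp only [SimpleGraph.subgraphOfAdj_verts]
    rw [Set.disjoint_right]
    intro x hx
    simp only [Set.mem_insert_iff, Set.mem_singleton_iff] at hx
    rcases hx with rfl | rfl <;> assumption
  · have hedge : (N ⊔ G.subgraphOfAdj hab).edgeSet = insert s(a,b) N.edgeSet := by
      ext e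
      induction e with
      | h x y =>
        simp only [SimpleGraph.Subgraph.mem_edgeSet, SimpleGraph.Subgraph.sup_adj,
          SimpleGraph.subgraphOfAdj_adj, Set.mem_insert_iff]
        rw [eq_comm, or_comm]
    rw [hedge]
    exact Set.ncard_insert_of_notMem (fun hmem => ha (N.edge_vert hmem)) (Set.toFinite _)

end Surgery

section Swap

variable {G : SimpleGraph V} {N : G.Subgraph}

lemma Subgraph.adj_ne {a b : V} (h : N.Adj a b) : a ≠ b := (N.adj_sub h).ne

lemma not_adj_of_not_verts {a b : V} (ha : a ∉ N.verts) : ¬ N.Adj a b :=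
  fun h => ha (N.edge_vert h)

/-- The swap of a matching: remove edge `vw`, add edge `vp`. -/
def swapRel (N : G.Subgraph) (v w p : V) : V → V → Prop :=
  fun a b => (N.Adj a b ∧ s(a,b) ≠ s(v,w)) ∨ s(a,b) = s(v,p)

def swapSub (N : G.Subgraph) (v w p : V) (hvp : G.Adj v p) : G.Subgraph :=
  ofRel G (swapRel N v w p)
    (by
      intro a b h
      rcases h with ⟨h1, h2⟩ | h
      · exact Or.inl ⟨h1.symm, by rwa [Sym2.eq_swap]⟩
      · exact Or.inr (by rwa [Sym2.eq_swap]))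
    (by
      intro a b h
      rcases h with ⟨h1, _⟩ | h
      · exact N.adj_sub h1
      · rw [Sym2.eq_iff] at h
        rcases h with ⟨rfl, rfl⟩ | ⟨rfl, rfl⟩
        · exact hvp
        · exact hvp.symm)

variable {v w p : V} (hN : N.IsMatching) (hvw : N.Adj v w) (hp : p ∉ N.verts) (hvp : G.Adj v p)

lemma swapSub_adj {a b : V} :
    (swapSub N v w p hvp).Adj a b ↔ (N.Adj a b ∧ s(a,b) ≠ s(v,w)) ∨ s(a,b) = s(v,p) := Iff.rfl

include hvw hp in
lemma swapSub_adj_untouched {a b : V} (ha : a ≠ v) (ha2 : a ≠ w) (ha3 : a ≠ p)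
    (hb : b ≠ v) (hb2 : b ≠ w) (hb3 : b ≠ p) :
    ((swapSub N v w p hvp).Adj a b ↔ N.Adj a b) := by
  rw [swapSub_adj]
  constructor
  · rintro (⟨h1, _⟩ | h)
    · exact h1
    · rw [Sym2.eq_iff] at h
      rcases h with ⟨rfl, rfl⟩ | ⟨rfl, rfl⟩ <;> simp_all
  · intro h
    left
    refine ⟨h, ?_⟩
    rw [Ne, Sym2.eq_iff]
    rintro (⟨rfl, rfl⟩ | ⟨rfl, rfl⟩) <;> simp_all

include hN hvw hp in
lemma swapSub_isMatching : (swapSub N v w p hvp).IsMatching := by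
  have hvw' : v ≠ w := Subgraph.adj_ne hvw
  have hpv : p ≠ v := fun h => hp (h ▸ N.edge_vert hvw)
  have hpw : p ≠ w := fun h => hp (h ▸ N.edge_vert (N.adj_symm hvw))
  intro a ha
  obtain ⟨b0, hb0⟩ := ha
  by_cases hav : a = v
  · subst hav
    refine ⟨p, Or.inr rfl, ?_⟩
    rintro y (⟨h1, h2⟩ | h)
    · exact absurd (by rw [adj_right_unique (hN := hN) h1 hvw]) h2
    · rw [Sym2.eq_iff] at h
      rcases h with ⟨_, rfl⟩ | ⟨rfl, rfl⟩
      · rfl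
      · exact absurd rfl hpv
  · by_cases hap : a = p
    · subst hap
      refine ⟨v, Or.inr (by rw [Sym2.eq_swap]), ?_⟩
      rintro y (⟨h1, _⟩ | h)
      · exact absurd h1 (not_adj_of_not_verts hp)
      · rw [Sym2.eq_iff] at h
        rcases h with ⟨rfl, rfl⟩ | ⟨_, rfl⟩
        · exact absurd rfl hpv
        · rfl
    · -- a ≠ v, a ≠ p
      have haw : a ≠ w := by
        rintro rfl
        rcases hb0 with ⟨h1, h2⟩ | h
        · exact h2 (by rw [adj_right_unique (hN := hN) h1 (N.adj_symm hvw), Sym2.eq_swap])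
        · rw [Sym2.eq_iff] at h
          rcases h with ⟨rfl, rfl⟩ | ⟨rfl, rfl⟩ <;> simp_all
      have hb0' : N.Adj a b0 := by
        rcases hb0 with ⟨h1, _⟩ | h
        · exact h1
        · rw [Sym2.eq_iff] at h
          rcases h with ⟨rfl, rfl⟩ | ⟨rfl, rfl⟩ <;> simp_all
      refine ⟨b0, hb0, ?_⟩
      rintro y (⟨h1, _⟩ | h)
      · exact adj_right_unique (hN := hN) h1 hb0'
      · rw [Sym2.eq_iff] at h
        rcases h with ⟨rfl, rfl⟩ | ⟨rfl, rfl⟩ <;> simp_all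

include hN hvw hp in
lemma swapSub_verts : (swapSub N v w p hvp).verts = (N.verts \ {w}) ∪ {p} := by
  have hvw' : v ≠ w := Subgraph.adj_ne hvw
  have hpv : p ≠ v := fun h => hp (h ▸ N.edge_vert hvw)
  have hpw : p ≠ w := fun h => hp (h ▸ N.edge_vert (N.adj_symm hvw))
  ext a
  simp only [swapSub, ofRel_verts, Set.mem_union, Set.mem_diff, Set.mem_singleton_iff]
  constructor
  · rintro ⟨b, hb⟩
    rcases hb with ⟨h1, h2⟩ | h
    · left
      refine ⟨N.edge_vert h1, ?_⟩
      rintro rfl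
      exact h2 (by rw [adj_right_unique (hN := hN) h1 (N.adj_symm hvw), Sym2.eq_swap])
    · rw [Sym2.eq_iff] at h
      rcases h with ⟨rfl, rfl⟩ | ⟨rfl, rfl⟩
      · left; exact ⟨N.edge_vert hvw, hvw'⟩
      · right; rfl
  · rintro (⟨ha, haw⟩ | rfl)
    · by_cases hav : a = v
      · subst hav; exact ⟨p, Or.inr rfl⟩
      · obtain ⟨b, hb⟩ := hN ha
        refine ⟨b, Or.inl ⟨hb.1, ?_⟩⟩
        rw [Ne, Sym2.eq_iff]
        rintro (⟨h1, h2⟩ | ⟨h1, h2⟩)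
        · exact hav h1
        · exact haw h1
    · exact ⟨v, Or.inr (by rw [Sym2.eq_swap])⟩

include hN hvw hp in
lemma swapSub_edgeSet :
    (swapSub N v w p hvp).edgeSet = (N.edgeSet \ {s(v,w)}) ∪ {s(v,p)} := by
  ext e
  induction e with
  | h x y =>
    simp only [SimpleGraph.Subgraph.mem_edgeSet, Set.mem_union, Set.mem_diff,
      Set.mem_singleton_iff]
    exact Iff.rfl

include hN hvw hp in
lemma swapSub_ncard :
    (swapSub N v w p hvp).edgeSet.ncard = N.edgeSet.ncard := by
  rw [swapSub_edgeSet hN hvw hp]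
  have h1 : s(v,p) ∉ N.edgeSet \ {s(v,w)} := by
    intro hmem
    exact hp (N.edge_vert (N.adj_symm hmem.1))
  have h2 : s(v,w) ∈ N.edgeSet := hvw
  rw [Set.union_singleton, Set.ncard_insert_of_notMem h1 (Set.toFinite _).diff]
  rw [Set.ncard_diff_singleton_of_mem h2]
  have : 1 ≤ N.edgeSet.ncard := by
    rw [Nat.one_le_iff_ne_zero]
    intro h0
    have := Set.ncard_eq_zero (Set.toFinite N.edgeSet) |>.mp h0
    rw [Set.eq_empty_iff_forall_notMem] at this
    exact this _ h2
  omega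

end Swap

section CycleGadget

variable {G : SimpleGraph V}

lemma walk_of_chain (g : ℕ → V) (k : ℕ) (hadj : ∀ t, t < k → G.Adj (g t) (g (t+1))) :
    ∃ p : G.Walk (g 0) (g k), p.support = (List.range (k+1)).map g ∧
      p.edges = (List.range k).map (fun t => s(g t, g (t+1))) ∧ p.length = k := by
  induction k with
  | zero => exact ⟨SimpleGraph.Walk.nil, by rw [List.range_succ]; simp, by simp, by simp⟩
  | succ k ih =>
    obtain ⟨p, hsup, hedg, hlen⟩ := ih (fun t ht => hadj t (Nat.lt_succ_of_lt ht))
    refine ⟨p.concat (hadj k (Nat.lt_succ_self k)), ?_, ?_, ?_⟩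
    · rw [SimpleGraph.Walk.support_concat, hsup]
      conv_rhs => rw [List.range_succ, List.map_append]
      simp

    · rw [SimpleGraph.Walk.edges_concat, hedg, List.concat_eq_append]
      conv_rhs => rw [List.range_succ, List.map_append]
      simp

    · rw [SimpleGraph.Walk.length_concat, hlen]

lemma no_cycle_seq (hc : C4kFree G) (n : ℕ) (hn : 2 ≤ n) (h4 : 4 ∣ 2 * n) (g : ℕ → V)
    (hinj : ∀ m1 < 2*n, ∀ m2 < 2*n, g m1 = g m2 → m1 = m2)
    (hadj : ∀ t, t < 2*n - 1 → G.Adj (g t) (g (t+1)))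
    (hclose : G.Adj (g (2*n - 1)) (g 0)) : False := by
  obtain ⟨p, hsup, hedg, hlen⟩ := walk_of_chain g (2*n - 1) hadj
  have hnodup : p.support.Nodup := by
    rw [hsup]
    refine List.nodup_range.map_on ?_
    intro m1 hm1 m2 hm2 heq
    rw [List.mem_range] at hm1 hm2
    have h1 : m1 < 2*n := by omega
    have h2 : m2 < 2*n := by omega
    exact hinj m1 h1 m2 h2 heq
  have hpath : p.IsPath := SimpleGraph.Walk.IsPath.mk' hnodup
  have hq : p.reverse.IsPath := hpath.reverse
  have hedge_not : s(g 0, g (2*n-1)) ∉ p.reverse.edges := by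
    rw [SimpleGraph.Walk.edges_reverse, List.mem_reverse, hedg]
    intro hmem
    rw [List.mem_map] at hmem
    obtain ⟨t, ht, hteq⟩ := hmem
    rw [List.mem_range] at ht
    rw [Sym2.eq_iff] at hteq
    rcases hteq with ⟨h1, h2⟩ | ⟨h1, h2⟩
    · have ht0 : t = 0 := hinj t (by omega) 0 (by omega) h1
      have h21 : t + 1 = 2*n-1 := hinj (t+1) (by omega) (2*n-1) (by omega) h2
      omega
    · have : t = 2*n-1 := hinj t (by omega) (2*n-1) (by omega) h1
      omega
  have hcyc : (SimpleGraph.Walk.cons hclose.symm p.reverse).IsCycle := by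
    rw [SimpleGraph.Walk.cons_isCycle_iff]
    exact ⟨hq, hedge_not⟩
  apply hc _ _ hcyc
  simp only [SimpleGraph.Walk.length_cons, SimpleGraph.Walk.length_reverse, hlen]
  omega

end CycleGadget

section T1

variable {G : SimpleGraph V}

lemma sign_flip {A B C : ℝ} (h1 : A * B < 0) (h2 : 0 < B * C) : A * C < 0 := by
  nlinarith [sq_nonneg B, mul_pos h2 (neg_pos.mpr h1), sq_nonneg (A*C)]

lemma sign_flip' {A B C : ℝ} (h1 : A * B < 0) (h2 : B * C < 0) : 0 < A * C := by
  nlinarith [sq_nonneg B, mul_pos (neg_pos.mpr h1) (neg_pos.mpr h2), sq_nonneg (A*C)]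

lemma exists_opp_sign (a : V) (y : V → ℝ)
    (hsum : ∑ b, (G.adjMatrix ℝ) a b * y b = 0) {r : V} (har : G.Adj a r) (hyr : y r ≠ 0) :
    ∃ b, G.Adj a b ∧ y b * y r < 0 := by
  have hAar : (G.adjMatrix ℝ) a r = 1 := by simp [SimpleGraph.adjMatrix_apply, har]
  rcases hyr.lt_or_gt with hneg | hpos
  · by_contra hno
    push_neg at hno
    have hall : ∀ b, (G.adjMatrix ℝ) a b * y b ≤ 0 := by
      intro b
      by_cases hb : G.Adj a b
      · have h1 := hno b hb
        have hA : (G.adjMatrix ℝ) a b = 1 := by simp [SimpleGraph.adjMatrix_apply, hb]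
        rw [hA, one_mul]
        nlinarith
      · simp [SimpleGraph.adjMatrix_apply, hb]
    have hmem : r ∈ (Finset.univ : Finset V) := Finset.mem_univ r
    have h5 := Finset.single_le_sum (f := fun b => -((G.adjMatrix ℝ) a b * y b))
      (fun i _ => by simpa using hall i) hmem
    have h6 : -((G.adjMatrix ℝ) a r * y r) ≤ ∑ x, -((G.adjMatrix ℝ) a x * y x) := h5
    rw [Finset.sum_neg_distrib, hsum, neg_zero, hAar, one_mul] at h6
    linarith
  · by_contra hno
    push_neg at hno
    have hall : ∀ b, 0 ≤ (G.adjMatrix ℝ) a b * y b := by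
      intro b
      by_cases hb : G.Adj a b
      · have h1 := hno b hb
        have hA : (G.adjMatrix ℝ) a b = 1 := by simp [SimpleGraph.adjMatrix_apply, hb]
        rw [hA, one_mul]
        nlinarith
      · simp [SimpleGraph.adjMatrix_apply, hb]
    have hmem : r ∈ (Finset.univ : Finset V) := Finset.mem_univ r
    have h5 := Finset.single_le_sum (f := fun b => (G.adjMatrix ℝ) a b * y b)
      (fun i _ => hall i) hmem
    have h6 : (G.adjMatrix ℝ) a r * y r ≤ ∑ x, (G.adjMatrix ℝ) a x * y x := h5
    rw [hsum, hAar, one_mul] at h6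
    linarith

end T1

section T1b

variable {G : SimpleGraph V}

lemma no_repeat_walk {σ : Set V} (hσ : IsSide G σ) (hc : C4kFree G)
    {N : G.Subgraph} (hN : N.IsMatching) (y : V → ℝ) (r : ℕ → V) (K : ℕ)
    (hrverts : ∀ n, n < K → r n ∈ N.verts)
    (hrσ : ∀ n, n < K → r n ∉ σ)
    (hneq : ∀ n, n ≤ K → y (r n) ≠ 0)
    (hsgn : ∀ n, n < K → y (r (n+1)) * y (r n) < 0)
    (hadj : ∀ n, n < K → G.Adj (partnerFn N hN (r n)) (r (n+1))) :
    ∀ i j, i < j → j ≤ K → r i ≠ r j := by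
  intro i j hij hjK hrij
  have hP : ∃ m, m ≤ K ∧ ∃ i', i' < m ∧ r i' = r m := ⟨j, hjK, i, hij, hrij⟩
  classical
  let j₀ := Nat.find hP
  obtain ⟨hj₀K, i₀, hi₀lt, hi₀eq⟩ := Nat.find_spec hP
  have hdist : ∀ p q, p < q → q < j₀ → r p ≠ r q := by
    intro p q hpq hq hrpq
    exact Nat.find_min hP hq ⟨by omega, p, hpq, hrpq⟩
  set n := j₀ - i₀ with hn_def
  have hijn : i₀ + n = j₀ := by omega
  have hn1 : 1 ≤ n := by omega
  have hpσ : ∀ m, m < K → partnerFn N hN (r m) ∈ σ := by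
    intro m hm
    have hadjm : N.Adj (r m) (partnerFn N hN (r m)) := partnerFn_adj (hrverts m hm)
    exact hσ.other_mem (N.adj_sub hadjm) (hrσ m hm)
  have hn2 : 2 ≤ n := by
    rcases Nat.lt_or_ge n 2 with h | h
    · have hn1' : n = 1 := by omega
      have heq : r i₀ = r (i₀ + 1) := by
        rw [show i₀ + 1 = j₀ by omega]; exact hi₀eq
      have := hsgn i₀ (by omega)
      rw [← heq] at this
      nlinarith [mul_self_nonneg (y (r i₀))]
    · exact h
  -- sign parity
  have hpar : ∀ t, t ≤ n → (Even t → 0 < y (r (i₀ + t)) * y (r i₀)) ∧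
      (¬ Even t → y (r (i₀ + t)) * y (r i₀) < 0) := by
    intro t
    induction t with
    | zero =>
      intro _
      constructor
      · intro _
        simpa using mul_self_pos.mpr (hneq i₀ (by omega))
      · intro h; exact absurd Even.zero h
    | succ t ih =>
      intro htn
      have ih' := ih (by omega)
      have hstep := hsgn (i₀ + t) (by omega)
      rw [show i₀ + t + 1 = i₀ + (t+1) by omega] at hstep
      constructor
      · intro hev
        have hodd : ¬ Even t := by
          rcases Nat.even_or_odd t with he | ho
          · exfalso; exact (Nat.even_add_one.mp hev) he
          · exact Nat.not_even_iff_odd.mpr ho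
        exact sign_flip' hstep (ih'.2 hodd)
      · intro hodd
        have hev : Even t := by
          rcases Nat.even_or_odd t with he | ho
          · exact he
          · exact absurd (Nat.even_add_one.mpr (Nat.not_even_iff_odd.mpr ho)) hodd
        exact sign_flip hstep (ih'.1 hev)
  have hneven : Even n := by
    by_contra hodd
    have := ((hpar n) (le_refl n)).2 hodd
    rw [hijn, ← hi₀eq] at this
    nlinarith [mul_self_nonneg (y (r i₀))]
  -- build the cycle
  let g : ℕ → V := fun m => if m % 2 = 0 then r (i₀ + m / 2) else partnerFn N hN (r (i₀ + m / 2))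
  have geven : ∀ s, g (2*s) = r (i₀ + s) := by
    intro s
    have h1 : (2*s) % 2 = 0 := by omega
    have h2 : (2*s) / 2 = s := by omega
    simp only [g, h1, h2]
    norm_num
  have godd : ∀ s, g (2*s+1) = partnerFn N hN (r (i₀ + s)) := by
    intro s
    have h1 : (2*s+1) % 2 = 1 := by omega
    have h2 : (2*s+1) / 2 = s := by omega
    simp only [g, h1, h2]
    norm_num
  have hrdist : ∀ s1 s2, s1 < n → s2 < n → r (i₀ + s1) = r (i₀ + s2) → s1 = s2 := by
    intro s1 s2 h1 h2 heq
    rcases lt_trichotomy s1 s2 with h | h | h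
    · exact absurd heq (hdist _ _ (by omega) (by omega))
    · exact h
    · exact absurd heq.symm (hdist _ _ (by omega) (by omega))
  have hsK : ∀ s, s < n → i₀ + s < K := by intro s hs; omega
  have hinj : ∀ m1, m1 < 2*n → ∀ m2, m2 < 2*n → g m1 = g m2 → m1 = m2 := by
    intro m1 hm1 m2 hm2 heq
    rcases Nat.even_or_odd m1 with ⟨s1, hs1⟩ | ⟨s1, hs1⟩ <;>
      rcases Nat.even_or_odd m2 with ⟨s2, hs2⟩ | ⟨s2, hs2⟩
    · rw [show m1 = 2*s1 by omega, show m2 = 2*s2 by omega, geven, geven] at heq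
      have := hrdist s1 s2 (by omega) (by omega) heq
      omega
    · rw [show m1 = 2*s1 by omega, show m2 = 2*s2+1 by omega, geven, godd] at heq
      exact absurd (heq ▸ hpσ (i₀ + s2) (hsK s2 (by omega))) (hrσ (i₀ + s1) (hsK s1 (by omega)))
    · rw [show m1 = 2*s1+1 by omega, show m2 = 2*s2 by omega, godd, geven] at heq
      exact absurd (heq ▸ hpσ (i₀ + s1) (hsK s1 (by omega))) (hrσ (i₀ + s2) (hsK s2 (by omega)))
    · rw [show m1 = 2*s1+1 by omega, show m2 = 2*s2+1 by omega, godd, godd] at heq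
      have heq' := partnerFn_injOn (hN := hN) (hrverts (i₀+s1) (hsK s1 (by omega)))
        (hrverts (i₀+s2) (hsK s2 (by omega))) heq
      have := hrdist s1 s2 (by omega) (by omega) heq'
      omega
  have hadjchain : ∀ t, t < 2*n - 1 → G.Adj (g t) (g (t+1)) := by
    intro t ht
    rcases Nat.even_or_odd t with ⟨s, hs⟩ | ⟨s, hs⟩
    · rw [show t = 2*s by omega, show 2*s+1 = 2*s+1 from rfl, geven, godd]
      exact N.adj_sub (partnerFn_adj (hrverts (i₀ + s) (hsK s (by omega))))
    · rw [show t = 2*s+1 by omega, show 2*s+1+1 = 2*(s+1) by omega, godd, geven,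
        show i₀ + (s+1) = (i₀ + s) + 1 by omega]
      exact hadj (i₀ + s) (hsK s (by omega))
  have hclose : G.Adj (g (2*n-1)) (g 0) := by
    rw [show 2*n-1 = 2*(n-1)+1 by omega, godd, show (0:ℕ) = 2*0 by omega, geven,
      show i₀ + 0 = i₀ by omega]
    have := hadj (i₀ + (n-1)) (hsK (n-1) (by omega))
    rw [show i₀ + (n-1) + 1 = j₀ by omega, ← hi₀eq] at this
    exact this
  have h4 : 4 ∣ 2*n := by
    obtain ⟨k, hk⟩ := hneven
    exact ⟨k, by omega⟩
  exact no_cycle_seq hc n hn2 h4 g hinj hadjchain hclose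

/-- Core lemma: any vector supported on matched `σᶜ` vertices whose matched `σ`-rows
all vanish is zero. -/
lemma matched_kernel_zero {σ : Set V} (hσ : IsSide G σ) (hc : C4kFree G)
    {N : G.Subgraph} (hN : N.IsMatching) (y : V → ℝ)
    (hy1 : ∀ b, y b ≠ 0 → b ∉ σ ∧ b ∈ N.verts)
    (hy2 : ∀ a, a ∈ σ → a ∈ N.verts → ∑ b, (G.adjMatrix ℝ) a b * y b = 0) :
    y = 0 := by
  by_contra hy0
  obtain ⟨r₀, hr₀⟩ : ∃ rr, y rr ≠ 0 := by
    by_contra h; push_neg at h; exact hy0 (funext fun z => h z)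
  have step : ∀ rr : V, y rr ≠ 0 → ∃ rr' : V, y rr' ≠ 0 ∧ y rr' * y rr < 0 ∧
      G.Adj (partnerFn N hN rr) rr' := by
    intro rr hrne
    have h1 := hy1 rr hrne
    have hadj : N.Adj rr (partnerFn N hN rr) := partnerFn_adj h1.2
    have hGadj : G.Adj rr (partnerFn N hN rr) := N.adj_sub hadj
    have haσ : partnerFn N hN rr ∈ σ := hσ.other_mem hGadj h1.1
    have haN : partnerFn N hN rr ∈ N.verts := N.edge_vert (N.adj_symm hadj)
    obtain ⟨b, hb1, hb2⟩ := exists_opp_sign (partnerFn N hN rr) y (hy2 _ haσ haN) hGadj.symm hrne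
    refine ⟨b, ?_, hb2, hb1⟩
    intro h0
    rw [h0, zero_mul] at hb2
    exact lt_irrefl 0 hb2
  have stepT : ∀ rr : {b : V // y b ≠ 0}, ∃ rr' : {b : V // y b ≠ 0},
      y rr'.1 * y rr.1 < 0 ∧ G.Adj (partnerFn N hN rr.1) rr'.1 := by
    rintro ⟨rr, hrr⟩
    obtain ⟨rr', h1, h2, h3⟩ := step rr hrr
    exact ⟨⟨rr', h1⟩, h2, h3⟩
  choose nxt hsgn hadjn using stepT
  let seq : ℕ → {b : V // y b ≠ 0} := fun n => nxt^[n] ⟨r₀, hr₀⟩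
  have hseq_succ : ∀ n, seq (n+1) = nxt (seq n) := fun n =>
    Function.iterate_succ_apply' nxt n _
  let r : ℕ → V := fun n => (seq n).1
  have hne : ∀ n, y (r n) ≠ 0 := fun n => (seq n).2
  have hsgn' : ∀ n, y (r (n+1)) * y (r n) < 0 := by
    intro n
    have := hsgn (seq n)
    simpa only [r, hseq_succ n] using this
  have hadj' : ∀ n, G.Adj (partnerFn N hN (r n)) (r (n+1)) := by
    intro n
    have := hadjn (seq n)
    simpa only [r, hseq_succ n] using this
  obtain ⟨i, j, hij, h⟩ := Finite.exists_ne_map_eq_of_infinite r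
  have hlt : ∃ i' j', i' < j' ∧ r i' = r j' := by
    rcases Nat.lt_or_ge i j with hl | hg
    · exact ⟨i, j, hl, h⟩
    · exact ⟨j, i, Nat.lt_of_le_of_ne hg (Ne.symm hij), h.symm⟩
  obtain ⟨i', j', hij', heq'⟩ := hlt
  exact no_repeat_walk hσ hc hN y r j'
    (fun n _ => (hy1 _ (hne n)).2) (fun n _ => (hy1 _ (hne n)).1)
    (fun n _ => hne n) (fun n _ => hsgn' n) (fun n _ => hadj' n)
    i' j' hij' (le_refl j') heq'

end T1b

section T2

variable {G : SimpleGraph V}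

/-- Column of the adjacency matrix restricted to rows in `S`. -/
noncomputable def colS (G : SimpleGraph V) (S : Finset V) (b : V) : V → ℝ :=
  fun a => if a ∈ S then (G.adjMatrix ℝ) a b else 0

lemma colS_apply_of_mem {S : Finset V} {a b : V} (ha : a ∈ S) :
    colS G S b a = (G.adjMatrix ℝ) a b := if_pos ha

lemma colS_apply_of_not_mem {S : Finset V} {a b : V} (ha : a ∉ S) :
    colS G S b a = 0 := if_neg ha

lemma indep_to_matching {σ : Set V} (hσ : IsSide G σ) (S T : Finset V)
    (hS : ∀ a ∈ S, a ∈ σ) (hT : ∀ b ∈ T, b ∉ σ)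
    (hind : LinearIndependent ℝ (fun b : {x // x ∈ T} => colS G S b.1)) :
    ∃ N : G.Subgraph, N.IsMatching ∧ N.edgeSet.ncard = T.card ∧
      ∀ a ∈ N.verts, a ∈ (S : Set V) ∪ (T : Set V) := by
  classical
  -- the neighborhood function
  set t : {x // x ∈ T} → Finset V := fun b => S.filter (fun a => G.Adj a b.1) with ht_def
  -- Hall condition
  have hall : ∀ s : Finset {x // x ∈ T}, s.card ≤ (s.biUnion t).card := by
    intro s
    by_contra hlt
    push_neg at hlt
    set W := s.biUnion t with hW_def
    -- restricted vectors
    have hcard : Fintype.card {x // x ∈ W} < Fintype.card {x // x ∈ s} := by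
      simpa [Fintype.card_coe] using hlt
    have hnotind : ¬ LinearIndependent ℝ
        (fun i : {x // x ∈ s} => (fun a : {x // x ∈ W} => colS G S i.1.1 a.1)) := by
      intro h
      have := h.fintype_card_le_finrank
      rw [Module.finrank_pi] at this
      omega
    rw [Fintype.not_linearIndependent_iff] at hnotind
    obtain ⟨c, hcsum, i0, hi0⟩ := hnotind
    -- build the global relation
    have hglob : ∑ i : {x // x ∈ s}, c i • colS G S i.1.1 = 0 := by
      funext a
      by_cases haW : a ∈ W
      · have := congrFun hcsum ⟨a, haW⟩
        simpa using this
      · simp only [Finset.sum_apply, Pi.smul_apply, Pi.zero_apply, smul_eq_mul]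
        apply Finset.sum_eq_zero
        intro i _
        have : colS G S i.1.1 a = 0 := by
          by_cases haS : a ∈ S
          · rw [colS_apply_of_mem haS]
            by_cases hadj : G.Adj a i.1.1
            · exfalso
              apply haW
              rw [hW_def, Finset.mem_biUnion]
              exact ⟨i, i.2, by rw [ht_def]; simp [Finset.mem_filter, haS, hadj]⟩
            · simp [SimpleGraph.adjMatrix_apply, hadj]
          · rw [colS_apply_of_not_mem haS]
        rw [this, mul_zero]
    -- contradict independence
    have hindres : LinearIndependent ℝ
        (fun i : {x // x ∈ s} => colS G S i.1.1) :=
      hind.comp (fun i : {x // x ∈ s} => i.1) (fun i j h => Subtype.ext h)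
    rw [Fintype.linearIndependent_iff] at hindres
    exact hi0 (hindres c hglob i0)
  obtain ⟨f, hfinj, hfmem⟩ := (Finset.all_card_le_biUnion_card_iff_exists_injective t).mp hall
  have hfS : ∀ b : {x // x ∈ T}, f b ∈ S := by
    intro b; have := hfmem b; rw [ht_def] at this; exact (Finset.mem_filter.mp this).1
  have hfadj : ∀ b : {x // x ∈ T}, G.Adj (f b) b.1 := by
    intro b; have := hfmem b; rw [ht_def] at this; exact (Finset.mem_filter.mp this).2
  -- f b is on side σ, b on the other side
  have hfσ : ∀ b : {x // x ∈ T}, f b ∈ σ := fun b => hS _ (hfS b)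
  have hTσ : ∀ b : {x // x ∈ T}, b.1 ∉ σ := fun b => hT _ b.2
  set R : V → V → Prop := fun a b =>
    (∃ hb : b ∈ T, f ⟨b, hb⟩ = a) ∨ (∃ ha : a ∈ T, f ⟨a, ha⟩ = b) with hR_def
  have hRsymm : ∀ a b, R a b → R b a := by
    intro a b h; rcases h with h | h
    · exact Or.inr h
    · exact Or.inl h
  have hRsub : ∀ a b, R a b → G.Adj a b := by
    intro a b h
    rcases h with ⟨hb, hfb⟩ | ⟨ha, hfa⟩
    · exact hfb ▸ hfadj ⟨b, hb⟩
    · exact (hfa ▸ hfadj ⟨a, ha⟩).symm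
  refine ⟨ofRel G R hRsymm hRsub, ?_, ?_, ?_⟩
  · -- matching
    intro a ha
    obtain ⟨b0, hb0⟩ := ha
    by_cases haT : a ∈ T
    · refine ⟨f ⟨a, haT⟩, Or.inr ⟨haT, rfl⟩, ?_⟩
      rintro y (⟨hy, hfy⟩ | ⟨ha', hfa'⟩)
      · exact absurd (hfy ▸ hfσ ⟨y, hy⟩) (hT _ haT)
      · exact hfa'.symm
    · -- a = f b for some unique b
      rcases hb0 with ⟨hb0T, hfb0⟩ | ⟨ha', _⟩
      · refine ⟨b0, Or.inl ⟨hb0T, hfb0⟩, ?_⟩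
        rintro y (⟨hy, hfy⟩ | ⟨ha'', _⟩)
        · have heq : (⟨y, hy⟩ : {x // x ∈ T}) = ⟨b0, hb0T⟩ := hfinj (by rw [hfy, hfb0])
          exact congrArg Subtype.val heq
        · exact absurd ha'' haT
      · exact absurd ha' haT
  · -- edge count
    have hedge : (ofRel G R hRsymm hRsub).edgeSet =
        (fun b : {x // x ∈ T} => s(b.1, f b)) '' Set.univ := by
      ext e
      induction e with
      | h x y =>
        simp only [SimpleGraph.Subgraph.mem_edgeSet, ofRel_adj, Set.image_univ,
          Set.mem_range]
        constructor
        · rintro (⟨hy, hfy⟩ | ⟨hx, hfx⟩)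
          · exact ⟨⟨y, hy⟩, by simp [hfy, Sym2.eq_swap]⟩
          · exact ⟨⟨x, hx⟩, by simp [hfx]⟩
        · rintro ⟨b, hb⟩
          rw [Sym2.eq_iff] at hb
          rcases hb with ⟨h1, h2⟩ | ⟨h1, h2⟩
          · subst h1; subst h2
            exact Or.inr ⟨b.2, rfl⟩
          · subst h1; subst h2
            exact Or.inl ⟨b.2, rfl⟩
    have hinj2 : Function.Injective (fun b : {x // x ∈ T} => s(b.1, f b)) := by
      intro b1 b2 hb
      simp only [Sym2.eq_iff] at hb
      rcases hb with ⟨h1, _⟩ | ⟨h1, h2⟩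
      · exact Subtype.ext h1
      · exact absurd (h2 ▸ hfσ b1) (hTσ b2)
    rw [hedge, Set.ncard_image_of_injective _ hinj2, Set.ncard_univ,
      Nat.card_eq_fintype_card, Fintype.card_coe]
  · -- verts
    intro a ha
    obtain ⟨b, hb⟩ := ha
    rcases hb with ⟨hbT, hfb⟩ | ⟨haT, _⟩
    · exact Or.inl (hfb ▸ hfS ⟨b, hbT⟩)
    · exact Or.inr haT

end T2

section Sweep

variable {G : SimpleGraph V}

lemma sweep {σ : Set V} (hσ : IsSide G σ) (hc : C4kFree G)
    {N : G.Subgraph} (hN : N.IsMatching) (y : V → ℝ)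
    (hy_supp : ∀ b, y b ≠ 0 → b ∉ σ)
    (hy_row : ∀ a, a ∈ σ → ∑ b, (G.adjMatrix ℝ) a b * y b = 0)
    {u0 : V} (hu0 : y u0 ≠ 0) :
    ∃ N' : G.Subgraph, N'.IsMatching ∧ N'.edgeSet.ncard = N.edgeSet.ncard ∧
      u0 ∉ N'.verts ∧ N'.verts ⊆ N.verts ∪ {x | y x ≠ 0} := by
  classical
  have step : ∀ rr : V, y rr ≠ 0 → rr ∈ N.verts → ∃ rr' : V, y rr' ≠ 0 ∧ y rr' * y rr < 0 ∧
      G.Adj (partnerFn N hN rr) rr' := by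
    intro rr hrne hrv
    have hadj : N.Adj rr (partnerFn N hN rr) := partnerFn_adj hrv
    have hGadj : G.Adj rr (partnerFn N hN rr) := N.adj_sub hadj
    have haσ : partnerFn N hN rr ∈ σ := hσ.other_mem hGadj (hy_supp rr hrne)
    obtain ⟨b, hb1, hb2⟩ := exists_opp_sign (partnerFn N hN rr) y (hy_row _ haσ) hGadj.symm hrne
    refine ⟨b, ?_, hb2, hb1⟩
    intro h0
    rw [h0, zero_mul] at hb2
    exact lt_irrefl 0 hb2
  have stepT : ∀ rr : {b : V // y b ≠ 0}, ∃ rr' : {b : V // y b ≠ 0},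
      rr.1 ∈ N.verts → (y rr'.1 * y rr.1 < 0 ∧ G.Adj (partnerFn N hN rr.1) rr'.1) := by
    rintro ⟨rr, hrr⟩
    by_cases hv : rr ∈ N.verts
    · obtain ⟨rr', h1, h2, h3⟩ := step rr hrr hv
      exact ⟨⟨rr', h1⟩, fun _ => ⟨h2, h3⟩⟩
    · exact ⟨⟨rr, hrr⟩, fun h => absurd h hv⟩
  choose nxt hnxt using stepT
  let seq : ℕ → {b : V // y b ≠ 0} := fun n => nxt^[n] ⟨u0, hu0⟩
  have hseq_succ : ∀ n, seq (n+1) = nxt (seq n) := fun n =>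
    Function.iterate_succ_apply' nxt n _
  let r : ℕ → V := fun n => (seq n).1
  have hne : ∀ n, y (r n) ≠ 0 := fun n => (seq n).2
  have hrσ : ∀ n, r n ∉ σ := fun n => hy_supp _ (hne n)
  have hr0 : r 0 = u0 := rfl
  have hsgn' : ∀ n, r n ∈ N.verts → y (r (n+1)) * y (r n) < 0 := by
    intro n hv
    have := (hnxt (seq n) hv).1
    simpa only [r, hseq_succ n] using this
  have hadj' : ∀ n, r n ∈ N.verts → G.Adj (partnerFn N hN (r n)) (r (n+1)) := by
    intro n hv
    have := (hnxt (seq n) hv).2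
    simpa only [r, hseq_succ n] using this
  -- termination
  have hterm : ∃ n, r n ∉ N.verts := by
    by_contra hall
    push_neg at hall
    obtain ⟨i, j, hij, h⟩ := Finite.exists_ne_map_eq_of_infinite r
    have hlt : ∃ i' j', i' < j' ∧ r i' = r j' := by
      rcases Nat.lt_or_ge i j with hl | hg
      · exact ⟨i, j, hl, h⟩
      · exact ⟨j, i, Nat.lt_of_le_of_ne hg (Ne.symm hij), h.symm⟩
    obtain ⟨i', j', hij', heq'⟩ := hlt
    exact no_repeat_walk hσ hc hN y r j'
      (fun n _ => hall n) (fun n _ => hrσ n)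
      (fun n _ => hne n) (fun n _ => hsgn' n (hall n)) (fun n _ => hadj' n (hall n))
      i' j' hij' (le_refl j') heq'
  let k := Nat.find hterm
  have hkexp : r k ∉ N.verts := Nat.find_spec hterm
  have hkm : ∀ n, n < k → r n ∈ N.verts := by
    intro n hn
    by_contra hnm
    exact Nat.find_min hterm hn hnm
  have hdist : ∀ i j, i < j → j ≤ k → r i ≠ r j :=
    no_repeat_walk hσ hc hN y r k hkm (fun n _ => hrσ n) (fun n _ => hne n)
      (fun n hn => hsgn' n (hkm n hn)) (fun n hn => hadj' n (hkm n hn))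
  have hpσ : ∀ t, t < k → partnerFn N hN (r t) ∈ σ := by
    intro t ht
    exact hσ.other_mem (N.adj_sub (partnerFn_adj (hkm t ht))) (hrσ t)
  -- backward sweep
  have main : ∀ s, s ≤ k → ∃ B : G.Subgraph, B.IsMatching ∧
      B.edgeSet.ncard = N.edgeSet.ncard ∧
      r (k - s) ∉ B.verts ∧ (∀ t, t < k - s → B.Adj (partnerFn N hN (r t)) (r t)) ∧
      B.verts ⊆ N.verts ∪ {x | y x ≠ 0} := by
    intro s
    induction s with
    | zero =>
      intro _
      refine ⟨N, hN, rfl, by simpa using hkexp, ?_, fun x hx => Or.inl hx⟩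
      intro t ht
      exact N.adj_symm (partnerFn_adj (hkm t (by omega)))
    | succ s ih =>
      intro hsk
      obtain ⟨B, hB, hBcard, hBexp, hBedges, hBverts⟩ := ih (by omega)
      set t₀ := k - s - 1 with ht₀
      have ht₀k : t₀ < k := by omega
      have hks : k - s = t₀ + 1 := by omega
      set a := partnerFn N hN (r t₀) with ha_def
      set b := r t₀ with hb_def
      set p := r (k - s) with hp_def
      have hBab : B.Adj a b := hBedges t₀ (by omega)
      have hGap : G.Adj a p := by
        rw [hp_def, hks]
        exact hadj' t₀ (hkm t₀ ht₀k)
      have hbp : b ≠ p := by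
        rw [hb_def, hp_def]
        exact hdist t₀ (k-s) (by omega) (by omega)
      refine ⟨swapSub B a b p hGap, swapSub_isMatching hB hBab hBexp hGap, ?_, ?_, ?_, ?_⟩
      · rw [swapSub_ncard hB hBab hBexp hGap, hBcard]
      · rw [swapSub_verts hB hBab hBexp hGap]
        rw [show k - (s+1) = t₀ by omega]
        intro hmem
        rcases hmem with ⟨_, hbb⟩ | hpp
        · exact hbb rfl
        · exact hbp hpp
      · intro t ht
        have htt₀ : t < t₀ := by omega
        have htk : t < k := by omega
        have hx1 : partnerFn N hN (r t) ≠ a := by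
          intro h
          have := partnerFn_injOn (hN := hN) (hkm t htk) (hkm t₀ ht₀k) h
          exact hdist t t₀ htt₀ (by omega) this
        have hx2 : partnerFn N hN (r t) ≠ b := by
          intro h
          rw [hb_def] at h
          exact (hrσ t₀) (h ▸ hpσ t htk)
        have hx3 : partnerFn N hN (r t) ≠ p := by
          intro h
          rw [hp_def] at h
          exact (hrσ (k-s)) (h ▸ hpσ t htk)
        have hy1 : r t ≠ a := by
          intro h
          exact (h ▸ hrσ t) (hpσ t₀ ht₀k)
        have hy2 : r t ≠ b := hdist t t₀ htt₀ (by omega)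
        have hy3 : r t ≠ p := hdist t (k-s) (by omega) (by omega)
        rw [swapSub_adj_untouched hBab hBexp hGap hx1 hx2 hx3 hy1 hy2 hy3]
        exact hBedges t (by omega)
      · rw [swapSub_verts hB hBab hBexp hGap]
        intro x hx
        rcases hx with ⟨hx, _⟩ | hx
        · exact hBverts hx
        · right
          rw [Set.mem_singleton_iff.mp hx, hp_def]
          exact hne (k - s)
  obtain ⟨B, hB, hBcard, hBexp, _, hBverts⟩ := main k (le_refl k)
  rw [Nat.sub_self, hr0] at hBexp
  exact ⟨B, hB, hBcard, hBexp, hBverts⟩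

end Sweep

section P13

variable {G : SimpleGraph V}

lemma mulVec_row (x : V → ℝ) (a : V) :
    (G.adjMatrix ℝ).mulVec x a = ∑ b, (G.adjMatrix ℝ) a b * x b := by
  simp [Matrix.mulVec, dotProduct]

lemma side_restrict_null {σ : Set V} (hσ : IsSide G σ) {x : V → ℝ} (hx : x ∈ nullSet G) :
    ∀ a ∈ σ, ∑ b, (G.adjMatrix ℝ) a b * (fun b => if b ∈ σ then 0 else x b) b = 0 := by
  intro a ha
  have hnull : ∑ b, (G.adjMatrix ℝ) a b * x b = 0 := by
    have := congrFun hx a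
    rw [Pi.zero_apply] at this
    rw [← mulVec_row]
    exact this
  rw [← hnull]
  apply Finset.sum_congr rfl
  intro b _
  by_cases hbσ : b ∈ σ
  · have hA : (G.adjMatrix ℝ) a b = 0 := by
      by_cases hadj : G.Adj a b
      · exact absurd hbσ (hσ.other_not_mem hadj ha)
      · simp [SimpleGraph.adjMatrix_apply, hadj]
    rw [hA]
    simp
  · simp only [if_neg hbσ]

/-- P1: a support vertex can be missed by a matching of any given size
(obtained from an existing matching). -/
lemma supp_missable {σ : Set V} (hσ : IsSide G σ) (hc : C4kFree G) {N : G.Subgraph}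
    (hN : N.IsMatching) {u : V} (hu : u ∈ supp G) (huσ : u ∉ σ) :
    ∃ N' : G.Subgraph, N'.IsMatching ∧ N'.edgeSet.ncard = N.edgeSet.ncard ∧
      u ∉ N'.verts ∧ N'.verts ⊆ N.verts ∪ {x | x ∉ σ} := by
  obtain ⟨x, hxnull, hxu⟩ := hu
  set y : V → ℝ := fun b => if b ∈ σ then 0 else x b with hy_def
  have hy_supp : ∀ b, y b ≠ 0 → b ∉ σ := by
    intro b hb hbσ
    apply hb
    rw [hy_def]
    simp [hbσ]
  have hy_row : ∀ a, a ∈ σ → ∑ b, (G.adjMatrix ℝ) a b * y b = 0 :=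
    side_restrict_null hσ hxnull
  have hu0 : y u ≠ 0 := by
    rw [hy_def]
    simpa [huσ] using hxu
  obtain ⟨N', h1, h2, h3, h4⟩ := sweep hσ hc hN y hy_supp hy_row hu0
  refine ⟨N', h1, h2, h3, ?_⟩
  intro z hz
  rcases h4 hz with hz1 | hz2
  · exact Or.inl hz1
  · exact Or.inr (hy_supp z hz2)

lemma no_adj_supp_side {σ : Set V} (hσ : IsSide G σ) (hc : C4kFree G) {M : G.Subgraph}
    (hM : IsMaximumMatching G M) {u v : V} (hu : u ∈ supp G) (hv : v ∈ supp G)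
    (huv : G.Adj u v) (huσ : u ∉ σ) : False := by
  have hvσ : v ∈ σ := hσ.other_mem huv huσ
  obtain ⟨N₁, hN₁, hN₁card, hN₁u, hN₁verts⟩ := supp_missable hσ hc hM.1 hu huσ
  have hvσ' : v ∉ σᶜ := by simpa using hvσ
  obtain ⟨N₂, hN₂, hN₂card, hN₂v, hN₂verts⟩ := supp_missable hσ.compl hc hN₁ hv hvσ'
  have hN₂u : u ∉ N₂.verts := by
    intro hmem
    rcases hN₂verts hmem with h | h
    · exact hN₁u h
    · simp only [Set.mem_setOf_eq, Set.mem_compl_iff, not_not] at h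
      exact huσ h
  obtain ⟨N₃, hN₃, hN₃card⟩ := augment_matching hN₂ huv hN₂u hN₂v
  have := hM.2 N₃ hN₃
  rw [hN₃card, hN₂card, hN₁card] at this
  omega

lemma no_adj_supp (hb : IsBipartite G) (hc : C4kFree G) {M : G.Subgraph}
    (hM : IsMaximumMatching G M) {u v : V} (hu : u ∈ supp G) (hv : v ∈ supp G)
    (huv : G.Adj u v) : False := by
  obtain ⟨s, hs⟩ := hb
  have hside : IsSide G s := hs
  by_cases hus : u ∈ s
  · have : u ∉ sᶜ := by simpa using hus
    exact no_adj_supp_side hside.compl hc hM hu hv huv this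
  · exact no_adj_supp_side hside hc hM hu hv huv hus

end P13

section P2

variable {G : SimpleGraph V}

lemma sum_subtype_eq (Rfin : Finset V) (f : V → ℝ) (hf : ∀ b, b ∉ Rfin → f b = 0) :
    ∑ b : V, f b = ∑ b : {x // x ∈ Rfin}, f b.1 := by
  rw [Finset.sum_coe_sort Rfin f]
  exact (Finset.sum_subset (Finset.subset_univ Rfin) (fun x _ hx => hf x hx)).symm

lemma matching_side_card {σ : Set V} (hσ : IsSide G σ) {N : G.Subgraph} (hN : N.IsMatching) :
    (Finset.univ.filter (fun a => a ∈ N.verts ∧ a ∉ σ)).card = N.edgeSet.ncard := by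
  classical
  set Rfin := Finset.univ.filter (fun a => a ∈ N.verts ∧ a ∉ σ) with hRfin
  have hRmem : ∀ a, a ∈ Rfin ↔ (a ∈ N.verts ∧ a ∉ σ) := by
    intro a; simp [hRfin]
  have himg : N.edgeSet = (fun b => s(b, partnerFn N hN b)) '' (Rfin : Set V) := by
    ext e
    induction e with
    | h x y =>
      rw [SimpleGraph.Subgraph.mem_edgeSet, Set.mem_image]
      constructor
      · intro hadj
        by_cases hx : x ∈ σ
        · have hy : y ∉ σ := hσ.other_not_mem (N.adj_sub hadj) hx
          refine ⟨y, Finset.mem_coe.mpr ((hRmem y).mpr ⟨N.edge_vert hadj.symm, hy⟩), ?_⟩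
          rw [partnerFn_eq (hN := hN) hadj.symm, Sym2.eq_swap]
        · refine ⟨x, Finset.mem_coe.mpr ((hRmem x).mpr ⟨N.edge_vert hadj, hx⟩), ?_⟩
          rw [partnerFn_eq (hN := hN) hadj]
      · rintro ⟨b, hbmem, hbe⟩
        obtain ⟨hbv, hbσ⟩ := (hRmem b).mp (Finset.mem_coe.mp hbmem)
        have hadj : N.Adj b (partnerFn N hN b) := partnerFn_adj hbv
        rw [Sym2.eq_iff] at hbe
        rcases hbe with ⟨h1, h2⟩ | ⟨h1, h2⟩
        · rw [← h1, ← h2]; exact hadj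
        · rw [← h1, ← h2]; exact hadj.symm
  have hinj : Set.InjOn (fun b => s(b, partnerFn N hN b)) (Rfin : Set V) := by
    intro b1 hb1 b2 hb2 he
    simp only [Sym2.eq_iff] at he
    obtain ⟨hb1v, hb1σ⟩ := (hRmem b1).mp (Finset.mem_coe.mp hb1)
    obtain ⟨hb2v, hb2σ⟩ := (hRmem b2).mp (Finset.mem_coe.mp hb2)
    rcases he with ⟨h1, _⟩ | ⟨h1, h2⟩
    · exact h1
    · exfalso
      have hadj2 : N.Adj b2 (partnerFn N hN b2) := partnerFn_adj hb2v
      have hσ2 : partnerFn N hN b2 ∈ σ := hσ.other_mem (N.adj_sub hadj2) hb2σ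
      rw [← h1] at hσ2
      exact hb1σ hσ2
  rw [himg, Set.ncard_image_of_injOn hinj, Set.ncard_coe_finset]

lemma exposed_mem_supp {σ : Set V} (hσ : IsSide G σ) (hc : C4kFree G) {M : G.Subgraph}
    (hM : IsMaximumMatching G M) {N : G.Subgraph} (hN : N.IsMatching)
    (hNcard : N.edgeSet.ncard = M.edgeSet.ncard) {u : V} (huσ : u ∉ σ)
    (huN : u ∉ N.verts) : u ∈ supp G := by
  classical
  set Lfin : Finset V := Finset.univ.filter (fun a => a ∈ N.verts ∧ a ∈ σ) with hLfin
  set Rfin : Finset V := Finset.univ.filter (fun a => a ∈ N.verts ∧ a ∉ σ) with hRfin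
  have hLmem : ∀ a, a ∈ Lfin ↔ (a ∈ N.verts ∧ a ∈ σ) := by
    intro a; simp [hLfin]
  have hRmem : ∀ a, a ∈ Rfin ↔ (a ∈ N.verts ∧ a ∉ σ) := by
    intro a; simp [hRfin]
  have huR : u ∉ Rfin := by
    intro h; exact huN ((hRmem u).mp h).1
  have hcard : Lfin.card = Rfin.card := by
    apply Finset.card_bij (fun a _ => partnerFn N hN a)
    · intro a ha
      rw [hLmem] at ha
      have hadj : N.Adj a (partnerFn N hN a) := partnerFn_adj ha.1
      rw [hRmem]
      exact ⟨N.edge_vert hadj.symm, hσ.other_not_mem (N.adj_sub hadj) ha.2⟩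
    · intro a1 ha1 a2 ha2 h
      exact partnerFn_injOn (hN := hN) ((hLmem a1).mp ha1).1 ((hLmem a2).mp ha2).1 h
    · intro b hb
      rw [hRmem] at hb
      have hadj : N.Adj b (partnerFn N hN b) := partnerFn_adj hb.1
      refine ⟨partnerFn N hN b, ?_, partnerFn_invol hb.1⟩
      rw [hLmem]
      exact ⟨N.edge_vert hadj.symm, hσ.other_mem (N.adj_sub hadj) hb.2⟩
  set Bmat : Matrix {x // x ∈ Lfin} {x // x ∈ Rfin} ℝ :=
    fun a b => (G.adjMatrix ℝ) a.1 b.1 with hBmat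
  -- injectivity of Bmat.mulVecLin
  have hinj : Function.Injective Bmat.mulVecLin := by
    rw [← LinearMap.ker_eq_bot, LinearMap.ker_eq_bot']
    intro q hq
    set y : V → ℝ := fun b => if hb : b ∈ Rfin then q ⟨b, hb⟩ else 0 with hy_def
    have hy0 : y = 0 := by
      apply matched_kernel_zero hσ hc hN y
      · intro b hb
        by_cases hbR : b ∈ Rfin
        · exact ⟨((hRmem b).mp hbR).2, ((hRmem b).mp hbR).1⟩
        · exfalso; apply hb; rw [hy_def]; simp [hbR]
      · intro a haσ haN
        have haL : a ∈ Lfin := (hLmem a).mpr ⟨haN, haσ⟩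
        have hsum : ∑ b, (G.adjMatrix ℝ) a b * y b
            = ∑ b : {x // x ∈ Rfin}, (G.adjMatrix ℝ) a b.1 * y b.1 := by
          apply sum_subtype_eq
          intro b hbR
          have : y b = 0 := by rw [hy_def]; simp [hbR]
          rw [this, mul_zero]
        rw [hsum]
        have : ∀ b : {x // x ∈ Rfin}, y b.1 = q b := by
          intro b; rw [hy_def]; simp [b.2]
        calc ∑ b : {x // x ∈ Rfin}, (G.adjMatrix ℝ) a b.1 * y b.1
            = ∑ b : {x // x ∈ Rfin}, Bmat ⟨a, haL⟩ b * q b := by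
              apply Finset.sum_congr rfl
              intro b _
              rw [this b, hBmat]
          _ = Bmat.mulVecLin q ⟨a, haL⟩ := by
              rw [Matrix.mulVecLin_apply]
              simp [Matrix.mulVec, dotProduct]
          _ = 0 := by rw [hq]; rfl
    funext b
    have h : y b.1 = 0 := by rw [hy0]; rfl
    have h2 : q b = y b.1 := by rw [hy_def]; simp [b.2]
    rw [h2, h]
    rfl
  have hsurj : Function.Surjective Bmat.mulVecLin := by
    have hfr : Module.finrank ℝ ({x // x ∈ Rfin} → ℝ)
        = Module.finrank ℝ ({x // x ∈ Lfin} → ℝ) := by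
      rw [Module.finrank_pi, Module.finrank_pi, Fintype.card_coe, Fintype.card_coe, hcard]
    exact (LinearMap.injective_iff_surjective_of_finrank_eq_finrank hfr).mp hinj
  obtain ⟨q, hq⟩ := hsurj (fun a => -((G.adjMatrix ℝ) a.1 u))
  set yh : V → ℝ := fun b => if b = u then 1 else (if hb : b ∈ Rfin then q ⟨b, hb⟩ else 0)
    with hyh_def
  have hyhu : yh u = 1 := by rw [hyh_def]; simp
  have hyh_supp : ∀ b, yh b ≠ 0 → b = u ∨ b ∈ Rfin := by
    intro b hb
    by_cases hbu : b = u
    · exact Or.inl hbu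
    · by_cases hbR : b ∈ Rfin
      · exact Or.inr hbR
      · exfalso; apply hb; rw [hyh_def]; simp [hbu, hbR]
  have hyh_σ : ∀ b, yh b ≠ 0 → b ∉ σ := by
    intro b hb
    rcases hyh_supp b hb with rfl | hbR
    · exact huσ
    · exact ((hRmem b).mp hbR).2
  -- row sums over matched σ vertices vanish
  have hrow_i : ∀ a, a ∈ Lfin → ∑ b, (G.adjMatrix ℝ) a b * yh b = 0 := by
    intro a haL
    have hsplit : ∑ b, (G.adjMatrix ℝ) a b * yh b
        = ∑ b ∈ insert u Rfin, (G.adjMatrix ℝ) a b * yh b := by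
      symm
      apply Finset.sum_subset (Finset.subset_univ _)
      intro b _ hbmem
      simp only [Finset.mem_insert, not_or] at hbmem
      have : yh b = 0 := by
        by_contra hb
        rcases hyh_supp b hb with h | h
        · exact hbmem.1 h
        · exact hbmem.2 h
      rw [this, mul_zero]
    rw [hsplit, Finset.sum_insert huR, hyhu, mul_one]
    have hRsum : ∑ b ∈ Rfin, (G.adjMatrix ℝ) a b * yh b
        = ∑ b : {x // x ∈ Rfin}, Bmat ⟨a, haL⟩ b * q b := by
      rw [← Finset.sum_coe_sort Rfin]
      apply Finset.sum_congr rfl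
      intro b _
      have hbu : b.1 ≠ u := by
        intro h; exact huR (h ▸ b.2)
      have : yh b.1 = q b := by
        rw [hyh_def]; simp [hbu, b.2]
      rw [this, hBmat]
    rw [hRsum]
    have : ∑ b : {x // x ∈ Rfin}, Bmat ⟨a, haL⟩ b * q b = Bmat.mulVecLin q ⟨a, haL⟩ := by
      rw [Matrix.mulVecLin_apply]
      simp [Matrix.mulVec, dotProduct]
    rw [this, hq]
    ring
  -- rows outside σ vanish
  have hrow_iii : ∀ a, a ∉ σ → ∑ b, (G.adjMatrix ℝ) a b * yh b = 0 := by
    intro a haσ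
    apply Finset.sum_eq_zero
    intro b _
    by_cases hadj : G.Adj a b
    · have : b ∈ σ := hσ.other_mem hadj haσ
      have : yh b = 0 := by
        by_contra hb
        exact (hyh_σ b hb) this
      rw [this, mul_zero]
    · simp [SimpleGraph.adjMatrix_apply, hadj]
  -- rows in σ but unmatched vanish (the hard case)
  have hrow_ii : ∀ a, a ∈ σ → a ∉ N.verts → ∑ b, (G.adjMatrix ℝ) a b * yh b = 0 := by
    intro a haσ haN
    by_contra hcne
    set Tfin : Finset V := insert u Rfin with hTfin
    set σfin : Finset V := Finset.univ.filter (fun z => z ∈ σ) with hσfin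
    have hTσ : ∀ b, b ∈ Tfin → b ∉ σ := by
      intro b hb
      rw [hTfin, Finset.mem_insert] at hb
      rcases hb with rfl | hb
      · exact huσ
      · exact ((hRmem b).mp hb).2
    -- supported vectors from coefficients
    have hind : LinearIndependent ℝ (fun b : {x // x ∈ Tfin} => colS G σfin b.1) := by
      rw [Fintype.linearIndependent_iff]
      intro g hg
      set yd : V → ℝ := fun b => if hb : b ∈ Tfin then g ⟨b, hb⟩ else 0 with hyd_def
      have hydrow : ∀ a', a' ∈ σ → ∑ b, (G.adjMatrix ℝ) a' b * yd b = 0 := by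
        intro a' ha'
        have ha'f : a' ∈ σfin := by rw [hσfin]; simp [ha']
        have hcomb := congrFun hg a'
        simp only [Finset.sum_apply, Pi.smul_apply, smul_eq_mul, Pi.zero_apply] at hcomb
        have hsum : ∑ b, (G.adjMatrix ℝ) a' b * yd b
            = ∑ b : {x // x ∈ Tfin}, (G.adjMatrix ℝ) a' b.1 * yd b.1 := by
          apply sum_subtype_eq
          intro b hbT
          have : yd b = 0 := by rw [hyd_def]; simp [hbT]
          rw [this, mul_zero]
        rw [hsum, ← hcomb]
        apply Finset.sum_congr rfl
        intro b _
        rw [colS_apply_of_mem ha'f]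
        have : yd b.1 = g b := by rw [hyd_def]; simp [b.2]
        rw [this]
        ring
      -- e := yd - (yd u) • yh
      set e : V → ℝ := fun b => yd b - (yd u) * yh b with he_def
      have heu : e u = 0 := by
        show yd u - (yd u) * yh u = 0
        rw [hyhu]; ring
      have he0 : e = 0 := by
        apply matched_kernel_zero hσ hc hN e
        · intro b hb
          have hbRf : b ∈ Rfin := by
            by_cases hbu : b = u
            · exfalso; rw [hbu] at hb; exact hb heu
            · by_cases hbT : b ∈ Tfin
              · rw [hTfin, Finset.mem_insert] at hbT
                rcases hbT with h | h
                · exact absurd h hbu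
                · exact h
              · exfalso
                apply hb
                have h1 : yd b = 0 := by rw [hyd_def]; simp [hbT]
                have h2 : yh b = 0 := by
                  by_contra hyhb
                  rcases hyh_supp b hyhb with h | h
                  · exact hbu h
                  · exact hbT (by rw [hTfin]; exact Finset.mem_insert_of_mem h)
                show yd b - (yd u) * yh b = 0
                rw [h1, h2]
                ring
          exact ⟨((hRmem b).mp hbRf).2, ((hRmem b).mp hbRf).1⟩
        · intro a' ha'σ ha'N
          have ha'L : a' ∈ Lfin := (hLmem a').mpr ⟨ha'N, ha'σ⟩
          have hexp : ∑ b, (G.adjMatrix ℝ) a' b * e b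
              = (∑ b, (G.adjMatrix ℝ) a' b * yd b)
                - (yd u) * (∑ b, (G.adjMatrix ℝ) a' b * yh b) := by
            rw [Finset.mul_sum, ← Finset.sum_sub_distrib]
            apply Finset.sum_congr rfl
            intro b _
            rw [he_def]
            ring
          rw [hexp, hydrow a' ha'σ, hrow_i a' ha'L, mul_zero, sub_zero]
      -- conclude yd u = 0 and hence g = 0
      have hydu : yd u = 0 := by
        have hrowa : ∑ b, (G.adjMatrix ℝ) a b * yd b = 0 := hydrow a haσ
        have : ∑ b, (G.adjMatrix ℝ) a b * yd b
            = (yd u) * ∑ b, (G.adjMatrix ℝ) a b * yh b := by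
          rw [Finset.mul_sum]
          apply Finset.sum_congr rfl
          intro b _
          have hb0 : yd b - (yd u) * yh b = 0 := by
            have : e b = 0 := by rw [he0]; rfl
            exact this
          have : yd b = yd u * yh b := by linarith
          rw [this]
          ring
        rw [this] at hrowa
        rcases mul_eq_zero.mp hrowa with h | h
        · exact h
        · exact absurd h hcne
      intro i
      have hb0 : yd i.1 - (yd u) * yh i.1 = 0 := by
        have : e i.1 = 0 := by rw [he0]; rfl
        exact this
      have hydi : yd i.1 = 0 := by rw [hydu] at hb0; linarith
      have h2 : yd i.1 = g i := by rw [hyd_def]; simp [i.2]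
      rw [← h2, hydi]
    -- T2 yields a matching that is too large
    obtain ⟨N₃, hN₃, hN₃card, _⟩ := indep_to_matching hσ σfin Tfin
      (by intro z hz; rw [hσfin] at hz; simpa using hz) hTσ hind
    have hT : Tfin.card = Rfin.card + 1 := Finset.card_insert_of_notMem huR
    have hRN : Rfin.card = N.edgeSet.ncard := matching_side_card hσ hN
    have := hM.2 N₃ hN₃
    rw [hN₃card, hT, hRN, hNcard] at this
    omega
  -- assemble the null vector
  have hnull : yh ∈ nullSet G := by
    show (G.adjMatrix ℝ).mulVec yh = 0
    funext a
    rw [Pi.zero_apply, mulVec_row]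
    by_cases haσ : a ∈ σ
    · by_cases haN : a ∈ N.verts
      · exact hrow_i a ((hLmem a).mpr ⟨haN, haσ⟩)
      · exact hrow_ii a haσ haN
    · exact hrow_iii a haσ
  exact ⟨yh, hnull, by rw [hyhu]; norm_num⟩

end P2

section P4

variable {G : SimpleGraph V}

lemma partner_mem {N : G.Subgraph} {hN : N.IsMatching} {x : V} (hx : x ∈ N.verts) :
    partnerFn N hN x ∈ N.verts := N.edge_vert (N.adj_symm (partnerFn_adj hx))

lemma matched_to_supp_side {σ : Set V} (hσ : IsSide G σ) (hc : C4kFree G) {M : G.Subgraph}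
    (hM : IsMaximumMatching G M) {v w u : V} (hvw : M.Adj v w) (hvu : G.Adj v u)
    (hvσ : v ∈ σ) (hu : u ∈ supp G) : w ∈ supp G := by
  classical
  by_cases huw : u = w
  · exact huw ▸ hu
  have hMm : M.IsMatching := hM.1
  have huσ : u ∉ σ := hσ.other_not_mem hvu hvσ
  have hwσ : w ∉ σ := hσ.other_not_mem (M.adj_sub hvw) hvσ
  have hwM : w ∈ M.verts := M.edge_vert hvw.symm
  have hMpv : partnerFn M hMm v = w := partnerFn_eq hvw
  have hMpw : partnerFn M hMm w = v := partnerFn_eq hvw.symm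
  obtain ⟨M₁, hM₁, hM₁card, hM₁u, _⟩ := supp_missable hσ hc hMm hu huσ
  -- the walk
  set cont : V → Prop := fun x => x ∈ M.verts ∧ partnerFn M hMm x ≠ v ∧
    partnerFn M hMm x ∈ M₁.verts with hcont_def
  set nxt : V → V := fun x => if cont x then partnerFn M₁ hM₁ (partnerFn M hMm x) else x
    with hnxt_def
  set r : ℕ → V := fun n => nxt^[n] u with hr_def
  have hr0 : r 0 = u := rfl
  have hrsucc : ∀ n, r (n+1) = nxt (r n) := fun n => Function.iterate_succ_apply' nxt n u
  have hstepeq : ∀ n, cont (r n) → r (n+1) = partnerFn M₁ hM₁ (partnerFn M hMm (r n)) := by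
    intro n hcn
    rw [hrsucc n]
    show (if cont (r n) then partnerFn M₁ hM₁ (partnerFn M hMm (r n)) else r n) = _
    rw [if_pos hcn]
  have hstepmem : ∀ n, cont (r n) → r (n+1) ∈ M₁.verts := by
    intro n hcn
    rw [hstepeq n hcn]
    exact partner_mem hcn.2.2
  -- sides
  have hrσ : ∀ n, r n ∉ σ := by
    intro n
    induction n with
    | zero => rw [hr0]; exact huσ
    | succ n ih =>
      by_cases hcn : cont (r n)
      · have hlσ : partnerFn M hMm (r n) ∈ σ :=
          hσ.other_mem (M.adj_sub (partnerFn_adj hcn.1)) ih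
        rw [hstepeq n hcn]
        exact hσ.other_not_mem (M₁.adj_sub (partnerFn_adj hcn.2.2)) hlσ
      · rw [hrsucc n]
        have heq : nxt (r n) = r n := by
          show (if cont (r n) then partnerFn M₁ hM₁ (partnerFn M hMm (r n)) else r n) = r n
          rw [if_neg hcn]
        rw [heq]
        exact ih
  -- distinctness
  have hinj : ∀ t1 t2, t1 < t2 → (∀ s, s < t2 → cont (r s)) → r t1 = r t2 → False := by
    intro t1
    induction t1 with
    | zero =>
      intro t2 ht2 hcall heq
      have h1 : r t2 ∈ M₁.verts := by
        obtain ⟨t2', rfl⟩ : ∃ t2', t2 = t2' + 1 := ⟨t2 - 1, by omega⟩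
        exact hstepmem t2' (hcall t2' (by omega))
      rw [hr0] at heq
      rw [← heq] at h1
      exact hM₁u h1
    | succ t1' ih =>
      intro t2 ht2 hcall heq
      obtain ⟨t2', rfl⟩ : ∃ t2', t2 = t2' + 1 := ⟨t2 - 1, by omega⟩
      have hc1 : cont (r t1') := hcall t1' (by omega)
      have hc2 : cont (r t2') := hcall t2' (by omega)
      rw [hstepeq t1' hc1, hstepeq t2' hc2] at heq
      have hl : partnerFn M hMm (r t1') = partnerFn M hMm (r t2') :=
        partnerFn_injOn (hN := hM₁) hc1.2.2 hc2.2.2 heq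
      have hr' : r t1' = r t2' := partnerFn_injOn (hN := hMm) hc1.1 hc2.1 hl
      exact ih t2' (by omega) (fun s hs => hcall s (by omega)) hr'
  -- termination
  have hterm : ∃ n, ¬ cont (r n) := by
    by_contra hall
    push_neg at hall
    obtain ⟨i, j, hij, h⟩ := Finite.exists_ne_map_eq_of_infinite r
    rcases Nat.lt_or_ge i j with hl | hg
    · exact hinj i j hl (fun s _ => hall s) h
    · exact hinj j i (Nat.lt_of_le_of_ne hg (Ne.symm hij)) (fun s _ => hall s) h.symm
  set T := Nat.find hterm with hT_def
  have hstop : ¬ cont (r T) := Nat.find_spec hterm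
  have hcontb : ∀ n, n < T → cont (r n) := by
    intro n hn
    by_contra hnc
    exact Nat.find_min hterm hn hnc
  have hdist : ∀ i j, i < j → j ≤ T → r i ≠ r j := by
    intro i j hij hjT heq
    exact hinj i j hij (fun s hs => hcontb s (by omega)) heq
  have hrw : ∀ t, t < T → r t ≠ w := by
    intro t ht heq
    have := (hcontb t ht).2.1
    rw [heq, hMpw] at this
    exact this rfl
  have hrv : ∀ t, r t ≠ v := by
    intro t heq
    exact (heq ▸ hrσ t) hvσ
  -- forward sweep: transform M₁ to miss r t
  have fwd : ∀ t, t ≤ T → ∃ B : G.Subgraph, B.IsMatching ∧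
      B.edgeSet.ncard = M₁.edgeSet.ncard ∧ r t ∉ B.verts ∧
      (∀ s, t < s → s ≤ T → B.Adj (partnerFn M hMm (r (s-1))) (r s)) ∧
      B.verts ⊆ M₁.verts ∪ {x | ∃ s, s < t ∧ x = r s} := by
    intro t
    induction t with
    | zero =>
      intro _
      refine ⟨M₁, hM₁, rfl, by rw [hr0]; exact hM₁u, ?_, fun x hx => Or.inl hx⟩
      intro s hs hsT
      have hc : cont (r (s-1)) := hcontb (s-1) (by omega)
      have : r s = partnerFn M₁ hM₁ (partnerFn M hMm (r (s-1))) := by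
        rw [show s = (s-1)+1 by omega] at *
        exact hstepeq (s-1) hc
      rw [this]
      exact partnerFn_adj hc.2.2
    | succ t ih =>
      intro htT
      obtain ⟨B, hB, hBcard, hBexp, hBedges, hBverts⟩ := ih (by omega)
      have hct : cont (r t) := hcontb t (by omega)
      set a := partnerFn M hMm (r t) with ha_def
      set b := r (t+1) with hb_def
      set p := r t with hp_def
      have hBab : B.Adj a b := hBedges (t+1) (by omega) (by omega)
      have hGap : G.Adj a p := (M.adj_sub (partnerFn_adj hct.1)).symm
      have haσ : a ∈ σ := hσ.other_mem (M.adj_sub (partnerFn_adj hct.1)) (hrσ t)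
      have hbp : b ≠ p := fun h => hdist t (t+1) (by omega) (by omega) h.symm
      refine ⟨swapSub B a b p hGap, swapSub_isMatching hB hBab hBexp hGap, ?_, ?_, ?_, ?_⟩
      · rw [swapSub_ncard hB hBab hBexp hGap, hBcard]
      · rw [swapSub_verts hB hBab hBexp hGap]
        intro hmem
        rcases hmem with ⟨_, hbb⟩ | hpp
        · exact hbb rfl
        · exact hbp hpp
      · intro s hs hsT
        have hx1 : partnerFn M hMm (r (s-1)) ≠ a := by
          intro h
          have := partnerFn_injOn (hN := hMm) (hcontb (s-1) (by omega)).1 hct.1 h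
          exact hdist t (s-1) (by omega) (by omega) this.symm
        have hx2 : partnerFn M hMm (r (s-1)) ≠ b := by
          intro h
          have hsσ : partnerFn M hMm (r (s-1)) ∈ σ :=
            hσ.other_mem (M.adj_sub (partnerFn_adj (hcontb (s-1) (by omega)).1)) (hrσ (s-1))
          rw [h, hb_def] at hsσ
          exact hrσ (t+1) hsσ
        have hx3 : partnerFn M hMm (r (s-1)) ≠ p := by
          intro h
          have hsσ : partnerFn M hMm (r (s-1)) ∈ σ :=
            hσ.other_mem (M.adj_sub (partnerFn_adj (hcontb (s-1) (by omega)).1)) (hrσ (s-1))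
          rw [h, hp_def] at hsσ
          exact hrσ t hsσ
        have hy1 : r s ≠ a := by
          intro h
          exact (h ▸ hrσ s) haσ
        have hy2 : r s ≠ b := by
          intro h
          exact hdist (t+1) s (by omega) (by omega) h.symm
        have hy3 : r s ≠ p := by
          intro h
          exact hdist t s (by omega) (by omega) h.symm
        rw [swapSub_adj_untouched hBab hBexp hGap hx1 hx2 hx3 hy1 hy2 hy3]
        exact hBedges s (by omega) hsT
      · rw [swapSub_verts hB hBab hBexp hGap]
        intro x hx
        rcases hx with ⟨hx, _⟩ | hx
        · rcases hBverts hx with h | ⟨s, hs, hxe⟩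
          · exact Or.inl h
          · exact Or.inr ⟨s, by omega, hxe⟩
        · exact Or.inr ⟨t, by omega, hx⟩
  -- case analysis at the stop
  have hstop' : ¬(r T ∈ M.verts ∧ partnerFn M hMm (r T) ≠ v ∧
      partnerFn M hMm (r T) ∈ M₁.verts) := hstop
  push_neg at hstop'
  by_cases hα : r T ∈ M.verts
  · rcases Classical.em (partnerFn M hMm (r T) = v) with hγ | hβ
    · -- γ : r T = w; the forward sweep gives a matching missing w
      have hrTw : r T = w := by
        have : M.Adj v (r T) := by
          rw [← hγ]
          exact M.adj_symm (partnerFn_adj hα)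
        exact adj_right_unique (hN := hMm) this hvw
      obtain ⟨B, hB, hBcard, hBexp, _, _⟩ := fwd T (le_refl T)
      rw [hrTw] at hBexp
      exact exposed_mem_supp hσ hc hM hB (by rw [hBcard, hM₁card]) hwσ hBexp
    · -- β : partner of r T exists but is M₁-exposed: contradiction
      exfalso
      have hβ2 : partnerFn M hMm (r T) ∉ M₁.verts := hstop' hα hβ
      obtain ⟨B, hB, hBcard, hBexp, _, hBverts⟩ := fwd T (le_refl T)
      have hlB : partnerFn M hMm (r T) ∉ B.verts := by
        intro hmem
        rcases hBverts hmem with h | ⟨s, hs, hxe⟩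
        · exact hβ2 h
        · have hsσ : partnerFn M hMm (r T) ∈ σ :=
            hσ.other_mem (M.adj_sub (partnerFn_adj hα)) (hrσ T)
          rw [hxe] at hsσ
          exact hrσ s hsσ
      obtain ⟨N₃, hN₃, hN₃card⟩ := augment_matching hB
        (M.adj_sub (partnerFn_adj hα)).symm hlB hBexp
      have := hM.2 N₃ hN₃
      rw [hN₃card, hBcard, hM₁card] at this
      omega
  · -- α : r T is M-exposed; backward sweep on M
    have bwd : ∀ s, s ≤ T → ∃ B : G.Subgraph, B.IsMatching ∧
        B.edgeSet.ncard = M.edgeSet.ncard ∧ r (T - s) ∉ B.verts ∧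
        (∀ t, t < T - s → B.Adj (r t) (partnerFn M hMm (r t))) ∧ B.Adj v w := by
      intro s
      induction s with
      | zero =>
        intro _
        refine ⟨M, hMm, rfl, by simpa using hα, ?_, hvw⟩
        intro t ht
        exact partnerFn_adj (hcontb t (by omega)).1
      | succ s ih =>
        intro hsT
        obtain ⟨B, hB, hBcard, hBexp, hBedges, hBvw⟩ := ih (by omega)
        set t₀ := T - s - 1 with ht₀_def
        have ht₀T : t₀ < T := by omega
        have hct₀ : cont (r t₀) := hcontb t₀ ht₀T
        have hks : T - s = t₀ + 1 := by omega
        set a := partnerFn M hMm (r t₀) with ha_def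
        set b := r t₀ with hb_def
        set p := r (T - s) with hp_def
        have hBab : B.Adj a b := (hBedges t₀ (by omega)).symm
        have hGap : G.Adj a p := by
          have : p = partnerFn M₁ hM₁ a := by
            rw [hp_def, hks, ha_def]
            exact hstepeq t₀ hct₀
          rw [this]
          exact M₁.adj_sub (partnerFn_adj hct₀.2.2)
        have haσ : a ∈ σ := hσ.other_mem (M.adj_sub (partnerFn_adj hct₀.1)) (hrσ t₀)
        have hbp : b ≠ p := by
          rw [hb_def, hp_def]
          exact hdist t₀ (T-s) (by omega) (by omega)
        have hwp : w ≠ p := by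
          rw [hp_def]
          intro h
          rcases Nat.lt_or_ge (T - s) T with hlt | hge
          · exact hrw (T-s) hlt h.symm
          · have : T - s = T := by omega
            rw [this] at h
            rw [← h] at hα
            exact hα hwM
        refine ⟨swapSub B a b p hGap, swapSub_isMatching hB hBab hBexp hGap, ?_, ?_, ?_, ?_⟩
        · rw [swapSub_ncard hB hBab hBexp hGap, hBcard]
        · rw [swapSub_verts hB hBab hBexp hGap]
          rw [show T - (s+1) = t₀ by omega]
          intro hmem
          rcases hmem with ⟨_, hbb⟩ | hpp
          · exact hbb rfl
          · exact hbp hpp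
        · intro t ht
          have htt₀ : t < t₀ := by omega
          have hx1 : r t ≠ a := by
            intro h
            exact (h ▸ hrσ t) haσ
          have hx2 : r t ≠ b := hdist t t₀ htt₀ (by omega)
          have hx3 : r t ≠ p := hdist t (T-s) (by omega) (by omega)
          have hy1 : partnerFn M hMm (r t) ≠ a := by
            intro h
            have := partnerFn_injOn (hN := hMm) (hcontb t (by omega)).1 hct₀.1 h
            exact hdist t t₀ htt₀ (by omega) this
          have hy2 : partnerFn M hMm (r t) ≠ b := by
            intro h
            have hsσ : partnerFn M hMm (r t) ∈ σ :=
              hσ.other_mem (M.adj_sub (partnerFn_adj (hcontb t (by omega)).1)) (hrσ t)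
            rw [h, hb_def] at hsσ
            exact hrσ t₀ hsσ
          have hy3 : partnerFn M hMm (r t) ≠ p := by
            intro h
            have hsσ : partnerFn M hMm (r t) ∈ σ :=
              hσ.other_mem (M.adj_sub (partnerFn_adj (hcontb t (by omega)).1)) (hrσ t)
            rw [h, hp_def] at hsσ
            exact hrσ (T-s) hsσ
          rw [swapSub_adj_untouched hBab hBexp hGap hx1 hx2 hx3 hy1 hy2 hy3]
          exact hBedges t (by omega)
        · have hv1 : v ≠ a := by
            intro h
            have : r t₀ = w := by
              have := partnerFn_invol (hN := hMm) hct₀.1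
              rw [ha_def] at h
              rw [← h] at this
              rw [hMpv] at this
              exact this.symm
            exact hrw t₀ ht₀T this
          have hv2 : v ≠ b := by
            intro h
            rw [hb_def] at h
            exact (hrσ t₀) (h ▸ hvσ)
          have hv3 : v ≠ p := by
            intro h
            rw [hp_def] at h
            exact (hrσ (T-s)) (h ▸ hvσ)
          have hw1 : w ≠ a := by
            intro h
            exact (h ▸ hwσ) haσ
          have hw2 : w ≠ b := by
            rw [hb_def]
            intro h
            exact hrw t₀ ht₀T h.symm
          rw [swapSub_adj_untouched hBab hBexp hGap hv1 hv2 hv3 hw1 hw2 hwp]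
          exact hBvw
    obtain ⟨B, hB, hBcard, hBexp, _, hBvw⟩ := bwd T (le_refl T)
    rw [Nat.sub_self, hr0] at hBexp
    -- final swap : free w by matching v to u
    have hwB : w ∉ (swapSub B v w u hvu).verts := by
      rw [swapSub_verts hB hBvw hBexp hvu]
      intro hmem
      rcases hmem with ⟨_, hww⟩ | hwu
      · exact hww rfl
      · exact huw hwu.symm
    exact exposed_mem_supp hσ hc hM (swapSub_isMatching hB hBvw hBexp hvu)
      (by rw [swapSub_ncard hB hBvw hBexp hvu, hBcard]) hwσ hwB

end P4

section Final

variable {G : SimpleGraph V}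

lemma stmt10_aux (hb : IsBipartite G) (hc : C4kFree G)
    (M : G.Subgraph) (hM : IsMaximumMatching G M) (v : V) (hv : v ∈ core G) :
    ∃ w : V, w ∈ supp G ∧ M.Adj v w := by
  obtain ⟨u, hu, hvu⟩ := hv
  obtain ⟨s, hs⟩ := hb
  have hside : IsSide G s := hs
  -- choose the side containing v
  obtain ⟨σ, hσ, hvσ⟩ : ∃ σ : Set V, IsSide G σ ∧ v ∈ σ := by
    by_cases hvs : v ∈ s
    · exact ⟨s, hside, hvs⟩
    · exact ⟨sᶜ, hside.compl, by simpa using hvs⟩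
  -- v is matched
  have hvM : v ∈ M.verts := by
    by_contra hvM
    have hvσc : v ∉ σᶜ := by simpa using hvσ
    have hvsupp : v ∈ supp G := exposed_mem_supp hσ.compl hc hM hM.1 rfl hvσc hvM
    exact no_adj_supp ⟨s, hs⟩ hc hM hvsupp hu hvu
  set w := partnerFn M hM.1 v with hw_def
  have hvw : M.Adj v w := partnerFn_adj hvM
  exact ⟨w, matched_to_supp_side hσ hc hM hvw hvu hvσ hu, hvw⟩

end Final


/-- every core vertex is matched by a maximum matching to a support vertex. -/
theorem stmt10 (G : SimpleGraph V) (hb : IsBipartite G) (hc : C4kFree G)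
    (M : G.Subgraph) (hM : IsMaximumMatching G M) (v : V) (hv : v ∈ core G) :
    ∃ w : V, w ∈ supp G ∧ M.Adj v w := by
  exact stmt10_aux hb hc M hM v hv

end C4kPaper
end

section
/- Let G be a C_{4k}-free bipartite graph and M a maximum matching. Then every vertex of Npart(G) is saturated by M and matched to another vertex of Npart(G); in particular, the subgraph of G induced by Npart(G) has a perfect matching. -/
open scoped Classical

namespace C4kPaper

open SimpleGraph

variable {V : Type*} [Fintype V] [DecidableEq V]

section WalkHelpers
set_option linter.unusedSectionVars false

open SimpleGraph Walk

variable {V : Type*} [Fintype V] [DecidableEq V] {G : SimpleGraph V}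

lemma getVert_mem_support {u v : V} (p : G.Walk u v) {i : ℕ} (hi : i ≤ p.length) :
    p.getVert i ∈ p.support :=
  Walk.mem_support_iff_exists_getVert.2 ⟨i, rfl, hi⟩

lemma path_getVert_inj {u v : V} {p : G.Walk u v} (hp : p.IsPath) :
    ∀ {i j : ℕ}, i ≤ p.length → j ≤ p.length → p.getVert i = p.getVert j → i = j := by
  induction p with
  | nil => intro i j hi hj _; simp only [Walk.length_nil, Nat.le_zero] at hi hj; omega
  | cons h q ih =>
    intro i j hi hj hij
    rw [Walk.isPath_def, Walk.support_cons, List.nodup_cons] at hp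
    match i, j with
    | 0, 0 => rfl
    | 0, (j+1) =>
      exfalso
      rw [Walk.getVert_zero, Walk.getVert_cons_succ] at hij
      exact hp.1 (hij ▸ getVert_mem_support q (by simpa using hj))
    | (i+1), 0 =>
      exfalso
      rw [Walk.getVert_zero, Walk.getVert_cons_succ] at hij
      exact hp.1 (hij ▸ getVert_mem_support q (by simpa using hi))
    | (i+1), (j+1) =>
      rw [Walk.getVert_cons_succ, Walk.getVert_cons_succ] at hij
      have := ih (Walk.isPath_def _ |>.2 hp.2) (by simpa using hi) (by simpa using hj) hij
      omega

lemma getVert_concat' {u v w : V} (p : G.Walk u v) (h : G.Adj v w) {i : ℕ} :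
    (p.concat h).getVert i = if i ≤ p.length then p.getVert i else w := by
  rw [Walk.concat_eq_append, Walk.getVert_append]
  split_ifs with h1 h2 h2
  · rfl
  · omega
  · have : i = p.length := le_antisymm h2 (not_lt.1 h1)
    subst this
    simp [Walk.getVert_zero, Walk.getVert_length]
  · have : i - p.length = (i - p.length - 1) + 1 := by omega
    rw [this]
    simp [Walk.getVert_cons_succ, Walk.getVert_of_length_le]

lemma edges_index {u v : V} (p : G.Walk u v) {e : Sym2 V} (he : e ∈ p.edges) :
    ∃ j, j < p.length ∧ e = s(p.getVert j, p.getVert (j+1)) := by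
  induction p with
  | nil => simp at he
  | cons h q ih =>
    rw [Walk.edges_cons, List.mem_cons] at he
    rcases he with he | he
    · exact ⟨0, by simp, by simpa [Walk.getVert_zero, Walk.getVert_cons_succ] using he⟩
    · obtain ⟨j, hj, hje⟩ := ih he
      exact ⟨j + 1, by simp [Walk.length_cons]; omega,
        by simpa [Walk.getVert_cons_succ] using hje⟩

lemma index_edges {u v : V} (p : G.Walk u v) {j : ℕ} (hj : j < p.length) :
    s(p.getVert j, p.getVert (j+1)) ∈ p.edges := by
  induction p generalizing j with
  | nil => simp at hj
  | cons h q ih =>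
    match j with
    | 0 => simp [Walk.getVert_zero, Walk.getVert_cons_succ, Walk.edges_cons]
    | (j+1) =>
      rw [Walk.getVert_cons_succ, Walk.getVert_cons_succ, Walk.edges_cons]
      exact List.mem_cons_of_mem _ (ih (by simpa [Walk.length_cons] using hj))

lemma bipartite_side {s : Set V} (hs : ∀ ⦃a b : V⦄, G.Adj a b → (a ∈ s ↔ b ∉ s))
    {u v : V} (p : G.Walk u v) : ∀ {i : ℕ}, i ≤ p.length →
    (p.getVert i ∈ s ↔ (u ∈ s ↔ Even i)) := by
  induction p with
  | nil => intro i hi; simp_all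
  | cons h q ih =>
    intro i hi
    match i with
    | 0 => simp
    | (i+1) =>
      rw [Walk.getVert_cons_succ]
      have h1 := ih (by simpa using hi : i ≤ q.length)
      have h2 := hs h
      have h3 : Even (i+1) ↔ ¬ Even i := Nat.even_add_one
      tauto

lemma takeUntil_getVert_eq {u v y : V} (p : G.Walk u v) (hy : y ∈ p.support) :
    ∀ {i : ℕ}, i ≤ (p.takeUntil y hy).length →
      (p.takeUntil y hy).getVert i = p.getVert i := by
  intro i hi
  conv_rhs => rw [← p.take_spec hy]
  rw [Walk.getVert_append]
  rcases lt_or_eq_of_le hi with hi' | hi'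
  · simp [hi']
  · subst hi'
    simp [Walk.getVert_length, Walk.getVert_zero]

lemma takeUntil_length_of_getVert {u v y : V} {p : G.Walk u v} (hp : p.IsPath)
    {k : ℕ} (hk : k ≤ p.length) (hky : p.getVert k = y) (hy : y ∈ p.support) :
    (p.takeUntil y hy).length = k := by
  have h1 : (p.takeUntil y hy).length ≤ p.length := p.length_takeUntil_le hy
  have h2 : p.getVert (p.takeUntil y hy).length = y := by
    rw [← takeUntil_getVert_eq p hy (le_refl _)]
    exact Walk.getVert_length _
  exact path_getVert_inj hp h1 hk (h2.trans hky.symm)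

end WalkHelpers
section Flip
set_option linter.unusedSectionVars false

open SimpleGraph Walk

variable {V : Type*} [Fintype V] [DecidableEq V] {G : SimpleGraph V}

lemma card_filter_odd_range (n : ℕ) :
    ((Finset.range n).filter (fun j => Odd j)).card = n / 2 := by
  induction n with
  | zero => simp
  | succ n ih =>
    rw [Finset.range_add_one, Finset.filter_insert]
    rcases Nat.even_or_odd n with he | ho
    · rw [if_neg (by simpa [Nat.odd_iff, Nat.even_iff] using he)]
      rw [ih]; rw [Nat.even_iff] at he; omega
    · rw [if_pos ho, Finset.card_insert_of_notMem (by simp)]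
      rw [ih]; rw [Nat.odd_iff] at ho; omega

lemma card_filter_even_range (n : ℕ) :
    ((Finset.range n).filter (fun j => Even j)).card = (n + 1) / 2 := by
  induction n with
  | zero => simp
  | succ n ih =>
    rw [Finset.range_add_one, Finset.filter_insert]
    rcases Nat.even_or_odd n with he | ho
    · rw [if_pos he, Finset.card_insert_of_notMem (by simp)]
      rw [ih]; rw [Nat.even_iff] at he; omega
    · rw [if_neg (by simpa [Nat.odd_iff, Nat.even_iff] using ho)]
      rw [ih]; rw [Nat.odd_iff] at ho; omega

/-- The set of edges of a walk, as indexed pairs. -/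
def pEdge {u v : V} (p : G.Walk u v) (e : Sym2 V) : Prop :=
  ∃ j, j < p.length ∧ e = s(p.getVert j, p.getVert (j+1))

lemma pEdge_mem_support {u v x y : V} {p : G.Walk u v} (h : pEdge p s(x,y)) :
    x ∈ p.support := by
  obtain ⟨j, hj, hje⟩ := h
  rw [Sym2.eq_iff] at hje
  rcases hje with ⟨h1, _⟩ | ⟨h1, _⟩
  · exact h1 ▸ getVert_mem_support p hj.le
  · exact h1 ▸ getVert_mem_support p (by omega)

/-- Flipping a matching along an alternating path starting at an unsaturated vertex. -/
lemma flip_matching (G : SimpleGraph V) (M : G.Subgraph) (hM : M.IsMatching)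
    {a b : V} (p : G.Walk a b) (hp : p.IsPath) (ha : a ∉ M.verts)
    (halt : MAltWalk G M p) (hbu : Odd p.length → b ∉ M.verts) :
    ∃ M' : G.Subgraph, M'.IsMatching ∧
      (∀ x y : V, M'.Adj x y ↔
        ((M.Adj x y ∧ ¬ pEdge p s(x,y)) ∨ (¬ M.Adj x y ∧ pEdge p s(x,y)))) ∧
      (Even p.length → b ∉ M'.verts) ∧
      M'.edgeSet.ncard + p.length / 2 = M.edgeSet.ncard + (p.length + 1) / 2 := by
  classical
  set n := p.length with hn
  have hgv : ∀ {i j : ℕ}, i ≤ p.length → j ≤ p.length → p.getVert i = p.getVert j → i = j :=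
    path_getVert_inj hp
  -- the flipped adjacency
  set A : V → V → Prop := fun x y =>
    (M.Adj x y ∧ ¬ pEdge p s(x,y)) ∨ (¬ M.Adj x y ∧ pEdge p s(x,y)) with hA
  have hAsymm : ∀ x y, A x y → A y x := by
    intro x y h
    have hsw : s(y,x) = s(x,y) := Sym2.eq_swap
    rcases h with ⟨h1, h2⟩ | ⟨h1, h2⟩
    · exact Or.inl ⟨h1.symm, by rw [hsw]; exact h2⟩
    · exact Or.inr ⟨fun hc => h1 hc.symm, by rw [hsw]; exact h2⟩
  have hAG : ∀ x y, A x y → G.Adj x y := by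
    intro x y h
    rcases h with ⟨h1, _⟩ | ⟨h1, h2⟩
    · exact M.adj_sub h1
    · obtain ⟨j, hj, hje⟩ := h2
      have := p.adj_getVert_succ hj
      rw [Sym2.eq_iff] at hje
      rcases hje with ⟨e1, e2⟩ | ⟨e1, e2⟩
      · rw [e1, e2]; exact this
      · rw [e1, e2]; exact this.symm
  set M' : G.Subgraph :=
    { verts := {x | ∃ y, A x y}
      Adj := A
      adj_sub := fun h => hAG _ _ h
      edge_vert := fun h => ⟨_, h⟩
      symm := ⟨fun x y h => hAsymm x y h⟩ } with hM'
  -- key case analysis: the partner of a path vertex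
  -- case: i even = n: no partner
  have hnopartner : ∀ i, i ≤ n → Even i → i = n → ∀ y, ¬ A (p.getVert i) y := by
    intro i hi hie hieq y hy
    subst hieq
    rcases hy with ⟨h1, h2⟩ | ⟨h1, h2⟩
    · -- M-edge at p_n; its partner is p_{n-1} if n > 0, giving a path edge
      rcases Nat.eq_zero_or_pos n with h0 | h0
      · apply ha
        have : p.getVert n = a := by rw [h0, Walk.getVert_zero]
        exact this ▸ M.edge_vert h1
      · have hodd : Odd (n - 1) := by
          rcases hie with ⟨k, hk⟩; exact ⟨k - 1, by omega⟩
        have hM1 : M.Adj (p.getVert (n-1)) (p.getVert n) := by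
          have := (halt (n-1) (by omega)).2 hodd
          have hee : n - 1 + 1 = n := by omega
          rwa [hee] at this
        have huniq := hM (M.edge_vert h1)
        obtain ⟨w, hw, hwu⟩ := huniq
        have e1 : y = w := hwu _ h1
        have e2 : p.getVert (n-1) = w := hwu _ hM1.symm
        apply h2
        have hee : n - 1 + 1 = n := by omega
        refine ⟨n - 1, by omega, ?_⟩
        rw [hee, e1, ← e2]
        exact Sym2.eq_swap
    · obtain ⟨j, hj, hje⟩ := h2
      rw [Sym2.eq_iff] at hje
      rcases hje with ⟨e1, _⟩ | ⟨e1, e2⟩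
      · have := hgv hi hj.le e1; omega
      · have : j + 1 = n := hgv (by omega) hi e1.symm
        have hjodd : Odd j := by rcases hie with ⟨k, hk⟩; exact ⟨k - 1, by omega⟩
        have := (halt j hj).2 hjodd
        rw [← e1, ← e2] at this
        exact h1 this.symm
  -- partner of an even-index (< n) vertex is the next one
  have heven_part : ∀ i, i < n → Even i →
      ∃! y, A (p.getVert i) y := by
    intro i hi hie
    refine ⟨p.getVert (i+1), Or.inr ⟨fun hc => ?_, ⟨i, hi, rfl⟩⟩, ?_⟩
    · rcases (halt i hi).1 hc with ⟨k,hk⟩; rcases hie with ⟨l,hl⟩; omega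
    · intro y hy
      rcases hy with ⟨h1, h2⟩ | ⟨h1, h2⟩
      · exfalso
        rcases Nat.eq_zero_or_pos i with h0 | h0
        · apply ha
          have : p.getVert i = a := by rw [h0, Walk.getVert_zero]
          exact this ▸ M.edge_vert h1
        · have hodd : Odd (i - 1) := by
            rcases hie with ⟨k, hk⟩; exact ⟨k - 1, by omega⟩
          have hM1 : M.Adj (p.getVert (i-1)) (p.getVert i) := by
            have := (halt (i-1) (by omega)).2 hodd
            have hee : i - 1 + 1 = i := by omega
            rwa [hee] at this
          obtain ⟨w, hw, hwu⟩ := hM (M.edge_vert h1)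
          have e1 : y = w := hwu _ h1
          have e2 : p.getVert (i-1) = w := hwu _ hM1.symm
          apply h2
          have hee : i - 1 + 1 = i := by omega
          refine ⟨i - 1, by omega, ?_⟩
          rw [hee, e1, ← e2]
          exact Sym2.eq_swap
      · obtain ⟨j, hj, hje⟩ := h2
        rw [Sym2.eq_iff] at hje
        rcases hje with ⟨e1, e2⟩ | ⟨e1, e2⟩
        · have : i = j := hgv (by omega) hj.le e1
          rw [e2, this]
        · exfalso
          have hji : j + 1 = i := hgv (by omega) (by omega) e1.symm
          have hjodd : Odd j := by rcases hie with ⟨k, hk⟩; exact ⟨k - 1, by omega⟩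
          have h3 := (halt j hj).2 hjodd
          rw [hji, ← e2] at h3
          exact h1 h3.symm

  -- partner of an odd-index vertex is the previous one
  have hodd_part : ∀ i, i ≤ n → Odd i →
      ∃! y, A (p.getVert i) y := by
    intro i hi hio
    have hio' : i % 2 = 1 := Nat.odd_iff.1 hio
    have hi1 : i - 1 < n := by omega
    have hie1 : i - 1 + 1 = i := by omega
    have hnM : ¬ M.Adj (p.getVert (i-1)) (p.getVert i) := by
      intro hc
      have := (halt (i-1) hi1).1 (hie1 ▸ hc)
      rcases hio with ⟨k, hk⟩; rcases this with ⟨l, hl⟩; omega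
    refine ⟨p.getVert (i-1), Or.inr ⟨fun hc => hnM (by
        have := hc.symm; rwa [] at this), ⟨i-1, hi1, by rw [hie1, Sym2.eq_swap]⟩⟩, ?_⟩
    intro y hy
    rcases hy with ⟨h1, h2⟩ | ⟨h1, h2⟩
    · exfalso
      rcases Nat.lt_or_ge i n with hin | hin
      · have hM1 : M.Adj (p.getVert i) (p.getVert (i+1)) := (halt i hin).2 hio
        obtain ⟨w, hw, hwu⟩ := hM (M.edge_vert h1)
        have e1 : y = w := hwu _ h1
        have e2 : p.getVert (i+1) = w := hwu _ hM1
        apply h2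
        exact ⟨i, hin, by rw [e1, ← e2]⟩
      · have : i = n := by omega
        apply hbu (this ▸ hio)
        have hb' : p.getVert i = b := by rw [this, hn]; exact Walk.getVert_length p
        exact hb' ▸ M.edge_vert h1
    · obtain ⟨j, hj, hje⟩ := h2
      rw [Sym2.eq_iff] at hje
      rcases hje with ⟨e1, e2⟩ | ⟨e1, e2⟩
      · exfalso
        have : i = j := hgv hi hj.le e1
        subst this
        have := (halt i hj).2 hio
        rw [← e2] at this
        exact h1 this
      · have h4 : j + 1 = i := hgv (by omega) hi e1.symm
        have h5 : j = i - 1 := by omega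
        rw [e2, h5]
  -- M' is a matching
  have hmatch : M'.IsMatching := by
    intro x hx
    obtain ⟨y0, hy0⟩ := hx
    by_cases hxs : x ∈ p.support
    · obtain ⟨i, hig, hi⟩ := Walk.mem_support_iff_exists_getVert.1 hxs
      subst hig
      rcases Nat.even_or_odd i with hie | hio
      · rcases Nat.lt_or_ge i n with hin | hin
        · exact heven_part i hin hie
        · exact absurd hy0 (hnopartner i hi hie (by omega) y0)
      · exact hodd_part i hi hio
    · have hnp : ∀ y, ¬ pEdge p s(x, y) := fun y hy => hxs (pEdge_mem_support hy)
      have hMx : M.Adj x y0 := by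
        rcases hy0 with ⟨h1, _⟩ | ⟨_, h2⟩
        · exact h1
        · exact absurd h2 (hnp y0)
      obtain ⟨w, hw, hwu⟩ := hM (M.edge_vert hMx)
      refine ⟨w, Or.inl ⟨hw, hnp w⟩, ?_⟩
      intro y hy
      rcases hy with ⟨h1, _⟩ | ⟨_, h2⟩
      · exact hwu _ h1
      · exact absurd h2 (hnp y)
  -- b is unsaturated when the length is even
  have hbv : Even n → b ∉ M'.verts := by
    intro hne hbv
    obtain ⟨y, hy⟩ := hbv
    have hb' : p.getVert n = b := by rw [hn]; exact Walk.getVert_length p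
    rw [← hb'] at hy
    exact hnopartner n le_rfl hne rfl y hy
  -- cardinality
  have hcard : M'.edgeSet.ncard + n / 2 = M.edgeSet.ncard + (n + 1) / 2 := by
    set Ed : ℕ → Sym2 V := fun j => s(p.getVert j, p.getVert (j+1)) with hEd
    have hEdinj : Set.InjOn Ed (Set.Iio n) := by
      intro i hi j hj hij
      simp only [Set.mem_Iio] at hi hj
      rw [hEd] at hij
      simp only [Sym2.eq_iff] at hij
      rcases hij with ⟨e1, _⟩ | ⟨e1, e2⟩
      · exact hgv (le_of_lt hi) (le_of_lt hj) e1
      · have h1 := hgv (le_of_lt hi) (by omega) e1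
        have h2 := hgv (by omega) (le_of_lt hj) e2
        omega
    have hEdM : ∀ j, j < n → (Ed j ∈ M.edgeSet ↔ Odd j) := by
      intro j hj
      rw [hEd]
      simp only [Subgraph.mem_edgeSet]
      exact halt j hj
    have hsplit : M'.edgeSet =
        (M.edgeSet \ (Ed '' {j | j < n ∧ Odd j})) ∪ (Ed '' {j | j < n ∧ Even j}) := by
      ext e
      induction e with
      | _ x y =>
        simp only [Subgraph.mem_edgeSet, Set.mem_union, Set.mem_diff, Set.mem_image,
          Set.mem_setOf_eq]
        constructor
        · rintro (⟨h1, h2⟩ | ⟨h1, h2⟩)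
          · left
            refine ⟨h1, ?_⟩
            rintro ⟨j, ⟨hj, _⟩, hje⟩
            exact h2 ⟨j, hj, hje.symm⟩
          · obtain ⟨j, hj, hje⟩ := h2
            right
            refine ⟨j, ⟨hj, ?_⟩, hje.symm⟩
            by_contra hje'
            have hjo : Odd j := (Nat.even_or_odd j).resolve_left hje'
            have := (halt j hj).2 hjo
            apply h1
            have : s(x,y) ∈ M.edgeSet := by rw [hje]; exact (hEdM j hj).2 hjo
            exact Subgraph.mem_edgeSet.1 this
        · rintro (⟨h1, h2⟩ | ⟨j, ⟨hj, hje⟩, hje'⟩)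
          · left
            refine ⟨h1, fun hc => h2 ?_⟩
            obtain ⟨j, hj, hje⟩ := hc
            exact ⟨j, ⟨hj, by
              have : s(x,y) ∈ M.edgeSet := Subgraph.mem_edgeSet.2 h1
              rw [hje] at this
              exact (hEdM j hj).1 this⟩, hje.symm⟩
          · right
            constructor
            · intro hc
              have : Ed j ∈ M.edgeSet := by rw [hje']; exact Subgraph.mem_edgeSet.2 hc
              have := (hEdM j hj).1 this
              rcases hje with ⟨k, hk⟩; rcases this with ⟨l, hl⟩; omega
            · exact ⟨j, hj, hje'.symm⟩
    have hOsub : Ed '' {j | j < n ∧ Odd j} ⊆ M.edgeSet := by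
      rintro e ⟨j, ⟨hj, hjo⟩, rfl⟩
      exact (hEdM j hj).2 hjo
    have hdisj : Disjoint (Ed '' {j | j < n ∧ Even j})
        (M.edgeSet \ (Ed '' {j | j < n ∧ Odd j})) := by
      rw [Set.disjoint_left]
      rintro e ⟨j, ⟨hj, hje⟩, rfl⟩ ⟨heM, _⟩
      have := (hEdM j hj).1 heM
      rcases hje with ⟨k, hk⟩; rcases this with ⟨l, hl⟩; omega
    have hO : (Ed '' {j | j < n ∧ Odd j}).ncard = n / 2 := by
      rw [Set.ncard_image_of_injOn (hEdinj.mono (by intro j hj; exact hj.1))]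
      have : {j | j < n ∧ Odd j} = ((Finset.range n).filter (fun j => Odd j) : Finset ℕ) := by
        ext j; simp [Finset.mem_filter, Finset.mem_range]
      rw [this, Set.ncard_coe_finset, card_filter_odd_range]
    have hE : (Ed '' {j | j < n ∧ Even j}).ncard = (n + 1) / 2 := by
      rw [Set.ncard_image_of_injOn (hEdinj.mono (by intro j hj; exact hj.1))]
      have : {j | j < n ∧ Even j} = ((Finset.range n).filter (fun j => Even j) : Finset ℕ) := by
        ext j; simp [Finset.mem_filter, Finset.mem_range]
      rw [this, Set.ncard_coe_finset, card_filter_even_range]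
    have hsub : (M.edgeSet \ (Ed '' {j | j < n ∧ Odd j})).ncard +
        (Ed '' {j | j < n ∧ Odd j}).ncard = M.edgeSet.ncard :=
      Set.ncard_diff_add_ncard_of_subset hOsub
    rw [hsplit, Set.union_comm, Set.ncard_union_eq hdisj, hO, hE] at *
    omega
  exact ⟨M', hmatch, fun x y => Iff.rfl, hbv, hcard⟩

end Flip
section CycleBuild
set_option linter.unusedSectionVars false
set_option maxHeartbeats 1000000

open SimpleGraph Walk

variable {V : Type*} [Fintype V] [DecidableEq V] {G : SimpleGraph V}

lemma exists_interleaved_cycle {t : ℕ} (ht : 2 ≤ t) (a b : ℕ → V)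
    (hat : a t = a 0)
    (hab : ∀ j, j < t → G.Adj (a j) (b j))
    (hba : ∀ j, j < t → G.Adj (b j) (a (j+1)))
    (hainj : ∀ i, i < t → ∀ j, j < t → a i = a j → i = j)
    (hbinj : ∀ i, i < t → ∀ j, j < t → b i = b j → i = j)
    (hd : ∀ i, i < t → ∀ j, j < t → a i ≠ b j) :
    ∃ c : G.Walk (a 0) (a 0), c.IsCycle ∧ c.length = 2 * t := by
  -- comparisons with a t
  have hat' : ∀ k, k < t → a k = a t → k = 0 := by
    intro k hk hka
    exact hainj k hk 0 (by omega) (by rw [hka, hat])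
  have hdt : ∀ k, k < t → a t ≠ b k := by
    intro k hk
    rw [hat]; exact hd 0 (by omega) k hk
  have aux : ∀ (m j : ℕ), j + m = t → ∃ w : G.Walk (a j) (a t),
      w.length = 2*m ∧
      (1 ≤ j → w.support.Nodup) ∧
      w.support.tail.Nodup ∧
      w.edges.Nodup ∧
      (∀ z ∈ w.support.tail,
        z = a t ∨ (∃ k, j ≤ k ∧ k < t ∧ z = b k) ∨ (∃ k, j < k ∧ k < t ∧ z = a k)) ∧
      (∀ e ∈ w.edges, ∃ k, j ≤ k ∧ k < t ∧ (e = s(a k, b k) ∨ e = s(b k, a (k+1)))) := by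
    intro m
    induction m with
    | zero =>
      intro j hj
      have : j = t := by omega
      subst this
      exact ⟨Walk.nil, by simp, by simp, by simp, by simp, by simp, by simp⟩
    | succ m ih =>
      intro j hj
      have hjt : j < t := by omega
      obtain ⟨w', hlen, hnodup, htail, hedges, hmem, hemem⟩ := ih (j+1) (by omega)
      -- membership in w'.support
      have hmem' : ∀ z ∈ w'.support,
          z = a t ∨ (∃ k, j+1 ≤ k ∧ k < t ∧ z = b k) ∨ (∃ k, j+1 ≤ k ∧ k < t ∧ z = a k) := by
        intro z hz
        rw [Walk.support_eq_cons, List.mem_cons] at hz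
        rcases hz with hz | hz
        · subst hz
          rcases Nat.lt_or_ge (j+1) t with h | h
          · right; right; exact ⟨j+1, le_rfl, h, rfl⟩
          · left; congr 1; omega
        · rcases hmem z hz with h | ⟨k, h1, h2, h3⟩ | ⟨k, h1, h2, h3⟩
          · left; exact h
          · right; left; exact ⟨k, h1, h2, h3⟩
          · right; right; exact ⟨k, by omega, h2, h3⟩
      have hbj_not : b j ∉ w'.support := by
        intro hc
        rcases hmem' _ hc with h | ⟨k, h1, h2, h3⟩ | ⟨k, h1, h2, h3⟩
        · exact hdt j hjt h.symm
        · have := hbinj j hjt k h2 h3; omega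
        · exact hd k h2 j hjt h3.symm
      have haj_not : 1 ≤ j → a j ∉ w'.support := by
        intro hj1 hc
        rcases hmem' _ hc with h | ⟨k, h1, h2, h3⟩ | ⟨k, h1, h2, h3⟩
        · have := hat' j hjt h; omega
        · exact hd j hjt k h2 h3
        · have := hainj j hjt k h2 h3; omega
      have hajbj : a j ≠ b j := hd j hjt j hjt
      refine ⟨Walk.cons (hab j hjt) (Walk.cons (hba j hjt) w'), ?_, ?_, ?_, ?_, ?_, ?_⟩
      · simp [Walk.length_cons, hlen]; omega
      · intro hj1
        rw [Walk.support_cons, Walk.support_cons, List.nodup_cons, List.nodup_cons]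
        refine ⟨?_, hbj_not, ?_⟩
        · rw [List.mem_cons]
          rintro (h | h)
          · exact hajbj h
          · exact haj_not hj1 h
        · rw [Walk.support_eq_cons] at htail hnodup ⊢
          rcases Nat.lt_or_ge (j+1) t with h | h
          · exact (by
              rw [List.nodup_cons]
              refine ⟨?_, htail⟩
              intro hc
              rcases hmem _ hc with h' | ⟨k, h1, h2, h3⟩ | ⟨k, h1, h2, h3⟩
              · have := hat' (j+1) h h'; omega
              · exact hd (j+1) h k h2 h3
              · have := hainj (j+1) h k h2 h3; omega)
          · have hjt1 : j + 1 = t := by omega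
            have : w'.length = 0 := by omega
            have hwnil : w'.support.tail = [] := by
              have := Walk.length_support w'
              cases hsup : w'.support with
              | nil => simp [hsup] at this ⊢
              | cons x l =>
                rw [hsup] at this
                simp only [List.length_cons] at this
                have : l.length = 0 := by omega
                simp [List.length_eq_zero_iff] at this
                simp [this]
            rw [Walk.support_eq_cons, hwnil]
            simp
      · -- tail nodup
        rw [Walk.support_cons, Walk.support_cons]
        simp only [List.tail_cons]
        rw [List.nodup_cons]
        refine ⟨hbj_not, ?_⟩
        -- w'.support nodup
        rcases Nat.lt_or_ge (j+1) t with h | h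
        · rw [Walk.support_eq_cons, List.nodup_cons]
          refine ⟨?_, htail⟩
          intro hc
          rcases hmem _ hc with h' | ⟨k, h1, h2, h3⟩ | ⟨k, h1, h2, h3⟩
          · have := hat' (j+1) h h'; omega
          · exact hd (j+1) h k h2 h3
          · have := hainj (j+1) h k h2 h3; omega
        · have : w'.length = 0 := by omega
          rw [Walk.support_eq_cons]
          have hwnil : w'.support.tail = [] := by
            have hl := Walk.length_support w'
            cases hsup : w'.support with
            | nil => simp [hsup] at hl ⊢
            | cons x l =>
              rw [hsup] at hl
              simp only [List.length_cons] at hl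
              have : l.length = 0 := by omega
              simp [List.length_eq_zero_iff] at this
              simp [this]
          rw [hwnil]; simp
      · -- edges nodup
        rw [Walk.edges_cons, Walk.edges_cons, List.nodup_cons, List.nodup_cons]
        refine ⟨?_, ?_, hedges⟩
        · rw [List.mem_cons]
          rintro (h | h)
          · rw [Sym2.eq_iff] at h
            rcases h with ⟨h1, h2⟩ | ⟨h1, h2⟩
            · exact hajbj h1
            · rcases Nat.lt_or_ge (j+1) t with ht' | ht'
              · have := hainj j hjt (j+1) ht' h1; omega
              · have hj1 : j + 1 = t := by omega
                rw [hj1] at h1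
                have := hat' j hjt h1; omega
          · rcases hemem _ h with ⟨k, h1, h2, h3 | h3⟩
            · rw [Sym2.eq_iff] at h3
              rcases h3 with ⟨e1, e2⟩ | ⟨e1, e2⟩
              · have := hainj j hjt k h2 e1; omega
              · exact hd j hjt k h2 e1
            · rw [Sym2.eq_iff] at h3
              rcases h3 with ⟨e1, e2⟩ | ⟨e1, e2⟩
              · exact hd j hjt k h2 e1
              · have := hbinj j hjt k h2 e2; omega
        · intro hc
          rcases hemem _ hc with ⟨k, h1, h2, h3⟩
          rcases h3 with h3 | h3
          · rw [Sym2.eq_iff] at h3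
            rcases h3 with ⟨e1, e2⟩ | ⟨e1, e2⟩
            · exact hd k h2 j hjt e1.symm
            · have := hbinj j hjt k h2 e1; omega
          · rw [Sym2.eq_iff] at h3
            rcases h3 with ⟨e1, e2⟩ | ⟨e1, e2⟩
            · have := hbinj j hjt k h2 e1; omega
            · rcases Nat.lt_or_ge (k+1) t with ht' | ht'
              · exact hd (k+1) ht' j hjt e1.symm
              · have hkt : k + 1 = t := by omega
                rw [hkt] at e1
                exact hdt j hjt e1.symm
      · intro z hz
        rw [Walk.support_cons, Walk.support_cons] at hz
        simp only [List.tail_cons, List.mem_cons] at hz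
        rcases hz with hz | hz
        · right; left; exact ⟨j, le_rfl, hjt, hz⟩
        · rcases hmem' z hz with h | ⟨k, h1, h2, h3⟩ | ⟨k, h1, h2, h3⟩
          · left; exact h
          · right; left; exact ⟨k, by omega, h2, h3⟩
          · right; right; exact ⟨k, by omega, h2, h3⟩
      · intro e he
        rw [Walk.edges_cons, Walk.edges_cons] at he
        simp only [List.mem_cons] at he
        rcases he with he | he | he
        · exact ⟨j, le_rfl, hjt, Or.inl he⟩
        · exact ⟨j, le_rfl, hjt, Or.inr he⟩
        · rcases hemem _ he with ⟨k, h1, h2, h3⟩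
          exact ⟨k, by omega, h2, h3⟩
  obtain ⟨w, hlen, _, htail, hedges, _, _⟩ := aux t 0 (by omega)
  set c := w.copy rfl hat with hcdef
  have hclen : c.length = 2*t := by rw [hcdef, Walk.length_copy]; exact hlen
  have hcne : c ≠ Walk.nil := by
    intro h
    rw [h] at hclen
    simp only [Walk.length_nil] at hclen
    omega
  refine ⟨c, ⟨⟨⟨?_⟩, hcne⟩, ?_⟩, hclen⟩
  · rw [hcdef, Walk.edges_copy]; exact hedges
  · rw [hcdef, Walk.support_copy]; exact htail

end CycleBuild
section DetLemma
set_option linter.unusedSectionVars false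
set_option maxHeartbeats 1000000

open SimpleGraph Walk Equiv

variable {V : Type*} [Fintype V] [DecidableEq V] {G : SimpleGraph V}

lemma even_sum_add_card_of_all_odd (s : Multiset ℕ) (h : ∀ n ∈ s, Odd n) :
    Even (s.sum + Multiset.card s) := by
  induction s using Multiset.induction_on with
  | empty => simp
  | cons a s ih =>
    have ha : Odd a := h a (Multiset.mem_cons_self a s)
    have hs := ih (fun n hn => h n (Multiset.mem_cons_of_mem hn))
    rw [Multiset.sum_cons, Multiset.card_cons]
    rcases ha with ⟨k, hk⟩
    rcases hs with ⟨l, hl⟩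
    exact ⟨k + l + 1, by omega⟩

lemma sign_eq_one_of_all_adj (G : SimpleGraph V) (hc : C4kFree G) (M : G.Subgraph)
    (hM : M.IsMatching) {α : Type*} [Fintype α] [DecidableEq α] (g f : α → V)
    (hg : Function.Injective g) (hf : Function.Injective f)
    (hadj : ∀ i, M.Adj (g i) (f i))
    (hdisj : ∀ i j, g i ≠ f j)
    (σ : Equiv.Perm α) (hσ : ∀ i, G.Adj (g (σ i)) (f i)) :
    Equiv.Perm.sign σ = 1 := by
  have hodd : ∀ n ∈ σ.cycleType, Odd n := by
    intro n hn
    rw [Equiv.Perm.cycleType_def, Multiset.mem_map] at hn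
    obtain ⟨τ, hτ, rfl⟩ := hn
    obtain ⟨hτc, hτσ⟩ := Equiv.Perm.mem_cycleFactorsFinset_iff.1 hτ
    set n := τ.support.card with hndef
    have hn2 : 2 ≤ n := hτc.two_le_card_support
    obtain ⟨x, hx⟩ : τ.support.Nonempty := Finset.card_pos.1 (by omega)
    have horb : ∀ j : ℕ, (τ ^ j) x ∈ τ.support := by
      intro j
      induction j with
      | zero => simpa using hx
      | succ j ih =>
        rw [pow_succ']
        simp only [Equiv.Perm.mul_apply]
        exact Equiv.Perm.apply_mem_support.2 ih
    have hagree : ∀ j : ℕ, σ ((τ ^ j) x) = (τ ^ (j+1)) x := by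
      intro j
      rw [← hτσ _ (horb j), pow_succ']
      simp [Equiv.Perm.mul_apply]
    have htord : orderOf τ = n := hτc.orderOf
    have htpow : (τ ^ n) x = x := by
      rw [← htord, pow_orderOf_eq_one]; rfl
    have hinj : ∀ i, i < n → ∀ j, j < n → (τ ^ i) x = (τ ^ j) x → i = j := by
      have key : ∀ i j, i ≤ j → j < n → (τ ^ i) x = (τ ^ j) x → i = j := by
        intro i j hij hj he
        by_contra hne
        have hd1 : 0 < j - i := by omega
        have hfix : (τ ^ (j - i)) ((τ ^ i) x) = (τ ^ i) x := by
          rw [← Equiv.Perm.mul_apply, ← pow_add]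
          have : j - i + i = j := by omega
          rw [this, ← he]
        have hsupp : (τ ^ i) x ∈ τ.support := horb i
        have hτne : τ ((τ ^ i) x) ≠ (τ ^ i) x := Equiv.Perm.mem_support.1 hsupp
        have : τ ^ (j - i) = 1 := (hτc.pow_eq_one_iff' hτne).2 hfix
        have := orderOf_dvd_of_pow_eq_one this
        rw [htord] at this
        have := Nat.le_of_dvd hd1 this
        omega
      intro i hi j hj he
      rcases Nat.le_total i j with h | h
      · exact key i j h hj he
      · exact (key j i h hi he.symm).symm
    by_contra hneven
    have hne : Even n := (Nat.even_or_odd n).resolve_right hneven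
    -- build a cycle of length 2n in G
    set a : ℕ → V := fun j => g ((τ ^ j) x) with hadef
    set b : ℕ → V := fun j => f ((τ ^ j) x) with hbdef
    have h4 : (4 : ℕ) ∣ 2 * n := by
      rcases hne with ⟨k, hk⟩; exact ⟨k, by omega⟩
    obtain ⟨c, hcyc, hclen⟩ := exists_interleaved_cycle (G := G) hn2 a b
      (by simp only [hadef]; rw [htpow]; simp)
      (fun j hj => M.adj_sub (hadj _))
      (fun j hj => by
        have := hσ ((τ ^ j) x)
        rw [hagree j] at this
        exact this.symm)
      (fun i hi j hj he => hinj i hi j hj (hg he))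
      (fun i hi j hj he => hinj i hi j hj (hf he))
      (fun i hi j hj => hdisj _ _)
    exact hc _ c hcyc (hclen ▸ h4)
  rw [Equiv.Perm.sign_of_cycleType]
  obtain ⟨k, hk⟩ := even_sum_add_card_of_all_odd _ hodd
  rw [hk, ← two_mul]
  rw [pow_mul]
  norm_num

lemma det_ne_zero_of_matching (G : SimpleGraph V) (hc : C4kFree G) (M : G.Subgraph)
    (hM : M.IsMatching) {α : Type*} [Fintype α] [DecidableEq α] (g f : α → V)
    (hg : Function.Injective g) (hf : Function.Injective f)
    (hadj : ∀ i, M.Adj (g i) (f i))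
    (hdisj : ∀ i j, g i ≠ f j) :
    (Matrix.of (fun i j => if G.Adj (g i) (f j) then (1:ℝ) else 0)).det ≠ 0 := by
  have hpos : 0 < (Matrix.of (fun i j => if G.Adj (g i) (f j) then (1:ℝ) else 0)).det := by
    rw [Matrix.det_apply]
    apply Finset.sum_pos'
    · intro σ _
      by_cases hall : ∀ i, G.Adj (g (σ i)) (f i)
      · have hsign := sign_eq_one_of_all_adj G hc M hM g f hg hf hadj hdisj σ hall
        have hprod : (∏ i, Matrix.of (fun i j => if G.Adj (g i) (f j) then (1:ℝ) else 0) (σ i) i) = 1 := by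
          apply Finset.prod_eq_one
          intro i _
          simp [Matrix.of_apply, hall i]
        rw [hprod, hsign]
        norm_num
      · push_neg at hall
        obtain ⟨i, hi⟩ := hall
        have hprod : (∏ i, Matrix.of (fun i j => if G.Adj (g i) (f j) then (1:ℝ) else 0) (σ i) i) = 0 := by
          apply Finset.prod_eq_zero (Finset.mem_univ i)
          simp [Matrix.of_apply, hi]
        rw [hprod, smul_zero]
    · refine ⟨1, Finset.mem_univ _, ?_⟩
      have hprod : (∏ i, Matrix.of (fun i j => if G.Adj (g i) (f j) then (1:ℝ) else 0) ((1 : Equiv.Perm α) i) i) = 1 := by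
        apply Finset.prod_eq_one
        intro i _
        simp [Matrix.of_apply, M.adj_sub (hadj i)]
      rw [hprod]
      simp
  exact ne_of_gt hpos

end DetLemma
section LemmaS
set_option linter.unusedSectionVars false
set_option maxHeartbeats 1000000

open SimpleGraph Walk

variable {V : Type*} [Fintype V] [DecidableEq V]

lemma mem_supp_of_unsaturated (G : SimpleGraph V) (hb : IsBipartite G) (hc : C4kFree G)
    {M : G.Subgraph} (hM : IsMaximumMatching G M) {v : V} (hv : v ∉ M.verts) :
    v ∈ supp G := by
  classical
  obtain ⟨s, hs⟩ := hb
  have hvRE : v ∈ Re G M v := by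
    refine ⟨Walk.nil, Walk.IsPath.nil, ?_, by simp⟩
    intro i hi
    simp [Walk.length_nil] at hi
  -- every vertex of Ro is saturated
  have hROsat : ∀ u, u ∈ Ro G M v → u ∈ M.verts := by
    intro u hu
    by_contra hnu
    obtain ⟨p, hp, halt, hodd⟩ := hu
    obtain ⟨M', hmatch, _, _, hcard⟩ :=
      flip_matching G M hM.1 p hp hv halt (fun _ => hnu)
    have hle := hM.2 M' hmatch
    have hody : p.length % 2 = 1 := Nat.odd_iff.1 hodd
    omega
  -- sides
  have hREside : ∀ u, u ∈ Re G M v → (u ∈ s ↔ v ∈ s) := by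
    intro u hu
    obtain ⟨p, hp, halt, heven⟩ := hu
    have h1 := bipartite_side hs p (le_refl p.length)
    rw [Walk.getVert_length] at h1
    tauto
  have hROside : ∀ u, u ∈ Ro G M v → (u ∈ s ↔ ¬ (v ∈ s)) := by
    intro u hu
    obtain ⟨p, hp, halt, hodd⟩ := hu
    have h1 := bipartite_side hs p (le_refl p.length)
    rw [Walk.getVert_length] at h1
    have : ¬ Even p.length := by rcases hodd with ⟨k,hk⟩; intro ⟨l,hl⟩; omega
    tauto
  -- neighbours of Re are in Ro
  have hNRo : ∀ u, u ∈ Re G M v → ∀ z, G.Adj z u → z ∈ Ro G M v := by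
    intro u hu z hz
    obtain ⟨p, hp, halt, heven⟩ := hu
    set n := p.length with hn
    have hpu : p.getVert n = u := Walk.getVert_length p
    have huside : u ∈ s ↔ v ∈ s := by
      have h1 := bipartite_side hs p (le_refl p.length)
      rw [Walk.getVert_length] at h1
      tauto
    by_cases hzs : z ∈ p.support
    · obtain ⟨k, hkg, hk⟩ := Walk.mem_support_iff_exists_getVert.1 hzs
      have hkside := bipartite_side hs p hk
      rw [hkg] at hkside
      have hzu := hs hz
      have hkodd : Odd k := by
        rcases Nat.even_or_odd k with hke | hko
        · exfalso; tauto
        · exact hko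
      have hkn : k ≤ n := hk
      refine ⟨p.takeUntil z hzs, hp.takeUntil hzs, ?_, ?_⟩
      · intro i hi
        have hlen : (p.takeUntil z hzs).length = k :=
          takeUntil_length_of_getVert hp hk hkg hzs
        have hgv1 := takeUntil_getVert_eq p hzs (le_of_lt hi)
        have hgv2 := takeUntil_getVert_eq p hzs (Nat.succ_le_of_lt hi)
        rw [hgv1, hgv2]
        exact halt i (by omega)
      · rw [takeUntil_length_of_getVert hp hk hkg hzs]
        exact hkodd
    · have hnMuz : ¬ M.Adj u z := by
        intro hMuz
        rcases Nat.eq_zero_or_pos n with h0 | h0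
        · have huv : u = v := by
            rw [← hpu, h0, Walk.getVert_zero]
          exact hv (huv ▸ M.edge_vert hMuz)
        · have hodd : Odd (n-1) := by
            rcases heven with ⟨k, hk⟩; exact ⟨k-1, by omega⟩
          have hM1 : M.Adj (p.getVert (n-1)) (p.getVert n) := by
            have := (halt (n-1) (by omega)).2 hodd
            have hee : n - 1 + 1 = n := by omega
            rwa [hee] at this
          obtain ⟨w, hw, hwu⟩ := hM.1 (M.edge_vert hMuz)
          have e1 : z = w := hwu _ hMuz
          have e2 : p.getVert (n-1) = w := by
            apply hwu
            rw [hpu] at hM1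
            exact hM1.symm
          apply hzs
          rw [← e2] at e1
          rw [e1]
          exact getVert_mem_support p (by omega)
      refine ⟨p.concat hz.symm, ?_, ?_, ?_⟩
      · rw [Walk.isPath_def, Walk.support_concat]
        apply List.Nodup.append hp.support_nodup (List.nodup_singleton _)
        intro a ha hb
        rw [List.mem_singleton] at hb
        subst hb; exact hzs ha
      · intro i hi
        rw [Walk.length_concat] at hi
        have hg1 : (p.concat hz.symm).getVert i = p.getVert i := by
          rw [getVert_concat', if_pos (by omega)]
        rcases Nat.lt_or_ge i n with hin | hin
        · have hg2 : (p.concat hz.symm).getVert (i+1) = p.getVert (i+1) := by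
            rw [getVert_concat', if_pos (by omega)]
          rw [hg1, hg2]
          exact halt i hin
        · have hieq : i = n := by omega
          have hg2 : (p.concat hz.symm).getVert (i+1) = z := by
            rw [getVert_concat', if_neg (by omega)]
          rw [hg1, hg2, hieq, hpu]
          constructor
          · intro hcon; exact absurd hcon hnMuz
          · intro hcon
            exfalso
            rcases heven with ⟨k,hk⟩; rcases hcon with ⟨l,hl⟩; omega
      · rw [Walk.length_concat]
        rcases heven with ⟨k, hk⟩
        exact ⟨k, by omega⟩
  -- matched partner of a vertex of Ro lies in Re
  have hpart : ∀ u, u ∈ Ro G M v → ∃ w, M.Adj u w ∧ w ∈ Re G M v := by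
    intro u hu
    obtain ⟨w, hw, hwu⟩ := hM.1 (hROsat u hu)
    refine ⟨w, hw, ?_⟩
    obtain ⟨p, hp, halt, hodd⟩ := hu
    set n := p.length with hn
    have hpu : p.getVert n = u := Walk.getVert_length p
    have hno : n % 2 = 1 := Nat.odd_iff.1 hodd
    have hws : w ∉ p.support := by
      intro hwsup
      obtain ⟨k, hkg, hk⟩ := Walk.mem_support_iff_exists_getVert.1 hwsup
      -- w is on the same side as v
      have huside : u ∈ s ↔ ¬ (v ∈ s) := by
        have h1 := bipartite_side hs p (le_refl p.length)
        rw [Walk.getVert_length] at h1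
        have : ¬ Even n := by rw [Nat.even_iff]; omega
        tauto
      have hwside : w ∈ s ↔ v ∈ s := by
        have := hs (M.adj_sub hw)
        tauto
      have hkside := bipartite_side hs p hk
      rw [hkg] at hkside
      have hke : Even k := by
        rcases Nat.even_or_odd k with hke | hko
        · exact hke
        · exfalso
          have : ¬ Even k := by rcases hko with ⟨l,hl⟩; intro ⟨m,hm⟩; omega
          tauto
      rcases Nat.eq_zero_or_pos k with h0 | h0
      · rw [h0, Walk.getVert_zero] at hkg
        exact hv (hkg ▸ M.edge_vert hw.symm)
      · have hkn : k < n := by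
          rcases hke with ⟨l, hl⟩
          omega
        have hko : Odd (k-1) := by
          rcases hke with ⟨l, hl⟩; exact ⟨l-1, by omega⟩
        have hM1 : M.Adj (p.getVert (k-1)) (p.getVert k) := by
          have := (halt (k-1) (by omega)).2 hko
          have hee : k - 1 + 1 = k := by omega
          rwa [hee] at this
        rw [hkg] at hM1
        obtain ⟨w', hw', hwu'⟩ := hM.1 (M.edge_vert hw.symm)
        have e1 : u = w' := hwu' _ hw.symm
        have e2 : p.getVert (k-1) = w' := hwu' _ hM1.symm
        have e3 : p.getVert (k-1) = u := by rw [e2]; exact e1.symm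
        have e4 : p.getVert (k-1) = p.getVert n := by rw [e3]; exact hpu.symm
        have := path_getVert_inj hp (i := k-1) (j := n) (by omega) (by omega) e4
        omega
    refine ⟨p.concat (M.adj_sub hw), ?_, ?_, ?_⟩
    · rw [Walk.isPath_def, Walk.support_concat]
      apply List.Nodup.append hp.support_nodup (List.nodup_singleton _)
      intro a ha hb
      rw [List.mem_singleton] at hb
      subst hb; exact hws ha
    · intro i hi
      rw [Walk.length_concat] at hi
      have hg1 : (p.concat (M.adj_sub hw)).getVert i = p.getVert i := by
        rw [getVert_concat', if_pos (by omega)]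
      rcases Nat.lt_or_ge i n with hin | hin
      · have hg2 : (p.concat (M.adj_sub hw)).getVert (i+1) = p.getVert (i+1) := by
          rw [getVert_concat', if_pos (by omega)]
        rw [hg1, hg2]
        exact halt i hin
      · have hieq : i = n := by omega
        have hg2 : (p.concat (M.adj_sub hw)).getVert (i+1) = w := by
          rw [getVert_concat', if_neg (by omega)]
        rw [hg1, hg2, hieq, hpu]
        constructor
        · intro _; exact hodd
        · intro _; exact hw
    · rw [Walk.length_concat]
      exact ⟨(n+1)/2, by omega⟩
  -- the square matrix over Ro
  set T := {u : V // u ∈ Ro G M v} with hT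
  haveI : Fintype T := Fintype.ofFinite _
  have hpart' : ∀ u : T, ∃ w, M.Adj u.1 w ∧ w ∈ Re G M v := fun u => hpart u.1 u.2
  set f : T → V := fun u => Classical.choose (hpart' u) with hfdef
  have hfadj : ∀ u : T, M.Adj u.1 (f u) := fun u => (Classical.choose_spec (hpart' u)).1
  have hfRe : ∀ u : T, f u ∈ Re G M v := fun u => (Classical.choose_spec (hpart' u)).2
  have hfv : ∀ u : T, f u ≠ v := by
    intro u h
    exact hv (h ▸ M.edge_vert (hfadj u).symm)
  have hfinj : Function.Injective f := by
    intro u1 u2 he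
    obtain ⟨w', hw', hwu'⟩ := hM.1 (M.edge_vert (hfadj u1).symm)
    have e1 : u1.1 = w' := hwu' _ (hfadj u1).symm
    have e2 : u2.1 = w' := hwu' _ (by rw [he]; exact (hfadj u2).symm)
    exact Subtype.ext (e1.trans e2.symm)
  have hdisj : ∀ i j : T, (i.1 : V) ≠ f j := by
    intro i j he
    have h1 := hROside i.1 i.2
    have h2 := hREside (f j) (hfRe j)
    rw [he] at h1
    tauto
  set N := Matrix.of (fun i j : T => if G.Adj (i.1) (f j) then (1:ℝ) else 0) with hN
  have hdet : N.det ≠ 0 :=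
    det_ne_zero_of_matching G hc M hM.1 (fun i : T => i.1) f
      (fun a b hab => Subtype.ext hab) hfinj hfadj hdisj
  set colv : T → ℝ := fun i => if G.Adj i.1 v then 1 else 0 with hcolv
  set y : T → ℝ := N⁻¹.mulVec (fun i => - colv i) with hy
  have hNy : N.mulVec y = fun i => - colv i := by
    rw [hy, Matrix.mulVec_mulVec, Matrix.mul_nonsing_inv N (isUnit_iff_ne_zero.2 hdet),
      Matrix.one_mulVec]
  set x : V → ℝ := fun z => (if z = v then 1 else 0) + ∑ i : T, if z = f i then y i else 0
    with hx
  have hxv : x v = 1 := by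
    have hsum : (∑ i : T, if v = f i then y i else 0) = 0 :=
      Finset.sum_eq_zero (fun i _ => if_neg (fun he => hfv i he.symm))
    simp [hx, hsum]
  have hnull : x ∈ nullSet G := by
    show Matrix.mulVec (G.adjMatrix ℝ) x = 0
    funext u
    rw [SimpleGraph.adjMatrix_mulVec_apply]
    simp only [hx]
    rw [Finset.sum_add_distrib]
    have e1 : (∑ w ∈ G.neighborFinset u, if w = v then (1:ℝ) else 0) =
        if v ∈ G.neighborFinset u then 1 else 0 := by
      rw [Finset.sum_ite_eq' (G.neighborFinset u) v (fun _ => (1:ℝ))]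
    have e2 : (∑ w ∈ G.neighborFinset u, ∑ i : T, if w = f i then y i else 0) =
        ∑ i : T, if f i ∈ G.neighborFinset u then y i else 0 := by
      rw [Finset.sum_comm]
      congr 1
      funext i
      rw [Finset.sum_ite_eq' (G.neighborFinset u) (f i) (fun _ => y i)]
    rw [e1, e2]
    by_cases hu : u ∈ Ro G M v
    · set i0 : T := ⟨u, hu⟩ with hi0
      have e3 : ∀ i : T, (if f i ∈ G.neighborFinset u then y i else 0) = N i0 i * y i := by
        intro i
        by_cases hadj : G.Adj u (f i)
        · rw [if_pos ((SimpleGraph.mem_neighborFinset _ _ _).2 hadj)]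
          have : N i0 i = 1 := by rw [hN]; simp only [Matrix.of_apply]; rw [if_pos hadj]
          rw [this, one_mul]
        · rw [if_neg (fun hmem => hadj ((SimpleGraph.mem_neighborFinset _ _ _).1 hmem))]
          have : N i0 i = 0 := by rw [hN]; simp only [Matrix.of_apply]; rw [if_neg hadj]
          rw [this, zero_mul]
      have e3' : (∑ i : T, if f i ∈ G.neighborFinset u then y i else 0) = N.mulVec y i0 := by
        have hmv : N.mulVec y i0 = ∑ i : T, N i0 i * y i := rfl
        rw [hmv]
        exact Finset.sum_congr rfl (fun i _ => e3 i)
      have e5 : (if v ∈ G.neighborFinset u then (1:ℝ) else 0) = colv i0 := by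
        by_cases hadj : G.Adj u v
        · rw [if_pos ((SimpleGraph.mem_neighborFinset _ _ _).2 hadj)]
          rw [hcolv]
          simp only []
          rw [if_pos hadj]
        · rw [if_neg (fun hmem => hadj ((SimpleGraph.mem_neighborFinset _ _ _).1 hmem))]
          rw [hcolv]
          simp only []
          rw [if_neg hadj]
      rw [e3', hNy, e5]
      simp
    · have e3 : (if v ∈ G.neighborFinset u then (1:ℝ) else 0) = 0 := by
        rw [if_neg]
        intro hmem
        rw [SimpleGraph.mem_neighborFinset] at hmem
        exact hu (hNRo v hvRE u hmem)
      have e4 : (∑ i : T, if f i ∈ G.neighborFinset u then y i else 0) = 0 := by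
        apply Finset.sum_eq_zero
        intro i _
        rw [if_neg]
        intro hmem
        rw [SimpleGraph.mem_neighborFinset] at hmem
        exact hu (hNRo (f i) (hfRe i) u hmem)
      rw [e3, e4]
      simp
  exact ⟨x, hnull, by rw [hxv]; exact one_ne_zero⟩

end LemmaS
section Expose
set_option linter.unusedSectionVars false
set_option maxHeartbeats 1000000

open SimpleGraph Walk

variable {V : Type*} [Fintype V] [DecidableEq V]

/-- An `(M,x)`-alternating good walk: path, edges alternate starting with a matched edge,
and the `x`-values at even positions alternate in sign. -/
def GoodWalk (G : SimpleGraph V) (M : G.Subgraph) (xv : V → ℝ) {u z : V}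
    (q : G.Walk u z) : Prop :=
  q.IsPath ∧ (∀ i, i < q.length → (M.Adj (q.getVert i) (q.getVert (i+1)) ↔ Even i)) ∧
    (∀ i, 2*i+2 ≤ q.length → xv (q.getVert (2*i)) * xv (q.getVert (2*i+2)) < 0)

lemma GoodWalk.nonzero {G : SimpleGraph V} {M : G.Subgraph} {xv : V → ℝ} {u z : V}
    {q : G.Walk u z} (hq : GoodWalk G M xv q) (hx0 : xv u ≠ 0) :
    ∀ i, 2*i ≤ q.length → xv (q.getVert (2*i)) ≠ 0 := by
  intro i hi
  match i with
  | 0 => rw [Walk.getVert_zero]; exact hx0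
  | (i+1) =>
    have h := hq.2.2 i (by omega)
    intro hzero
    rw [show 2*i+2 = 2*(i+1) by ring, hzero, mul_zero] at h
    exact lt_irrefl 0 h

lemma GoodWalk.sign {G : SimpleGraph V} {M : G.Subgraph} {xv : V → ℝ} {u z : V}
    {q : G.Walk u z} (hq : GoodWalk G M xv q) (hx0 : xv u ≠ 0) :
    ∀ d i, 2*(i+d) ≤ q.length →
      (Odd d → xv (q.getVert (2*i)) * xv (q.getVert (2*(i+d))) < 0) ∧
      (Even d → 0 < xv (q.getVert (2*i)) * xv (q.getVert (2*(i+d)))) := by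
  intro d
  induction d with
  | zero =>
    intro i hi
    constructor
    · intro h; exact absurd h (by simp)
    · intro _
      simp only [Nat.add_zero]
      exact mul_self_pos.2 (hq.nonzero hx0 i hi)
  | succ d ih =>
    intro i hi
    have h1 := ih i (by omega)
    have h2 := hq.2.2 (i+d) (by omega)
    have he : 2*(i+d)+2 = 2*(i+(d+1)) := by ring
    rw [he] at h2
    have hsq : (0:ℝ) < xv (q.getVert (2*(i+d))) * xv (q.getVert (2*(i+d))) :=
      mul_self_pos.2 (hq.nonzero hx0 (i+d) (by omega))
    constructor
    · intro hodd
      have hde : Even d := by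
        rcases hodd with ⟨k, hk⟩; exact ⟨k, by omega⟩
      have hp1 := h1.2 hde
      nlinarith [hp1, h2, hsq]
    · intro heven
      have hdo : Odd d := by
        rcases heven with ⟨k, hk⟩; exact ⟨k-1, by omega⟩
      have hp1 := h1.1 hdo
      nlinarith [hp1, h2, hsq]

lemma expose_supp_vertex (G : SimpleGraph V) (hb : IsBipartite G) (hc : C4kFree G)
    {M : G.Subgraph} (hM : IsMaximumMatching G M) {u : V} (hu : u ∈ supp G) :
    ∃ M' : G.Subgraph, IsMaximumMatching G M' ∧ u ∉ M'.verts ∧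
      ∀ x y : V, x ∉ supp G → y ∉ supp G → (M.Adj x y ↔ M'.Adj x y) := by
  classical
  obtain ⟨s, hs⟩ := hb
  obtain ⟨xv, hxnull, hxu⟩ := hu
  have hxnull' : Matrix.mulVec (G.adjMatrix ℝ) xv = 0 := hxnull
  by_cases husat : u ∈ M.verts
  swap
  · exact ⟨M, hM, husat, fun _ _ _ _ => Iff.rfl⟩
  -- the set of lengths of good walks of even length
  set L : Set ℕ := {n | ∃ (z : V) (q : G.Walk u z),
    GoodWalk G M xv q ∧ Even q.length ∧ q.length = n} with hL
  have hL0 : (0:ℕ) ∈ L := by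
    refine ⟨u, Walk.nil, ⟨Walk.IsPath.nil, ?_, ?_⟩, by simp, by simp⟩
    · intro i hi; simp [Walk.length_nil] at hi
    · intro i hi; simp [Walk.length_nil] at hi
  have hLbdd : BddAbove L := by
    refine ⟨Fintype.card V, ?_⟩
    rintro n ⟨z, q, hq, _, rfl⟩
    exact le_of_lt hq.1.length_lt
  have hmax : sSup L ∈ L := Nat.sSup_mem ⟨0, hL0⟩ hLbdd
  obtain ⟨z, q, hGood, hEven, hlen⟩ := hmax
  set n := q.length with hn
  have hne : n % 2 = 0 := Nat.even_iff.1 hEven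
  have hqz : q.getVert n = z := Walk.getVert_length q
  have hxz : xv z ≠ 0 := by
    have := hGood.nonzero hxu (n/2) (by omega)
    rwa [show 2*(n/2) = n by omega, hqz] at this
  have hrow : ∀ w : V, (∑ t ∈ G.neighborFinset w, xv t) = 0 := by
    intro w
    have := congrFun hxnull' w
    rwa [SimpleGraph.adjMatrix_mulVec_apply] at this
  -- z must be unsaturated
  have hzun : z ∉ M.verts := by
    intro hzsat
    obtain ⟨z', hz', hz'u⟩ := hM.1 hzsat
    have hGzz' : G.Adj z z' := M.adj_sub hz'
    -- z' is not on q
    have hz'supp : z' ∉ q.support := by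
      intro hmem
      obtain ⟨k, hkg, hk⟩ := Walk.mem_support_iff_exists_getVert.1 hmem
      have hzside : z ∈ s ↔ (u ∈ s) := by
        have h1 := bipartite_side hs q (le_refl q.length)
        rw [Walk.getVert_length] at h1
        tauto
      have hz'side := hs hGzz'
      have hkside := bipartite_side hs q hk
      rw [hkg] at hkside
      have hkodd : Odd k := by
        rcases Nat.even_or_odd k with hke | hko
        · exfalso; tauto
        · exact hko
      have hko : k % 2 = 1 := Nat.odd_iff.1 hkodd
      have hkn : k < n := by omega
      have hM1 : M.Adj (q.getVert (k-1)) (q.getVert k) := by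
        have := (hGood.2.1 (k-1) (by omega)).2 (by
          rw [Nat.even_iff]; omega)
        have hee : k - 1 + 1 = k := by omega
        rwa [hee] at this
      rw [hkg] at hM1
      obtain ⟨w', hw', hwu'⟩ := hM.1 (M.edge_vert hz'.symm)
      have e1 : z = w' := hwu' _ hz'.symm
      have e2 : q.getVert (k-1) = w' := hwu' _ hM1.symm
      have e3 : q.getVert (k-1) = q.getVert n := by
        rw [e2, ← e1]; exact hqz.symm
      have := path_getVert_inj hGood.1 (i := k-1) (j := n) (by omega) (by omega) e3
      omega
    -- extend by the matched edge
    set q1 := q.concat hGzz' with hq1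
    have hq1len : q1.length = n + 1 := Walk.length_concat q hGzz'
    have hq1get : ∀ i, i ≤ n → q1.getVert i = q.getVert i := by
      intro i hi
      rw [hq1, getVert_concat', if_pos (by omega)]
    have hq1get' : q1.getVert (n+1) = z' := by
      rw [hq1, getVert_concat', if_neg (by omega)]
    have hq1path : q1.IsPath := by
      rw [Walk.isPath_def, hq1, Walk.support_concat]
      apply List.Nodup.append hGood.1.support_nodup (List.nodup_singleton _)
      intro a ha hb
      rw [List.mem_singleton] at hb
      subst hb; exact hz'supp ha
    have hq1good : GoodWalk G M xv q1 := by
      refine ⟨hq1path, ?_, ?_⟩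
      · intro i hi
        rw [hq1len] at hi
        rcases Nat.lt_or_ge i n with hin | hin
        · rw [hq1get i (by omega), hq1get (i+1) (by omega)]
          exact hGood.2.1 i hin
        · have hieq : i = n := by omega
          subst hieq
          rw [hq1get n le_rfl, hq1get', hqz]
          constructor
          · intro _; exact Nat.even_iff.2 hne
          · intro _; exact hz'
      · intro i hi
        rw [hq1len] at hi
        have h2i : 2*i + 2 ≤ n := by omega
        rw [hq1get (2*i) (by omega), hq1get (2*i+2) (by omega)]
        exact hGood.2.2 i h2i
    -- find the next vertex y0
    have hzz'nbr : z ∈ G.neighborFinset z' :=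
      (SimpleGraph.mem_neighborFinset _ _ _).2 hGzz'.symm
    have hy0 : ∃ y0, G.Adj z' y0 ∧ xv y0 * xv z < 0 := by
      by_contra hcon
      push_neg at hcon
      have hnonneg : ∀ t ∈ G.neighborFinset z', 0 ≤ xv t * xv z := by
        intro t ht
        exact hcon t ((SimpleGraph.mem_neighborFinset _ _ _).1 ht)
      have hsum : (∑ t ∈ G.neighborFinset z', xv t * xv z) = 0 := by
        rw [← Finset.sum_mul, hrow, zero_mul]
      have hall := (Finset.sum_eq_zero_iff_of_nonneg hnonneg).1 hsum
      have := hall z hzz'nbr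
      exact hxz (by nlinarith [this])
    obtain ⟨y0, hy0adj, hy0sign⟩ := hy0
    have hy0z : y0 ≠ z := by
      intro he
      rw [he] at hy0sign
      nlinarith [hy0sign]
    have hnMy0 : ¬ M.Adj z' y0 := by
      intro hcon
      obtain ⟨w', hw', hwu'⟩ := hM.1 (M.edge_vert hz'.symm)
      have e1 : z = w' := hwu' _ hz'.symm
      have e2 : y0 = w' := hwu' _ hcon
      exact hy0z (e2.trans e1.symm)
    -- y0 is not on q1
    have hy0supp : y0 ∉ q1.support := by
      intro hmem
      obtain ⟨k, hkg, hk⟩ := Walk.mem_support_iff_exists_getVert.1 hmem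
      rw [hq1len] at hk
      -- parity: k is even
      have hzside : z ∈ s ↔ (u ∈ s) := by
        have h1 := bipartite_side hs q (le_refl q.length)
        rw [Walk.getVert_length] at h1
        tauto
      have hz'side : z' ∈ s ↔ ¬ (z ∈ s) := hs hGzz'.symm
      have hy0side := hs hy0adj
      have hkside := bipartite_side hs q1 (by omega : k ≤ q1.length)
      rw [hkg] at hkside
      have hkeven : Even k := by
        rcases Nat.even_or_odd k with hke | hko
        · exact hke
        · exfalso
          have : ¬ Even k := by rcases hko with ⟨l,hl⟩; intro ⟨m,hm⟩; omega
          tauto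
      have hke : k % 2 = 0 := Nat.even_iff.1 hkeven
      have hkn : k ≤ n := by omega
      have hkq : q.getVert k = y0 := by rw [← hq1get k hkn, hkg]
      set m := k / 2 with hm
      have hkm : k = 2 * m := by omega
      have hmn : m ≠ n / 2 := by
        intro he
        apply hy0z
        rw [← hkq, hkm, he, show 2*(n/2) = n by omega, hqz]
      have hmlt : m < n / 2 := by
        have : k ≠ n := by intro hcon; apply hmn; omega
        omega
      -- sign forces odd gap
      have hgap := hGood.sign hxu (n/2 - m) m (by omega)
      have hdodd : Odd (n/2 - m) := by
        rcases Nat.even_or_odd (n/2 - m) with hde | hdo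
        · exfalso
          have := hgap.2 hde
          rw [show 2*(m + (n/2 - m)) = n by omega, hqz, ← hkm, hkq] at this
          nlinarith [this, hy0sign]
        · exact hdo
      -- build the forbidden cycle
      have hd' := q1.dropUntil y0 hmem
      have hd'path : (q1.dropUntil y0 hmem).IsPath := hq1path.dropUntil hmem
      have htklen : (q1.takeUntil y0 hmem).length = k :=
        takeUntil_length_of_getVert hq1path (by omega) (hkg) hmem
      have hsplit := q1.take_spec hmem
      have hlensum : (q1.takeUntil y0 hmem).length + (q1.dropUntil y0 hmem).length
          = n + 1 := by
        rw [← hq1len, ← Walk.length_append, hsplit]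
      have hd'len : (q1.dropUntil y0 hmem).length = n + 1 - k := by omega
      set d' := q1.dropUntil y0 hmem with hd'def
      have hd'end : d'.getVert d'.length = z' := Walk.getVert_length d'
      have hcycle : ∃ c : G.Walk y0 y0, c.IsCycle ∧ c.length = n + 2 - k := by
        refine ⟨d'.concat hy0adj, ⟨⟨⟨?_⟩, ?_⟩, ?_⟩, ?_⟩
        · rw [Walk.edges_concat, List.concat_eq_append]
          apply List.Nodup.append hd'path.isTrail.edges_nodup (List.nodup_singleton _)
          intro e he he'
          rw [List.mem_singleton] at he'
          subst he'
          obtain ⟨j, hj, hje⟩ := edges_index d' he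
          rw [Sym2.eq_iff] at hje
          rcases hje with ⟨e1, e2⟩ | ⟨e1, e2⟩
          · have := path_getVert_inj hd'path (i := j) (j := d'.length)
              (by omega) le_rfl (e1.symm.trans hd'end.symm)
            omega
          · have hj0 : j = 0 := by
              have := path_getVert_inj hd'path (i := j) (j := 0)
                (by omega) (by omega) (e2.symm.trans (Walk.getVert_zero d').symm)
              omega
            subst hj0
            have : (1:ℕ) = d'.length := path_getVert_inj hd'path (i := 1) (j := d'.length)
              (by omega) le_rfl (e1.symm.trans hd'end.symm)
            omega
        · intro hcon
          have := congrArg Walk.length hcon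
          rw [Walk.length_concat, Walk.length_nil] at this
          omega
        · rw [Walk.support_concat]
          have hsup : d'.support = y0 :: d'.support.tail := Walk.support_eq_cons d'
          rw [hsup]
          simp only [List.cons_append, List.tail_cons]
          apply List.Nodup.append
          · have := hd'path.support_nodup
            rw [hsup] at this
            exact (List.nodup_cons.1 this).2
          · exact List.nodup_singleton _
          · intro a ha hb
            rw [List.mem_singleton] at hb
            subst hb
            have := hd'path.support_nodup
            rw [hsup] at this
            exact (List.nodup_cons.1 this).1 ha
        · rw [Walk.length_concat]
          omega
      obtain ⟨c, hcyc, hclen⟩ := hcycle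
      apply hc y0 c hcyc
      rw [hclen]
      obtain ⟨r, hr⟩ := hdodd
      exact ⟨r + 1, by omega⟩
    -- extend q1 by the edge z'y0 : contradiction with maximality
    set q2 := q1.concat hy0adj with hq2
    have hq2len : q2.length = n + 2 := by rw [hq2, Walk.length_concat, hq1len]
    have hq2get : ∀ i, i ≤ n + 1 → q2.getVert i = q1.getVert i := by
      intro i hi
      rw [hq2, getVert_concat', if_pos (by omega)]
    have hq2get' : q2.getVert (n+2) = y0 := by
      rw [hq2, getVert_concat', if_neg (by omega)]
    have hq2path : q2.IsPath := by
      rw [Walk.isPath_def, hq2, Walk.support_concat]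
      apply List.Nodup.append hq1path.support_nodup (List.nodup_singleton _)
      intro a ha hbm
      rw [List.mem_singleton] at hbm
      subst hbm; exact hy0supp ha
    have hq2good : GoodWalk G M xv q2 := by
      refine ⟨hq2path, ?_, ?_⟩
      · intro i hi
        rw [hq2len] at hi
        rcases Nat.lt_or_ge i (n+1) with hin | hin
        · rw [hq2get i (by omega), hq2get (i+1) (by omega)]
          exact hq1good.2.1 i (by omega)
        · have hieq : i = n + 1 := by omega
          subst hieq
          rw [hq2get (n+1) le_rfl, hq1get', hq2get']
          constructor
          · intro hcon; exact absurd hcon hnMy0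
          · intro hcon
            exfalso
            rw [Nat.even_iff] at hcon
            omega
      · intro i hi
        rw [hq2len] at hi
        rcases Nat.lt_or_ge (2*i+2) (n+2) with hin | hin
        · have h2i : 2*i + 2 ≤ n := by omega
          rw [hq2get (2*i) (by omega), hq2get (2*i+2) (by omega),
            hq1get (2*i) (by omega), hq1get (2*i+2) (by omega)]
          exact hGood.2.2 i h2i
        · have hieq : 2*i + 2 = n + 2 := by omega
          have h2in : 2*i = n := by omega
          rw [hieq, hq2get', hq2get (2*i) (by omega), hq1get (2*i) (by omega), h2in, hqz]
          nlinarith [hy0sign]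
    have hmem2 : (n + 2) ∈ L := ⟨y0, q2, hq2good, by rw [hq2len]; exact ⟨(n+2)/2, by omega⟩,
      hq2len⟩
    have := le_csSup hLbdd hmem2
    omega
  -- now flip along the reverse of q
  have hrevpath : q.reverse.IsPath := hGood.1.reverse
  have hrevlen : q.reverse.length = n := Walk.length_reverse q
  have hrevget : ∀ i, q.reverse.getVert i = q.getVert (n - i) := by
    intro i
    rw [Walk.getVert_reverse]
  have hrevalt : MAltWalk G M q.reverse := by
    intro i hi
    rw [hrevlen] at hi
    rw [hrevget i, hrevget (i+1)]
    have hj : n - i = (n - i - 1) + 1 := by omega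
    have := hGood.2.1 (n - i - 1) (by omega)
    constructor
    · intro hadj
      rw [hj] at hadj
      have heven := this.1 hadj.symm
      rw [Nat.even_iff] at heven
      rw [Nat.odd_iff]
      omega
    · intro hodd
      rw [Nat.odd_iff] at hodd
      have : M.Adj (q.getVert (n-i-1)) (q.getVert (n-i-1+1)) :=
        (hGood.2.1 (n - i - 1) (by omega)).2 (by rw [Nat.even_iff]; omega)
      rw [← hj] at this
      exact this.symm
  obtain ⟨M', hmatch, hadj_iff, hbvert, hcard⟩ :=
    flip_matching G M hM.1 q.reverse hrevpath hzun hrevalt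
      (fun hodd => by
        rw [hrevlen, Nat.odd_iff] at hodd
        omega)
  have hcardeq : M'.edgeSet.ncard = M.edgeSet.ncard := by
    rw [hrevlen] at hcard
    omega
  refine ⟨M', ⟨hmatch, ?_⟩, ?_, ?_⟩
  · intro M'' hM''
    rw [hcardeq]
    exact hM.2 M'' hM''
  · have := hbvert (by rw [hrevlen]; exact hEven)
    exact this
  · intro a b ha hb
    have hnp : ¬ pEdge q.reverse s(a, b) := by
      rintro ⟨j, hj, hje⟩
      rw [hrevlen] at hj
      rw [hrevget j, hrevget (j+1)] at hje
      -- one of the two indices n-j, n-j-1 is even; that vertex is in supp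
      have hsuppvert : ∀ i, i ≤ n → Even i → q.getVert i ∈ supp G := by
        intro i hi hie
        refine ⟨xv, hxnull, ?_⟩
        have := hGood.nonzero hxu (i/2) (by omega)
        rwa [show 2*(i/2) = i by rcases hie with ⟨l,hl⟩; omega] at this
      rcases Nat.even_or_odd (n - j) with hpe | hpo
      · have hmem := hsuppvert (n-j) (by omega) hpe
        rw [Sym2.eq_iff] at hje
        rcases hje with ⟨e1, _⟩ | ⟨_, e2⟩
        · exact ha (e1 ▸ hmem)
        · exact hb (e2 ▸ hmem)
      · have hp1e : Even (n - j - 1) := by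
          rcases hpo with ⟨l, hl⟩; exact ⟨l, by omega⟩
        have hmem := hsuppvert (n-j-1) (by omega) hp1e
        rw [Sym2.eq_iff] at hje
        rcases hje with ⟨_, e2⟩ | ⟨e1, _⟩
        · exact hb (e2 ▸ hmem)
        · exact ha (e1 ▸ hmem)
    rw [hadj_iff a b]
    constructor
    · intro h; exact Or.inl ⟨h, hnp⟩
    · rintro (⟨h, _⟩ | ⟨_, h⟩)
      · exact h
      · exact absurd h hnp

end Expose
set_option maxHeartbeats 1000000 in
/-- every vertex of the N-part is matched by `M` to another vertex of
the N-part; in particular the subgraph induced by the N-part has a perfect matching. -/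
theorem stmt11 (G : SimpleGraph V) (hb : IsBipartite G) (hc : C4kFree G)
    (M : G.Subgraph) (hM : IsMaximumMatching G M) :
    (∀ v ∈ npart G, ∃ w : V, w ∈ npart G ∧ M.Adj v w) ∧
      ∃ M' : (G.induce (npart G)).Subgraph, M'.IsPerfectMatching := by
  classical
  have hpart1 : ∀ v ∈ npart G, ∃ w : V, w ∈ npart G ∧ M.Adj v w := by
    intro v hvnp
    have hvsupp : v ∉ supp G := fun h => hvnp (Set.mem_union_left _ h)
    have hvcore : v ∉ core G := fun h => hvnp (Set.mem_union_right _ h)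
    have hvsat : v ∈ M.verts := by
      by_contra h
      exact hvsupp (mem_supp_of_unsaturated G hb hc hM h)
    obtain ⟨w, hw, hwu⟩ := hM.1 hvsat
    have hwsupp : w ∉ supp G := by
      intro h
      exact hvcore ⟨w, h, M.adj_sub hw⟩
    have hwcore : w ∉ core G := by
      intro hwc
      obtain ⟨uu, huu, hadj⟩ := hwc
      obtain ⟨M', hM'max, huu_un, hpres⟩ := expose_supp_vertex G hb hc hM huu
      have hM'vw : M'.Adj v w := (hpres v w hvsupp hwsupp).1 hw
      have huv : uu ≠ v := fun h => hvsupp (h ▸ huu)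
      have huw : uu ≠ w := fun h => hwsupp (h ▸ huu)
      have hwv : w ≠ v := (M.adj_sub hw).ne'
      set p : G.Walk uu v :=
        Walk.cons hadj.symm (Walk.cons (M'.adj_sub hM'vw).symm Walk.nil) with hp
      have hplen : p.length = 2 := rfl
      have hg0 : p.getVert 0 = uu := rfl
      have hg1 : p.getVert 1 = w := rfl
      have hg2 : p.getVert 2 = v := rfl
      have hppath : p.IsPath := by
        rw [Walk.isPath_def, hp]
        simp [huw, huv, hwv]
      have halt : MAltWalk G M' p := by
        intro i hi
        rw [hplen] at hi
        match i, hi with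
        | 0, _ =>
          rw [hg0, hg1]
          constructor
          · intro hcon
            exact absurd (M'.edge_vert hcon) huu_un
          · intro hcon
            exact absurd hcon (by decide)
        | 1, _ =>
          rw [hg1, hg2]
          constructor
          · intro _; exact ⟨0, by omega⟩
          · intro _; exact hM'vw.symm
      obtain ⟨M'', hmatch'', hadj'', hbvert'', hcard''⟩ :=
        flip_matching G M' hM'max.1 p hppath huu_un halt
          (fun hodd => by rw [hplen] at hodd; exact absurd hodd (by decide))
      have hveq : M''.edgeSet.ncard = M'.edgeSet.ncard := by
        rw [hplen] at hcard''
        omega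
      have hM''max : IsMaximumMatching G M'' := by
        refine ⟨hmatch'', ?_⟩
        intro K hK
        rw [hveq]
        exact hM'max.2 K hK
      have hvun : v ∉ M''.verts := hbvert'' (by rw [hplen]; exact ⟨1, by omega⟩)
      exact hvsupp (mem_supp_of_unsaturated G hb hc hM''max hvun)
    refine ⟨w, ?_, hw⟩
    intro hmem
    rcases hmem with h | h
    · exact hwsupp h
    · exact hwcore h
  refine ⟨hpart1, ?_⟩
  have hadj_sub : ∀ {a b : ↥(npart G)}, M.Adj a.1 b.1 → (G.induce (npart G)).Adj a b := by
    intro a b h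
    have := M.adj_sub h
    simp only [SimpleGraph.induce, SimpleGraph.comap_adj, Function.Embedding.coe_subtype]
    exact this
  refine ⟨{ verts := Set.univ
            Adj := fun a b => M.Adj a.1 b.1
            adj_sub := fun h => hadj_sub h
            edge_vert := fun _ => Set.mem_univ _
            symm := ⟨fun a b h => h.symm⟩ }, ?_, fun a => Set.mem_univ _⟩
  intro a _
  obtain ⟨w, hwnp, hwadj⟩ := hpart1 a.1 a.2
  refine ⟨⟨w, hwnp⟩, hwadj, ?_⟩
  intro y hy
  obtain ⟨w', hw', hwu'⟩ := hM.1 (M.edge_vert hwadj)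
  have e1 : y.1 = w' := hwu' _ hy
  have e2 : w = w' := hwu' _ hwadj
  exact Subtype.ext (e1.trans e2.symm)

end C4kPaper
end

section
/- If G is a C_{4k}-free bipartite graph, then the nullity of G equals |V(G)| − 2ν(G), where ν(G) is the matching number of G. -/
open scoped Classical

namespace C4kPaper

open SimpleGraph

variable {V : Type*} [Fintype V] [DecidableEq V]

section Aux
open Matrix


lemma rank_submatrix_le'' {m n m' n' : Type*} [Fintype m] [Fintype n] [Fintype m'] [Fintype n']
    [DecidableEq m] [DecidableEq n]
    (A : Matrix m n ℝ) (f : m' → m) (g : n' → n) : (A.submatrix f g).rank ≤ A.rank := by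
  have h1 : A.submatrix f g =
      (Matrix.of fun i r => if f i = r then (1:ℝ) else 0) * A *
        (Matrix.of fun c j => if g j = c then (1:ℝ) else 0) := by
    ext i j
    simp [Matrix.mul_apply, ite_mul, mul_ite, Finset.sum_ite_eq]
  rw [h1]
  exact le_trans (Matrix.rank_mul_le_left _ _) (Matrix.rank_mul_le_right _ _)

noncomputable def biadj (G : SimpleGraph V) (S : Set V) : Matrix S ↥(Sᶜ) ℝ :=
  (G.adjMatrix ℝ).submatrix (Subtype.val) (Subtype.val)

lemma sum_split (f : V → ℝ) (S : Set V) :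
    ∑ v : V, f v = (∑ a : S, f ↑a) + ∑ b : ↥(Sᶜ), f ↑b := by
  rw [← Equiv.sum_comp (Equiv.Set.sumCompl S) f, Fintype.sum_sum_type]
  simp

lemma adj_zero_of_same_side {G : SimpleGraph V} {S : Set V}
    (hS : ∀ ⦃u v⦄, G.Adj u v → (u ∈ S ↔ v ∉ S)) {u v : V}
    (h : (u ∈ S ↔ v ∈ S)) : (G.adjMatrix ℝ) u v = 0 := by
  rw [SimpleGraph.adjMatrix_apply, if_neg]
  intro hadj
  have := hS hadj
  tauto

lemma adjMatrix_symm (G : SimpleGraph V) (u v : V) :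
    (G.adjMatrix ℝ) u v = (G.adjMatrix ℝ) v u := by
  simp [SimpleGraph.adjMatrix_apply, SimpleGraph.adj_comm]

lemma keyS {G : SimpleGraph V} {S : Set V}
    (hS : ∀ ⦃u v⦄, G.Adj u v → (u ∈ S ↔ v ∉ S)) (x : V → ℝ) (a : S) :
    (biadj G S).mulVec (fun b : ↥(Sᶜ) => x ↑b) a = (G.adjMatrix ℝ).mulVec x ↑a := by
  show ∑ b : ↥(Sᶜ), (G.adjMatrix ℝ) ↑a ↑b * x ↑b = ∑ v : V, (G.adjMatrix ℝ) ↑a v * x v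
  rw [sum_split (fun v => (G.adjMatrix ℝ) ↑a v * x v) S,
    Finset.sum_eq_zero (ι := ↥S) (fun a' _ => by
      rw [adj_zero_of_same_side hS (by simp [a.2, a'.2]), zero_mul]), zero_add]

lemma keyC {G : SimpleGraph V} {S : Set V}
    (hS : ∀ ⦃u v⦄, G.Adj u v → (u ∈ S ↔ v ∉ S)) (x : V → ℝ) (b : ↥(Sᶜ)) :
    (biadj G S)ᵀ.mulVec (fun a : S => x ↑a) b = (G.adjMatrix ℝ).mulVec x ↑b := by
  show ∑ a : S, (G.adjMatrix ℝ) ↑a ↑b * x ↑a = ∑ v : V, (G.adjMatrix ℝ) ↑b v * x v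
  rw [sum_split (fun v => (G.adjMatrix ℝ) ↑b v * x v) S]
  rw [Finset.sum_eq_zero (ι := ↥(Sᶜ)) (fun b' _ => by
    rw [adj_zero_of_same_side hS (by
      constructor
      · intro h; exact absurd h b.2
      · intro h; exact absurd h b'.2), zero_mul]), add_zero]
  exact Finset.sum_congr rfl fun a _ => by rw [adjMatrix_symm]

def prodSubEquiv {R M N : Type*} [Semiring R] [AddCommMonoid M] [AddCommMonoid N]
    [Module R M] [Module R N] (p : Submodule R M) (q : Submodule R N) :
    (p.prod q) ≃ₗ[R] p × q where
  toFun x := (⟨x.1.1, x.2.1⟩, ⟨x.1.2, x.2.2⟩)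
  invFun y := ⟨(y.1.1, y.2.1), ⟨y.1.2, y.2.2⟩⟩
  left_inv _ := rfl
  right_inv _ := rfl
  map_add' _ _ := rfl
  map_smul' _ _ := rfl

lemma nullity_split {G : SimpleGraph V} {S : Set V}
    (hS : ∀ ⦃u v⦄, G.Adj u v → (u ∈ S ↔ v ∉ S)) :
    Module.finrank ℝ (LinearMap.ker (G.adjMatrix ℝ).mulVecLin)
      = Module.finrank ℝ (LinearMap.ker (biadj G S)ᵀ.mulVecLin)
        + Module.finrank ℝ (LinearMap.ker (biadj G S).mulVecLin) := by
  set B := biadj G S with hB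
  let E : (V → ℝ) ≃ₗ[ℝ] (↥S → ℝ) × (↥(Sᶜ) → ℝ) :=
    (LinearEquiv.funCongrLeft ℝ ℝ (Equiv.Set.sumCompl S)).trans
      (LinearEquiv.sumArrowLequivProdArrow _ _ ℝ ℝ)
  let F : ((↥S → ℝ) × (↥(Sᶜ) → ℝ)) →ₗ[ℝ] ((↥(Sᶜ) → ℝ) × (↥S → ℝ)) :=
    LinearMap.prodMap Bᵀ.mulVecLin B.mulVecLin
  have hE : ∀ x : V → ℝ, E x = (fun a : S => x ↑a, fun b : ↥(Sᶜ) => x ↑b) := by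
    intro x
    refine Prod.ext (funext fun a => ?_) (funext fun b => ?_) <;>
      simp [E, LinearEquiv.funCongrLeft]
  have hFE : ∀ x : V → ℝ,
      F (E x) = (Bᵀ.mulVec (fun a : S => x ↑a), B.mulVec (fun b : ↥(Sᶜ) => x ↑b)) := by
    intro x
    rw [hE]
    rfl
  have hker : LinearMap.ker (G.adjMatrix ℝ).mulVecLin
      = LinearMap.ker (F.comp E.toLinearMap) := by
    ext x
    simp only [LinearMap.mem_ker, LinearMap.comp_apply, LinearEquiv.coe_coe,
      Matrix.mulVecLin_apply, hFE, Prod.mk_eq_zero]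
    constructor
    · intro h
      refine ⟨funext fun b => ?_, funext fun a => ?_⟩
      · rw [keyC hS x b, h]; rfl
      · rw [keyS hS x a, h]; rfl
    · rintro ⟨h1, h2⟩
      funext v
      by_cases hv : v ∈ S
      · have := congrFun h2 ⟨v, hv⟩
        rw [keyS hS x ⟨v, hv⟩] at this
        exact this
      · have := congrFun h1 ⟨v, hv⟩
        rw [keyC hS x ⟨v, hv⟩] at this
        exact this
  rw [hker, LinearMap.ker_comp]
  rw [(LinearEquiv.ofSubmodule' E _).finrank_eq]
  rw [LinearMap.ker_prodMap]
  rw [(prodSubEquiv _ _).finrank_eq, Module.finrank_prod]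


lemma matchNum_bddAbove (G : SimpleGraph V) :
    BddAbove {n | ∃ M : G.Subgraph, M.IsMatching ∧ M.edgeSet.ncard = n} := by
  refine ⟨(Set.univ : Set (Sym2 V)).ncard, ?_⟩
  rintro n ⟨M, _, rfl⟩
  exact Set.ncard_le_ncard (Set.subset_univ _) Set.finite_univ

lemma exists_max_matching (G : SimpleGraph V) :
    ∃ M : G.Subgraph, M.IsMatching ∧ M.edgeSet.ncard = matchNum G := by
  have h0 : 0 ∈ {n | ∃ M : G.Subgraph, M.IsMatching ∧ M.edgeSet.ncard = n} :=
    ⟨⊥, fun v hv => by simp at hv, by simp⟩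
  exact Nat.sSup_mem ⟨0, h0⟩ (matchNum_bddAbove G)

lemma le_matchNum {G : SimpleGraph V} (M : G.Subgraph) (hM : M.IsMatching) :
    M.edgeSet.ncard ≤ matchNum G :=
  le_csSup (matchNum_bddAbove G) ⟨M, hM, rfl⟩

noncomputable def pr {G : SimpleGraph V} (M : G.Subgraph) (hM : M.IsMatching) (v : V) : V :=
  if h : v ∈ M.verts then (hM h).choose else v

lemma pr_adj {G : SimpleGraph V} {M : G.Subgraph} (hM : M.IsMatching) {v : V}
    (hv : v ∈ M.verts) : M.Adj v (pr M hM v) := by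
  rw [pr, dif_pos hv]; exact (hM hv).choose_spec.1

lemma pr_eq {G : SimpleGraph V} {M : G.Subgraph} (hM : M.IsMatching) {v w : V}
    (h : M.Adj v w) : pr M hM v = w := by
  have hv : v ∈ M.verts := M.edge_vert h
  rw [pr, dif_pos hv]
  exact ((hM hv).choose_spec.2 w h).symm

lemma pr_invol {G : SimpleGraph V} {M : G.Subgraph} (hM : M.IsMatching) {v : V}
    (hv : v ∈ M.verts) : pr M hM (pr M hM v) = v :=
  pr_eq hM (pr_adj hM hv).symm

lemma matching_card {G : SimpleGraph V} {S : Set V}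
    (hS : ∀ ⦃u v⦄, G.Adj u v → (u ∈ S ↔ v ∉ S)) (M : G.Subgraph) (hM : M.IsMatching) :
    M.edgeSet.ncard = (M.verts ∩ S).ncard := by
  rw [← Nat.card_coe_set_eq, ← Nat.card_coe_set_eq]
  refine (Nat.card_congr (Equiv.ofBijective
    (fun v : ↥(M.verts ∩ S) => (⟨s(v.1, pr M hM v.1),
      Subgraph.mem_edgeSet.mpr (pr_adj hM v.2.1)⟩ : ↥M.edgeSet)) ⟨?_, ?_⟩)).symm
  · rintro ⟨v, hv, hvS⟩ ⟨w, hw, hwS⟩ h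
    simp only [Subtype.mk_eq_mk, Sym2.eq_iff] at h
    rcases h with ⟨h1, _⟩ | ⟨h1, h2⟩
    · exact Subtype.ext h1
    · exfalso
      have hadj : G.Adj w (pr M hM w) := M.adj_sub (pr_adj hM hw)
      exact ((hS hadj).mp hwS) (h1 ▸ hvS)
  · rintro ⟨e, he⟩
    induction e using Sym2.ind with
    | _ u v =>
      have hadj : M.Adj u v := Subgraph.mem_edgeSet.mp he
      by_cases hu : u ∈ S
      · refine ⟨⟨u, M.edge_vert hadj, hu⟩, Subtype.ext ?_⟩
        show s(u, pr M hM u) = s(u, v)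
        rw [pr_eq hM hadj]
      · have hv : v ∈ S := by
          have := hS (M.adj_sub hadj); tauto
        refine ⟨⟨v, M.edge_vert hadj.symm, hv⟩, Subtype.ext ?_⟩
        show s(v, pr M hM v) = s(u, v)
        rw [pr_eq hM hadj.symm]
        exact Sym2.eq_swap

def seqWalk (G : SimpleGraph V) (v : ℕ → V) (a : ℕ) :
    (m : ℕ) → (∀ i < m, G.Adj (v (a+i)) (v (a+i+1))) → G.Walk (v a) (v (a+m))
  | 0, _ => SimpleGraph.Walk.nil
  | (m+1), h => (seqWalk G v a m (fun i hi => h i (Nat.lt_succ_of_lt hi))).append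
      (SimpleGraph.Walk.cons (h m (Nat.lt_succ_self m)) SimpleGraph.Walk.nil)

lemma seqWalk_support (G : SimpleGraph V) (v : ℕ → V) (a : ℕ) :
    ∀ (m : ℕ) (h : ∀ i < m, G.Adj (v (a+i)) (v (a+i+1))),
      (seqWalk G v a m h).support = (List.range (m+1)).map (fun i => v (a+i)) := by
  intro m
  induction m with
  | zero => intro h; simp [seqWalk, List.range_succ]
  | succ m ih =>
    intro h
    rw [seqWalk, Walk.support_append, ih, List.range_succ (n := m+1), List.map_append]
    simp only [Walk.support_cons, Walk.support_nil, List.tail_cons, List.map_cons,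
      List.map_nil]
    congr 2

lemma seqWalk_length (G : SimpleGraph V) (v : ℕ → V) (a : ℕ) :
    ∀ (m : ℕ) (h : ∀ i < m, G.Adj (v (a+i)) (v (a+i+1))),
      (seqWalk G v a m h).length = m := by
  intro m
  induction m with
  | zero => intro h; simp [seqWalk]
  | succ m ih => intro h; rw [seqWalk, Walk.length_append, ih]; simp

lemma seqWalk_edges (G : SimpleGraph V) (v : ℕ → V) (a : ℕ) :
    ∀ (m : ℕ) (h : ∀ i < m, G.Adj (v (a+i)) (v (a+i+1))),
      (seqWalk G v a m h).edges = (List.range m).map (fun i => s(v (a+i), v (a+i+1))) := by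
  intro m
  induction m with
  | zero => intro h; simp [seqWalk]
  | succ m ih =>
    intro h
    rw [seqWalk, Walk.edges_append, ih, List.range_succ (n := m), List.map_append]
    simp

lemma exists_cycle_of_seq (G : SimpleGraph V) {n : ℕ} (hn : 3 ≤ n) (v : ℕ → V)
    (hadj : ∀ i < n, G.Adj (v i) (v (i+1)))
    (hclosed : v n = v 0)
    (hinj : ∀ i < n, ∀ j < n, v i = v j → i = j) :
    ∃ c : G.Walk (v 0) (v 0), c.IsCycle ∧ c.length = n := by
  have h1n : ∀ i < n - 1, G.Adj (v (1+i)) (v (1+i+1)) := fun i hi => by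
    have := hadj (1+i) (by omega)
    convert this using 3 <;> omega
  have he : v (1 + (n-1)) = v 0 := by rw [show 1 + (n-1) = n by omega, hclosed]
  let q : G.Walk (v 1) (v 0) := (seqWalk G v 1 (n-1) h1n).copy rfl he
  have hsup : q.support = (List.range n).map (fun i => v (1+i)) := by
    rw [Walk.support_copy, seqWalk_support, show n - 1 + 1 = n by omega]
  have hedg : q.edges = (List.range (n-1)).map (fun i => s(v (1+i), v (1+i+1))) := by
    rw [Walk.edges_copy, seqWalk_edges]
  have key : ∀ i ≤ n, ∀ j ≤ n, v i = v j → i = j ∨ (i = 0 ∧ j = n) ∨ (i = n ∧ j = 0) := by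
    intro i hi j hj hv
    rcases Nat.lt_or_ge i n with hi' | hi' <;> rcases Nat.lt_or_ge j n with hj' | hj'
    · exact Or.inl (hinj i hi' j hj' hv)
    · have hj'' : j = n := by omega
      subst hj''
      rw [hclosed] at hv
      have := hinj i hi' 0 (by omega) hv
      omega
    · have hi'' : i = n := by omega
      subst hi''
      rw [hclosed] at hv
      have := hinj 0 (by omega) j hj' hv
      omega
    · omega
  have hpath : q.IsPath := by
    rw [Walk.isPath_def, hsup]
    refine List.Nodup.map_on ?_ List.nodup_range
    intro i hi j hj hv
    rw [List.mem_range] at hi hj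
    have := key (1+i) (by omega) (1+j) (by omega) hv
    omega
  have hnotmem : s(v 0, v 1) ∉ q.edges := by
    rw [hedg]
    intro hmem
    rw [List.mem_map] at hmem
    obtain ⟨i, hi, hv⟩ := hmem
    rw [List.mem_range] at hi
    rw [Sym2.eq_iff] at hv
    rcases hv with ⟨h1, h2⟩ | ⟨h1, h2⟩
    · have := key (1+i) (by omega) 0 (by omega) h1
      omega
    · have e2 := key (1+i) (by omega) 1 (by omega) h1
      have e1 := key (1+i+1) (by omega) 0 (by omega) h2
      omega
  refine ⟨Walk.cons (hadj 0 (by omega)) q, ?_, ?_⟩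
  · exact (Walk.cons_isCycle_iff q (hadj 0 (by omega))).mpr ⟨hpath, hnotmem⟩
  · rw [Walk.length_cons, Walk.length_copy, seqWalk_length]
    omega

lemma even_sum_card {m : Multiset ℕ} (h : ∀ l ∈ m, Odd l) :
    Even (m.sum + Multiset.card m) := by
  induction m using Multiset.induction with
  | empty => simp
  | cons a s ih =>
    have ha := h a (Multiset.mem_cons_self a s)
    have hs := ih (fun l hl => h l (Multiset.mem_cons_of_mem hl))
    rw [Multiset.sum_cons, Multiset.card_cons]
    obtain ⟨k, hk⟩ := ha
    obtain ⟨r, hr⟩ := hs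
    exact ⟨k + 1 + r, by omega⟩

lemma sign_eq_one_of_adj {α : Type*} [Fintype α] [DecidableEq α] (G : SimpleGraph V)
    (hc : ∀ (w : V) (c : G.Walk w w), c.IsCycle → ¬ (4 ∣ c.length))
    (x y : α → V) (hx : Function.Injective x) (hy : Function.Injective y)
    (hd : ∀ a b, x a ≠ y b) (hm : ∀ a, G.Adj (y a) (x a))
    (π : Equiv.Perm α) (hπ : ∀ a, G.Adj (x a) (y (π a))) :
    Equiv.Perm.sign π = 1 := by
  have hodd : ∀ l ∈ π.cycleType, Odd l := by
    intro l hl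
    rw [Equiv.Perm.cycleType_def, Multiset.mem_map] at hl
    obtain ⟨c, hcmem, hlc⟩ := hl
    rw [Finset.mem_val] at hcmem
    obtain ⟨hcyc, hcπ⟩ := Equiv.Perm.mem_cycleFactorsFinset_iff.mp hcmem
    set l := c.support.card with hldef
    have hl2 : 2 ≤ l := hcyc.two_le_card_support
    rw [← hlc]
    show Odd l
    by_contra hev
    rw [← Nat.not_even_iff_odd, not_not] at hev
    obtain ⟨a, ha⟩ : c.support.Nonempty := Finset.card_pos.mp (by omega)
    have hsupp : ∀ t : ℕ, (c ^ t) a ∈ c.support :=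
      fun t => Equiv.Perm.pow_apply_mem_support.mpr ha
    have hpowone : c ^ l = 1 := by
      rw [hldef, ← hcyc.orderOf]; exact pow_orderOf_eq_one c
    have horb : ∀ s < l, ∀ t < l, (c ^ s) a = (c ^ t) a → s = t := by
      have haux : ∀ s t : ℕ, s < t → t < l → (c ^ s) a = (c ^ t) a → False := by
        intro s t hst htl hval
        have hfix : (c ^ (t - s)) ((c ^ s) a) = (c ^ s) a := by
          rw [← Equiv.Perm.mul_apply, ← pow_add, show t - s + s = t by omega, ← hval]
        have h1 : c ^ (t - s) = 1 :=
          hcyc.pow_eq_one_iff.mpr ⟨(c ^ s) a, Equiv.Perm.mem_support.mp (hsupp s), hfix⟩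
        have h2 := orderOf_dvd_of_pow_eq_one h1
        rw [hcyc.orderOf] at h2
        have := Nat.le_of_dvd (by omega) h2
        omega
      intro s hs t ht hval
      rcases lt_trichotomy s t with h | h | h
      · exact absurd hval (fun hv => haux s t h ht hv)
      · exact h
      · exact absurd hval.symm (fun hv => haux t s h hs hv)
    have hπc : ∀ t : ℕ, π ((c ^ t) a) = (c ^ (t + 1)) a := by
      intro t
      rw [← hcπ _ (hsupp t), pow_succ', Equiv.Perm.mul_apply]
    -- the vertex sequence
    set w : ℕ → V := fun i =>
      if Even i then x ((c ^ (i / 2)) a) else y ((c ^ ((i + 1) / 2)) a) with hw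
    have hwe : ∀ t : ℕ, w (2 * t) = x ((c ^ t) a) := by
      intro t
      have h2 : (2 * t) / 2 = t := by omega
      simp only [hw, if_pos (even_two_mul t), h2]
    have hwo : ∀ t : ℕ, w (2 * t + 1) = y ((c ^ (t + 1)) a) := by
      intro t
      have hne : ¬ Even (2 * t + 1) := by simp [Nat.even_add_one]
      have h2 : (2 * t + 1 + 1) / 2 = t + 1 := by omega
      simp only [hw, if_neg hne, h2]
    set n := 2 * l with hn
    have hadj : ∀ i < n, G.Adj (w i) (w (i + 1)) := by
      intro i hi
      rcases Nat.even_or_odd i with he | ho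
      · obtain ⟨t, ht⟩ := he
        rw [show i = 2 * t by omega, hwe t, hwo t, ← hπc t]
        exact hπ _
      · obtain ⟨t, ht⟩ := ho
        rw [show i = 2 * t + 1 by omega, hwo t, show 2 * t + 1 + 1 = 2 * (t + 1) by omega,
          hwe (t + 1)]
        exact hm _
    have hclosed : w n = w 0 := by
      rw [show n = 2 * l by omega, hwe l, show (0:ℕ) = 2 * 0 by omega, hwe 0,
        hpowone]
      rfl
    have hinj : ∀ i < n, ∀ j < n, w i = w j → i = j := by
      intro i hi j hj hval
      rcases Nat.even_or_odd i with hei | hoi <;> rcases Nat.even_or_odd j with hej | hoj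
      · obtain ⟨s, hs⟩ := hei
        obtain ⟨t, ht⟩ := hej
        rw [show i = 2 * s by omega, hwe s, show j = 2 * t by omega, hwe t] at hval
        have := horb s (by omega) t (by omega) (hx hval)
        omega
      · obtain ⟨s, hs⟩ := hei
        obtain ⟨t, ht⟩ := hoj
        rw [show i = 2 * s by omega, hwe s, show j = 2 * t + 1 by omega, hwo t] at hval
        exact absurd hval (hd _ _)
      · obtain ⟨s, hs⟩ := hoi
        obtain ⟨t, ht⟩ := hej
        rw [show i = 2 * s + 1 by omega, hwo s, show j = 2 * t by omega, hwe t] at hval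
        exact absurd hval.symm (hd _ _)
      · obtain ⟨s, hs⟩ := hoi
        obtain ⟨t, ht⟩ := hoj
        rw [show i = 2 * s + 1 by omega, hwo s, show j = 2 * t + 1 by omega, hwo t] at hval
        have hval' := hy hval
        -- exponents s+1, t+1 ∈ [1, l]
        have hs1 : s + 1 ≤ l := by omega
        have ht1 : t + 1 ≤ l := by omega
        rcases eq_or_lt_of_le hs1 with hsl | hsl <;> rcases eq_or_lt_of_le ht1 with htl | htl
        · omega
        · rw [hsl, hpowone] at hval'
          have := horb 0 (by omega) (t+1) htl hval'
          omega
        · rw [htl, hpowone] at hval'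
          have := horb (s+1) hsl 0 (by omega) hval'
          omega
        · have := horb (s+1) hsl (t+1) htl hval'
          omega
    obtain ⟨cyc, hcyccyc, hcyclen⟩ :=
      exists_cycle_of_seq G (show 3 ≤ n by omega) w hadj hclosed hinj
    refine hc (w 0) cyc hcyccyc ?_
    rw [hcyclen, hn]
    obtain ⟨k, hk⟩ := hev
    omega
  rw [Equiv.Perm.sign_of_cycleType]
  exact Even.neg_one_pow (even_sum_card hodd)

lemma det_ge_one_of_adj {α : Type*} [Fintype α] [DecidableEq α] (G : SimpleGraph V)
    (hc : ∀ (w : V) (c : G.Walk w w), c.IsCycle → ¬ (4 ∣ c.length))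
    (x y : α → V) (hx : Function.Injective x) (hy : Function.Injective y)
    (hd : ∀ a b, x a ≠ y b) (hm : ∀ a, G.Adj (y a) (x a)) :
    (1:ℝ) ≤ (Matrix.of fun i j : α => if G.Adj (x i) (y j) then (1:ℝ) else 0).det := by
  set C := Matrix.of fun i j : α => if G.Adj (x i) (y j) then (1:ℝ) else 0 with hC
  rw [Matrix.det_apply]
  have hterm1 : Equiv.Perm.sign (1 : Equiv.Perm α) • ∏ i : α, C ((1 : Equiv.Perm α) i) i
      = (1:ℝ) := by
    rw [Equiv.Perm.sign_one, one_smul]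
    refine Finset.prod_eq_one (fun i _ => ?_)
    show (if G.Adj (x i) (y i) then (1:ℝ) else 0) = 1
    rw [if_pos (hm i).symm]
  have hnn : ∀ σ : Equiv.Perm α,
      0 ≤ Equiv.Perm.sign σ • ∏ i : α, C (σ i) i := by
    intro σ
    by_cases hall : ∀ i, G.Adj (x (σ i)) (y i)
    · have hsgn : Equiv.Perm.sign σ = 1 := by
        rw [← Equiv.Perm.sign_inv]
        refine sign_eq_one_of_adj G hc x y hx hy hd hm σ⁻¹ (fun a => ?_)
        have := hall (σ⁻¹ a)
        rwa [← Equiv.Perm.mul_apply, mul_inv_cancel, Equiv.Perm.one_apply] at this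
      rw [hsgn, one_smul]
      exact Finset.prod_nonneg (fun i _ => by
        show (0:ℝ) ≤ if G.Adj (x (σ i)) (y i) then (1:ℝ) else 0
        positivity)
    · push_neg at hall
      obtain ⟨i, hi⟩ := hall
      have : (∏ i : α, C (σ i) i) = 0 :=
        Finset.prod_eq_zero (Finset.mem_univ i) (by
          show (if G.Adj (x (σ i)) (y i) then (1:ℝ) else 0) = 0
          rw [if_neg hi])
      rw [this, smul_zero]
  calc (1:ℝ) = Equiv.Perm.sign (1 : Equiv.Perm α) • ∏ i : α, C ((1 : Equiv.Perm α) i) i :=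
        hterm1.symm
    _ ≤ ∑ σ : Equiv.Perm α, Equiv.Perm.sign σ • ∏ i : α, C (σ i) i :=
        Finset.single_le_sum (fun σ _ => hnn σ) (Finset.mem_univ 1)

lemma matchNum_le_rank {G : SimpleGraph V} {S : Set V}
    (hS : ∀ ⦃u v⦄, G.Adj u v → (u ∈ S ↔ v ∉ S))
    (hc : ∀ (w : V) (c : G.Walk w w), c.IsCycle → ¬ (4 ∣ c.length)) :
    matchNum G ≤ (biadj G S).rank := by
  obtain ⟨M, hM, hcard⟩ := exists_max_matching G
  set α := ↥(M.verts ∩ S) with hα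
  let x : α → V := fun a => ↑a
  let y : α → V := fun a => pr M hM ↑a
  have hMadj : ∀ a : α, M.Adj (x a) (y a) := fun a => pr_adj hM a.2.1
  have hxS : ∀ a : α, x a ∈ S := fun a => a.2.2
  have hyS : ∀ a : α, y a ∉ S := fun a => (hS (M.adj_sub (hMadj a))).mp a.2.2
  have hx : Function.Injective x := fun a b h => Subtype.ext h
  have hy : Function.Injective y := by
    intro a b h
    have := congrArg (pr M hM) h
    rw [pr_invol hM a.2.1, pr_invol hM b.2.1] at this
    exact Subtype.ext this
  have hd : ∀ a b : α, x a ≠ y b := fun a b h => hyS b (h ▸ hxS a)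
  have hm : ∀ a : α, G.Adj (y a) (x a) := fun a => (M.adj_sub (hMadj a)).symm
  have hdet := det_ge_one_of_adj G hc x y hx hy hd hm
  set C := Matrix.of fun i j : α => if G.Adj (x i) (y j) then (1:ℝ) else 0 with hC
  have hrankC : C.rank = Fintype.card α := by
    refine Matrix.rank_of_isUnit _ ((Matrix.isUnit_iff_isUnit_det _).mpr
      (isUnit_iff_ne_zero.mpr (by linarith)))
  have hsub : C = (biadj G S).submatrix (fun a : α => (⟨x a, hxS a⟩ : S))
      (fun a : α => (⟨y a, hyS a⟩ : ↥(Sᶜ))) := by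
    ext i j
    show (if G.Adj (x i) (y j) then (1:ℝ) else 0) = (G.adjMatrix ℝ) (x i) (y j)
    rw [SimpleGraph.adjMatrix_apply]
  have h1 : matchNum G = Fintype.card α := by
    rw [← hcard, matching_card hS M hM, ← Nat.card_coe_set_eq, Nat.card_eq_fintype_card]
  rw [h1, ← hrankC, hsub]
  exact rank_submatrix_le'' _ _ _

lemma rank_le_matchNum {G : SimpleGraph V} {S : Set V}
    (hS : ∀ ⦃u v⦄, G.Adj u v → (u ∈ S ↔ v ∉ S)) :
    (biadj G S).rank ≤ matchNum G := by
  classical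
  set B := biadj G S with hBdef
  set r := B.rank with hrdef
  -- choose r independent columns
  obtain ⟨t, ht_sub, ht_span, ht_indep⟩ := exists_linearIndependent ℝ (Set.range Bᵀ)
  have htf : t.Finite := (Set.finite_range Bᵀ).subset ht_sub
  haveI : Fintype t := htf.fintype
  have hcardt : t.toFinset.card = r := by
    have h1 := finrank_span_set_eq_card (s := t) ht_indep
    rw [ht_span] at h1
    rw [hrdef, Matrix.rank_eq_finrank_span_cols]
    exact h1.symm
  choose g hg using (fun w : t => ht_sub w.2)
  have hginj : Function.Injective g := by
    intro a b h
    apply Subtype.ext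
    rw [← hg a, ← hg b, h]
  -- B1 : columns restricted
  set B1 : Matrix ↥S t ℝ := Matrix.of (fun a (w : t) => (w : ↥S → ℝ) a) with hB1def
  have hB1sub : B1 = B.submatrix id g := by
    ext a w
    show (w : ↥S → ℝ) a = B (id a) (g w)
    rw [← hg w]
    rfl
  have hB1colrange : Set.range B1ᵀ = t := by
    have : B1ᵀ = fun w : t => (w : ↥S → ℝ) := rfl
    rw [this, Subtype.range_coe]
  have hrank1 : B1.rank = r := by
    rw [Matrix.rank_eq_finrank_span_cols]
    change Module.finrank ℝ (Submodule.span ℝ (Set.range B1ᵀ)) = r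
    rw [hB1colrange, ht_span, hrdef, Matrix.rank_eq_finrank_span_cols]
    rfl
  -- choose r independent rows of B1
  have hrank1t : Module.finrank ℝ (Submodule.span ℝ (Set.range B1)) = r := by
    have := Matrix.rank_eq_finrank_span_cols B1ᵀ
    rw [Matrix.rank_transpose] at this
    rw [← hrank1, this]
    rfl
  obtain ⟨u, hu_sub, hu_span, hu_indep⟩ := exists_linearIndependent ℝ (Set.range B1)
  have huf : u.Finite := (Set.finite_range B1).subset hu_sub
  haveI : Fintype u := huf.fintype
  have hcardu : u.toFinset.card = r := by
    have h1 := finrank_span_set_eq_card (s := u) hu_indep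
    rw [hu_span, hrank1t] at h1
    exact h1.symm
  choose f hf using (fun w : u => hu_sub w.2)
  have hfinj : Function.Injective f := by
    intro a b h
    apply Subtype.ext
    rw [← hf a, ← hf b, h]
  -- the square matrix
  have hcards : Fintype.card u = Fintype.card t := by
    rw [← Set.toFinset_card, ← Set.toFinset_card, hcardt, hcardu]
  let e : ↥u ≃ ↥t := Fintype.equivOfCardEq hcards
  set D : Matrix t t ℝ := Matrix.of (fun w w' : t => B1 (f (e.symm w)) w') with hDdef
  have hrows : (fun w : t => D w) = (fun w : t => ((e.symm w : u) : t → ℝ)) := by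
    funext w
    show B1 (f (e.symm w)) = _
    rw [hf (e.symm w)]
  have hDindep : LinearIndependent ℝ (fun w : t => D w) := by
    rw [hrows]
    exact hu_indep.comp (fun w : t => e.symm w) (fun a b h => by
      simpa using congrArg e h)
  have hDunit : IsUnit D := Matrix.linearIndependent_rows_iff_isUnit.mp hDindep
  have hDdet : D.det ≠ 0 := ((Matrix.isUnit_iff_isUnit_det D).mp hDunit).ne_zero
  -- extract a permutation with nonzero entries
  have hexσ : ∃ σ : Equiv.Perm t, ∀ w, D (σ w) w ≠ 0 := by
    by_contra h
    push_neg at h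
    refine hDdet ?_
    rw [Matrix.det_apply]
    refine Finset.sum_eq_zero (fun σ _ => ?_)
    obtain ⟨w, hw⟩ := h σ
    rw [Finset.prod_eq_zero (f := fun i => D (σ i) i) (Finset.mem_univ w) hw, smul_zero]
  obtain ⟨σ, hσ⟩ := hexσ
  -- adjacency structure
  set xv : t → V := fun w => ↑(f (e.symm (σ w))) with hxv
  set yv : t → V := fun w => ↑(g w) with hyv
  have hxvS : ∀ w, xv w ∈ S := fun w => (f (e.symm (σ w))).2
  have hyvS : ∀ w, yv w ∈ Sᶜ := fun w => (g w).2
  have hadj : ∀ w, G.Adj (xv w) (yv w) := by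
    intro w
    have h0 := hσ w
    rw [hDdef] at h0
    have h1 : B1 (f (e.symm (σ w))) w ≠ 0 := h0
    rw [hB1sub] at h1
    have h2 : (G.adjMatrix ℝ) (xv w) (yv w) ≠ 0 := h1
    rw [SimpleGraph.adjMatrix_apply] at h2
    by_contra hna
    rw [if_neg hna] at h2
    exact h2 rfl
  have hxvinj : Function.Injective xv :=
    Subtype.val_injective.comp (hfinj.comp (e.symm.injective.comp σ.injective))
  have hyvinj : Function.Injective yv := Subtype.val_injective.comp hginj
  -- build the matching
  have hdisj : Disjoint (Set.range xv) (Set.range yv) := by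
    rw [Set.disjoint_left]
    rintro a ⟨w, rfl⟩ ⟨w', hw'⟩
    exact (hyvS w') (hw' ▸ hxvS w)
  let eq2 : ↥(Set.range xv) ≃ ↥(Set.range yv) :=
    (Equiv.ofInjective xv hxvinj).symm.trans (Equiv.ofInjective yv hyvinj)
  have hadj2 : ∀ v : ↥(Set.range xv), G.Adj v (eq2 v) := by
    rintro v
    have h1 : xv ((Equiv.ofInjective xv hxvinj).symm v) = ↑v :=
      Equiv.apply_ofInjective_symm hxvinj v
    have h2 : (eq2 v : V) = yv ((Equiv.ofInjective xv hxvinj).symm v) := rfl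
    rw [h2, ← h1]
    exact hadj _
  obtain ⟨M', hM'verts, hM'⟩ :=
    SimpleGraph.Subgraph.IsMatching.exists_of_disjoint_sets_of_equiv hdisj eq2 hadj2
  have hM'card : M'.edgeSet.ncard = r := by
    rw [matching_card hS M' hM']
    have hint : M'.verts ∩ S = Set.range xv := by
      rw [hM'verts]
      ext a
      constructor
      · rintro ⟨ha1 | ha1, ha2⟩
        · exact ha1
        · obtain ⟨w, rfl⟩ := ha1
          exact absurd ha2 (hyvS w)
      · intro ha
        exact ⟨Or.inl ha, by obtain ⟨w, rfl⟩ := ha; exact hxvS w⟩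
    rw [hint, ← Nat.card_coe_set_eq, Nat.card_range_of_injective hxvinj,
      Nat.card_eq_fintype_card, ← Set.toFinset_card, hcardt]
  rw [← hM'card]
  exact le_matchNum M' hM'

end Aux

/-- the nullity of a `C_{4k}`-free bipartite graph is `|V(G)| - 2ν(G)`. -/
theorem stmt13 (G : SimpleGraph V) (hb : IsBipartite G) (hc : C4kFree G) :
    (nullity G : ℤ) = (Fintype.card V : ℤ) - 2 * matchNum G := by
  obtain ⟨S, hS⟩ := hb
  have hrank : (biadj G S).rank = matchNum G :=
    le_antisymm (rank_le_matchNum hS) (matchNum_le_rank hS hc)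
  have h1 : nullity G = Module.finrank ℝ (LinearMap.ker (Matrix.mulVecLin (Matrix.transpose (biadj G S))))
      + Module.finrank ℝ (LinearMap.ker (Matrix.mulVecLin (biadj G S))) := by
    unfold nullity nullModule
    exact nullity_split hS
  have h2 := LinearMap.finrank_range_add_finrank_ker (Matrix.mulVecLin (Matrix.transpose (biadj G S)))
  have h3 := LinearMap.finrank_range_add_finrank_ker (Matrix.mulVecLin (biadj G S))
  have hr2 : Module.finrank ℝ (LinearMap.range (Matrix.mulVecLin (Matrix.transpose (biadj G S))))
      = (Matrix.transpose (biadj G S)).rank := rfl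
  have hr3 : Module.finrank ℝ (LinearMap.range (Matrix.mulVecLin (biadj G S)))
      = (biadj G S).rank := rfl
  rw [hr2, Module.finrank_pi, Matrix.rank_transpose] at h2
  rw [hr3, Module.finrank_pi] at h3
  have h5 : Fintype.card ↥S + Fintype.card ↥(Sᶜ) = Fintype.card V := by
    rw [← Fintype.card_sum]
    exact Fintype.card_congr (Equiv.Set.sumCompl S)
  omega

end C4kPaper
end
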